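/- arXiv:2010.12113 — 11 statements merged into one kernel-verified Lean document; each statement's English description precedes it below -/
import Mathlib

section
/- Let n ≥ 1 and let S = {(x, z) ∈ [0,1]^n × [0,1]^n : z_j = ∏_{k=1}^{j} x_k for all j = 1, …, n}. Then the convex hull of S equals the polytope M = {(x, z) ∈ [0,1]^n × [0,1]^n : z_1 = x_1, and for every j = 2, …, n: z_j ≥ 0, z_j ≥ z_{j-1} + x_j − 1, z_j ≤ z_{j-1}, z_j ≤ x_j}; in other words, the convex hull of S is exactly the set cut out by z_1 = x_1, the box constraints, and the McCormick relaxations of the bilinear equations z_j = z_{j-1}·x_j over [0,1]^2 for j = 2, …, n. -/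
/-!
Given `(x, z)` in the McCormick polytope, draw `u` uniformly from `(0, 1]` and round:
`z_j ↦ [u ≤ z_j]`, and `x_j ↦ 0` exactly when `u ∈ (z_j, z_j + 1 - x_j]`. Each coordinate keeps
its mean, so `(x, z)` is the average of the rounded points. These are `0/1` points of `S`: the
constraints force `z` to be nonincreasing, and if `z_j < u` then at the first index `k` with
`z_k < u` we have `u ≤ z_{k-1} ≤ z_k + 1 - x_k` by the lower McCormick inequality, so `x_k`
rounds to `0`. The reverse inclusion is the validity of the McCormick inequalities on `[0,1]²`.
-/

open MeasureTheory Set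

section RunningProduct

variable {M : Type*} [CommMonoid M] {n : ℕ}

lemma Fin.Iic_mk_zero (hn : 0 < n) : Finset.Iic (⟨0, hn⟩ : Fin n) = {⟨0, hn⟩} := by
  ext k
  simp only [Finset.mem_Iic, Finset.mem_singleton, Fin.le_def, Fin.ext_iff]
  omega

lemma Fin.Iic_eq_insert_of_val_eq_succ {i j : Fin n} (hij : (j : ℕ) = i + 1) :
    Finset.Iic j = insert j (Finset.Iic i) := by
  ext k
  simp only [Finset.mem_Iic, Finset.mem_insert, Fin.le_def, Fin.ext_iff]
  omega

lemma Fin.prod_Iic_of_val_eq_succ (y : Fin n → M) {i j : Fin n} (hij : (j : ℕ) = i + 1) :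
    ∏ k ∈ Finset.Iic j, y k = y j * ∏ k ∈ Finset.Iic i, y k := by
  rw [Fin.Iic_eq_insert_of_val_eq_succ hij, Finset.prod_insert]
  simp only [Finset.mem_Iic, Fin.le_def]
  omega

theorem Fin.forall_eq_prod_Iic_iff (hn : 0 < n) {w y : Fin n → M} :
    (∀ j, w j = ∏ k ∈ Finset.Iic j, y k) ↔
      w ⟨0, hn⟩ = y ⟨0, hn⟩ ∧ ∀ i j : Fin n, (j : ℕ) = i + 1 → w j = y j * w i := by
  refine ⟨fun h => ⟨by rw [h, Fin.Iic_mk_zero, Finset.prod_singleton], fun i j hij => ?_⟩, ?_⟩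
  · rw [h, h, Fin.prod_Iic_of_val_eq_succ y hij]
  rintro ⟨h0, hsucc⟩ j
  induction hj : (j : ℕ) generalizing j with
  | zero =>
    obtain rfl : j = ⟨0, hn⟩ := Fin.ext hj
    rw [h0, Fin.Iic_mk_zero, Finset.prod_singleton]
  | succ m ih =>
    have hij : (j : ℕ) = (⟨m, by omega⟩ : Fin n) + 1 := hj
    rw [hsucc _ j hij, ih _ rfl, Fin.prod_Iic_of_val_eq_succ y hij]

end RunningProduct

lemma mcCormick_of_mul {R : Type*} [CommRing R] [LinearOrder R] [IsStrictOrderedRing R]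
    {a b : R} (ha : a ∈ Icc 0 1) (hb : b ∈ Icc 0 1) :
    0 ≤ a * b ∧ a + b - 1 ≤ a * b ∧ a * b ≤ a ∧ a * b ≤ b := by
  obtain ⟨ha0, ha1⟩ := ha
  obtain ⟨hb0, hb1⟩ := hb
  refine ⟨mul_nonneg ha0 hb0, ?_, mul_le_of_le_one_right ha0 hb1, mul_le_of_le_one_left hb0 ha1⟩
  nlinarith [mul_nonneg (sub_nonneg.2 ha1) (sub_nonneg.2 hb1)]

lemma integral_mem_convexHull_of_finite {α E : Type*} [MeasurableSpace α]
    [NormedAddCommGroup E] [NormedSpace ℝ E] [CompleteSpace E] {μ : Measure α}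
    [IsProbabilityMeasure μ] {s : Set E} (hs : s.Finite) {f : α → E} (hf : Integrable f μ)
    (hfs : ∀ᵐ x ∂μ, f x ∈ s) : ∫ x, f x ∂μ ∈ convexHull ℝ s :=
  (convex_convexHull ℝ s).integral_mem (hs.isClosed_convexHull (𝕜 := ℝ))
    (hfs.mono fun _ hx => subset_convexHull ℝ s hx) hf

instance isProbabilityMeasure_volume_restrict_Ioc_zero_one :
    IsProbabilityMeasure (volume.restrict (Ioc (0 : ℝ) 1)) :=
  ⟨by simp⟩

lemma integral_indicator_Ioc_of_subset {a b : ℝ} (ha : 0 ≤ a) (hab : a ≤ b) (hb : b ≤ 1) :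
    ∫ u in Ioc 0 1, (Ioc a b).indicator 1 u = b - a := by
  rw [integral_indicator_one measurableSet_Ioc, measureReal_restrict_apply measurableSet_Ioc,
    Ioc_inter_Ioc, max_eq_left ha, min_eq_left hb, Real.volume_real_Ioc_of_le hab]

lemma indicator_one_mem_zero_one (s : Set ℝ) (u : ℝ) : s.indicator 1 u ∈ ({0, 1} : Set ℝ) := by
  by_cases hu : u ∈ s <;> simp [hu]

lemma one_sub_mem_zero_one {a : ℝ} (ha : a ∈ ({0, 1} : Set ℝ)) : 1 - a ∈ ({0, 1} : Set ℝ) := by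
  rcases ha with rfl | rfl <;> norm_num

lemma indicator_Ioc_zero_eq_one_sub {u c : ℝ} (hu : u ∈ Ioc 0 1) :
    (Ioc 0 c).indicator 1 u = 1 - (Ioc c 1).indicator (1 : ℝ → ℝ) u := by
  obtain ⟨hu0, hu1⟩ := hu
  simp only [indicator_apply, mem_Ioc, Pi.one_apply]
  split_ifs <;> grind

lemma indicator_Ioc_zero_eq_mul {u zi xj zj : ℝ} (hlow : zi + xj - 1 ≤ zj) (hmono : zj ≤ zi) :
    (Ioc 0 zj).indicator 1 u =
      (1 - (Ioc zj (1 - xj + zj)).indicator 1 u) * (Ioc 0 zi).indicator (1 : ℝ → ℝ) u := by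
  simp only [indicator_apply, mem_Ioc, Pi.one_apply]
  split_ifs <;> grind

def runningProductSet (n : ℕ) : Set ((Fin n → ℝ) × (Fin n → ℝ)) :=
  {p | (∀ k, p.1 k ∈ Icc (0 : ℝ) 1) ∧ (∀ k, p.2 k ∈ Icc (0 : ℝ) 1) ∧
    ∀ j, p.2 j = ∏ k ∈ Finset.Iic j, p.1 k}

def mcCormickPolytope (n : ℕ) (hn : 0 < n) : Set ((Fin n → ℝ) × (Fin n → ℝ)) :=
  {p | (∀ k, p.1 k ∈ Icc (0 : ℝ) 1) ∧ (∀ k, p.2 k ∈ Icc (0 : ℝ) 1) ∧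
    p.2 ⟨0, hn⟩ = p.1 ⟨0, hn⟩ ∧
    ∀ i j : Fin n, (j : ℕ) = (i : ℕ) + 1 →
      0 ≤ p.2 j ∧ p.2 i + p.1 j - 1 ≤ p.2 j ∧ p.2 j ≤ p.2 i ∧ p.2 j ≤ p.1 j}

noncomputable def thresholdRound {n : ℕ} (p : (Fin n → ℝ) × (Fin n → ℝ)) (u : ℝ) :
    (Fin n → ℝ) × (Fin n → ℝ) :=
  (fun j => 1 - (Ioc (p.2 j) (1 - p.1 j + p.2 j)).indicator 1 u,
    fun j => (Ioc 0 (p.2 j)).indicator 1 u)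

section McCormick

variable {n : ℕ} {hn : 0 < n} {p : (Fin n → ℝ) × (Fin n → ℝ)}

lemma runningProductSet_subset_mcCormickPolytope :
    runningProductSet n ⊆ mcCormickPolytope n hn := by
  rintro p ⟨hx, hz, hprod⟩
  obtain ⟨h0, hsucc⟩ := (Fin.forall_eq_prod_Iic_iff hn).1 hprod
  refine ⟨hx, hz, h0, fun i j hij => ?_⟩
  rw [hsucc i j hij, mul_comm]
  exact mcCormick_of_mul (hz i) (hx j)

lemma convex_mcCormickPolytope : Convex ℝ (mcCormickPolytope n hn) := by
  rintro p ⟨hpx, hpz, hp0, hp⟩ q ⟨hqx, hqz, hq0, hq⟩ a b ha hb hab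
  refine ⟨fun k => convex_Icc 0 1 (hpx k) (hqx k) ha hb hab,
    fun k => convex_Icc 0 1 (hpz k) (hqz k) ha hb hab, ?_, fun i j hij => ?_⟩
  · simp only [Prod.fst_add, Prod.snd_add, Prod.smul_fst, Prod.smul_snd, Pi.add_apply,
      Pi.smul_apply, hp0, hq0]
  · obtain ⟨hp1, hp2, hp3, hp4⟩ := hp i j hij
    obtain ⟨hq1, hq2, hq3, hq4⟩ := hq i j hij
    simp only [Prod.fst_add, Prod.snd_add, Prod.smul_fst, Prod.smul_snd, Pi.add_apply,
      Pi.smul_apply, smul_eq_mul]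
    refine ⟨by positivity, ?_, ?_, ?_⟩ <;> nlinarith

lemma snd_le_fst_of_mem_mcCormickPolytope (hp : p ∈ mcCormickPolytope n hn) (j : Fin n) :
    p.2 j ≤ p.1 j := by
  obtain ⟨-, -, h0, hsucc⟩ := hp
  rcases Nat.eq_zero_or_eq_succ_pred j with hj | hj
  · obtain rfl : j = ⟨0, hn⟩ := Fin.ext hj
    exact h0.le
  · exact (hsucc ⟨_, (Nat.pred_lt_self (by omega)).trans j.2⟩ j hj).2.2.2

lemma thresholdRound_mem_pi_zero_one (p : (Fin n → ℝ) × (Fin n → ℝ)) (u : ℝ) :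
    thresholdRound p u ∈ univ.pi (fun _ => ({0, 1} : Set ℝ)) ×ˢ univ.pi (fun _ => {0, 1}) :=
  ⟨fun _ _ => one_sub_mem_zero_one (indicator_one_mem_zero_one _ u),
    fun _ _ => indicator_one_mem_zero_one _ u⟩

lemma thresholdRound_mem_runningProductSet (hp : p ∈ mcCormickPolytope n hn) {u : ℝ}
    (hu : u ∈ Ioc 0 1) : thresholdRound p u ∈ runningProductSet n := by
  obtain ⟨hx, hz⟩ := thresholdRound_mem_pi_zero_one p u
  have zero_one_subset : ({0, 1} : Set ℝ) ⊆ Icc 0 1 := by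
    rintro _ (rfl | rfl) <;> norm_num
  refine ⟨fun k => zero_one_subset (hx k trivial), fun k => zero_one_subset (hz k trivial),
    (Fin.forall_eq_prod_Iic_iff hn).2 ⟨?_, fun i j hij => ?_⟩⟩
  · simp only [thresholdRound, hp.2.2.1, sub_add_cancel]
    exact indicator_Ioc_zero_eq_one_sub hu
  · obtain ⟨-, hlow, hmono, -⟩ := hp.2.2.2 i j hij
    exact indicator_Ioc_zero_eq_mul hlow hmono

lemma integrable_thresholdRound (p : (Fin n → ℝ) × (Fin n → ℝ)) (μ : Measure ℝ)
    [IsFiniteMeasure μ] : Integrable (thresholdRound p) μ :=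
  (Integrable.of_eval fun _ => (integrable_const 1).sub
    ((integrable_const 1).indicator measurableSet_Ioc)).prodMk
    (Integrable.of_eval fun _ => (integrable_const 1).indicator measurableSet_Ioc)

lemma integral_thresholdRound (hp : p ∈ mcCormickPolytope n hn) :
    ∫ u in Ioc 0 1, thresholdRound p u = p := by
  have hf := integrable_thresholdRound p (volume.restrict (Ioc 0 1))
  have hzx := snd_le_fst_of_mem_mcCormickPolytope hp
  obtain ⟨hx, hz, -, -⟩ := hp
  rw [integral_pair hf.fst hf.snd]
  refine Prod.ext (funext fun j => ?_) (funext fun j => ?_)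
  · dsimp only
    rw [eval_integral hf.fst.eval]
    simp only [thresholdRound]
    rw [integral_sub (integrable_const 1) ((integrable_const 1).indicator measurableSet_Ioc),
      integral_indicator_Ioc_of_subset (hz j).1 (by linarith [(hx j).2, hzx j])
        (by linarith [hzx j])]
    simp
  · dsimp only
    rw [eval_integral hf.snd.eval, ← sub_zero (p.2 j)]
    exact integral_indicator_Ioc_of_subset le_rfl (hz j).1 (hz j).2

lemma mcCormickPolytope_subset_convexHull :
    mcCormickPolytope n hn ⊆ convexHull ℝ (runningProductSet n) := by
  intro p hp
  have zero_one_finite : ({0, 1} : Set ℝ).Finite := toFinite _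
  have hfin : (thresholdRound p '' Ioc 0 1).Finite :=
    ((Finite.pi fun _ => zero_one_finite).prod (Finite.pi fun _ => zero_one_finite)).subset
      (image_subset_iff.2 fun u _ => thresholdRound_mem_pi_zero_one p u)
  have hsub : thresholdRound p '' Ioc 0 1 ⊆ runningProductSet n :=
    image_subset_iff.2 fun _ hu => thresholdRound_mem_runningProductSet hp hu
  rw [← integral_thresholdRound hp]
  exact convexHull_mono hsub (integral_mem_convexHull_of_finite hfin
    (integrable_thresholdRound p _)
    ((ae_restrict_mem measurableSet_Ioc).mono fun _ hu => mem_image_of_mem _ hu))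

end McCormick

/-- The convex hull of the graph of the running products `z_j = x_1 ⋯ x_j` over the unit
box equals the polytope cut out by `z_1 = x_1`, the box constraints, and the recursive
McCormick relaxations of `z_j = z_{j-1} · x_j` over `[0,1]²`. -/
theorem stmt0 (n : ℕ) (hn : 0 < n)
    (S : Set ((Fin n → ℝ) × (Fin n → ℝ)))
    (hS : S = {p | (∀ k, p.1 k ∈ Set.Icc (0 : ℝ) 1) ∧ (∀ k, p.2 k ∈ Set.Icc (0 : ℝ) 1) ∧
      ∀ j, p.2 j = ∏ k ∈ Finset.Iic j, p.1 k}) :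
    convexHull ℝ S =
      {p | (∀ k, p.1 k ∈ Set.Icc (0 : ℝ) 1) ∧ (∀ k, p.2 k ∈ Set.Icc (0 : ℝ) 1) ∧
        p.2 ⟨0, hn⟩ = p.1 ⟨0, hn⟩ ∧
        ∀ i j : Fin n, (j : ℕ) = (i : ℕ) + 1 →
          0 ≤ p.2 j ∧ p.2 i + p.1 j - 1 ≤ p.2 j ∧ p.2 j ≤ p.2 i ∧ p.2 j ≤ p.1 j} := by
  subst hS
  exact (convexHull_min runningProductSet_subset_mcCormickPolytope
    convex_mcCormickPolytope).antisymm mcCormickPolytope_subset_convexHull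
end

section
/- Fix integers i < j. Consider the polytope P of tuples (σ, τ, β, ζ), where ζ ∈ ℝ, τ_k ∈ ℝ for i ≤ k ≤ j − 1, β_l ∈ ℝ for i + 1 ≤ l ≤ j, and σ_{k,l} ∈ ℝ for i ≤ k ≤ j − 1 and i + 1 ≤ l ≤ k + 1, defined by: σ_{k,l} ≥ 0 for all admissible (k,l); Σ_{l=i+1}^{k+1} σ_{k,l} = τ_k for each k; Σ_{k=l-1}^{j-1} σ_{k,l} = β_l for each l; Σ_{k=i}^{j-1} τ_k = Σ_{l=i+1}^{j} β_l = ζ; and 0 ≤ ζ ≤ 1. Then P equals the convex hull of the finite set consisting of the origin together with, for each pair (k, l) with i ≤ k ≤ j − 1 and i + 1 ≤ l ≤ k + 1, the 0/1 point at which ζ = τ_k = β_l = σ_{k,l} = 1 and all other coordinates are 0. -/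
/-!
The flow conditions make `τ`, `β` and `ζ` the row sums, column sums and total of `σ`, so a point
of the polytope is `∑ σ_q • e_q` over the feasible splits `q`, where `e_q` is the 0/1 point of
`q`. The weights `σ_q` are nonnegative with total `ζ ≤ 1`, and the remaining weight `1 - ζ` goes
to the origin. Conversely the polytope is convex and contains the origin and every `e_q`.
-/

open Finset

theorem sum_smul_mem_convexHull_insert_zero {ι E : Type*} [AddCommGroup E] [Module ℝ E]
    {s : Set E} (t : Finset ι) (c : ι → ℝ) (v : ι → E) (hc : ∀ q ∈ t, 0 ≤ c q)
    (hsum : ∑ q ∈ t, c q ≤ 1) (hv : ∀ q ∈ t, v q ∈ s) :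
    ∑ q ∈ t, c q • v q ∈ convexHull ℝ (insert 0 s) := by
  classical
  -- the missing weight `1 - ∑ c` goes to the origin
  have h := (convex_convexHull ℝ (insert 0 s)).sum_mem (t := insertNone t)
    (w := fun o => o.elim (1 - ∑ q ∈ t, c q) c) (z := fun o => o.elim 0 v)
    (fun o ho => by cases o <;> simp_all) (by simp)
    (fun o ho => by
      cases o with
      | none => exact subset_convexHull ℝ _ (Set.mem_insert _ _)
      | some q => exact subset_convexHull ℝ _ (Set.mem_insert_of_mem _ (hv q (by simpa using ho))))
  simpa using h

namespace SplitFlow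

abbrev Point := (ℤ → ℤ → ℝ) × (ℤ → ℝ) × (ℤ → ℝ) × ℝ

noncomputable def splits (i j : ℤ) : Finset (ℤ × ℤ) :=
  (Icc i (j - 1) ×ˢ Icc (i + 1) j).filter fun q => q.2 ≤ q.1 + 1

variable {i j : ℤ}

theorem mem_splits {q : ℤ × ℤ} :
    q ∈ splits i j ↔ i ≤ q.1 ∧ q.1 ≤ j - 1 ∧ i + 1 ≤ q.2 ∧ q.2 ≤ q.1 + 1 := by
  simp only [splits, mem_filter, mem_product, mem_Icc]
  omega

theorem sum_splits_eq_sum_rows {M : Type*} [AddCommMonoid M] (f : ℤ × ℤ → M) :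
    ∑ q ∈ splits i j, f q = ∑ k ∈ Icc i (j - 1), ∑ l ∈ Icc (i + 1) (k + 1), f (k, l) :=
  sum_finset_product _ _ _ fun q => by simp only [mem_splits, mem_Icc]; omega

theorem sum_splits_eq_sum_cols {M : Type*} [AddCommMonoid M] (f : ℤ × ℤ → M) :
    ∑ q ∈ splits i j, f q = ∑ l ∈ Icc (i + 1) j, ∑ k ∈ Icc (l - 1) (j - 1), f (k, l) :=
  sum_finset_product_right _ _ _ fun q => by simp only [mem_splits, mem_Icc]; omega

def splitPoint (k l : ℤ) : Point :=
  (fun k' l' => if k' = k ∧ l' = l then 1 else 0, fun k' => if k' = k then 1 else 0,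
    fun l' => if l' = l then 1 else 0, 1)

variable (i j) in
def flowPolytope : Set Point :=
  {p | (∀ k l, i ≤ k → k ≤ j - 1 → i + 1 ≤ l → l ≤ k + 1 → 0 ≤ p.1 k l) ∧
      (∀ k l, ¬(i ≤ k ∧ k ≤ j - 1 ∧ i + 1 ≤ l ∧ l ≤ k + 1) → p.1 k l = 0) ∧
      (∀ k, ¬(i ≤ k ∧ k ≤ j - 1) → p.2.1 k = 0) ∧
      (∀ l, ¬(i + 1 ≤ l ∧ l ≤ j) → p.2.2.1 l = 0) ∧
      (∀ k, i ≤ k → k ≤ j - 1 → ∑ l ∈ Icc (i + 1) (k + 1), p.1 k l = p.2.1 k) ∧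
      (∀ l, i + 1 ≤ l → l ≤ j → ∑ k ∈ Icc (l - 1) (j - 1), p.1 k l = p.2.2.1 l) ∧
      (∑ k ∈ Icc i (j - 1), p.2.1 k = p.2.2.2) ∧
      (∑ l ∈ Icc (i + 1) j, p.2.2.1 l = p.2.2.2) ∧
      0 ≤ p.2.2.2 ∧ p.2.2.2 ≤ 1}

theorem convex_flowPolytope : Convex ℝ (flowPolytope i j) := by
  rintro x ⟨hx1, hx2, hx3, hx4, hx5, hx6, hx7, hx8, hx9, hx10⟩
    y ⟨hy1, hy2, hy3, hy4, hy5, hy6, hy7, hy8, hy9, hy10⟩ a b ha hb hab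
  simp only [flowPolytope, Set.mem_ofPred_eq, Prod.fst_add, Prod.snd_add, Prod.smul_fst,
    Prod.smul_snd, Pi.add_apply, Pi.smul_apply, smul_eq_mul, sum_add_distrib, ← mul_sum]
  refine ⟨fun k l h1 h2 h3 h4 => by positivity [hx1 k l h1 h2 h3 h4, hy1 k l h1 h2 h3 h4],
    fun k l h => by simp [hx2 k l h, hy2 k l h], fun k h => by simp [hx3 k h, hy3 k h],
    fun l h => by simp [hx4 l h, hy4 l h], fun k h1 h2 => by rw [hx5 k h1 h2, hy5 k h1 h2],
    fun l h1 h2 => by rw [hx6 l h1 h2, hy6 l h1 h2], by rw [hx7, hy7], by rw [hx8, hy8],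
    by positivity, by nlinarith⟩

theorem zero_mem_flowPolytope : (0 : Point) ∈ flowPolytope i j := by
  simp [flowPolytope]

theorem splitPoint_mem_flowPolytope {k l : ℤ} (hk : i ≤ k) (hk' : k ≤ j - 1) (hl : i + 1 ≤ l)
    (hl' : l ≤ k + 1) : splitPoint k l ∈ flowPolytope i j := by
  simp only [flowPolytope, splitPoint, Set.mem_ofPred_eq]
  refine ⟨?_, ?_, ?_, ?_, ?_, ?_, ?_, ?_, zero_le_one, le_rfl⟩
  · intro k' l' _ _ _ _
    positivity
  · rintro k' l' h
    rw [if_neg]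
    rintro ⟨rfl, rfl⟩
    exact h ⟨hk, hk', hl, hl'⟩
  · rintro k' h
    rw [if_neg]
    rintro rfl
    exact h ⟨hk, hk'⟩
  · rintro l' h
    rw [if_neg]
    rintro rfl
    exact h ⟨hl, by omega⟩
  · intro k' _ _
    rcases eq_or_ne k' k with rfl | h
    · simp [hl, hl']
    · simp [h]
  · intro l' _ _
    rcases eq_or_ne l' l with rfl | h
    · simp [hk']; omega
    · simp [h]
  · simp [hk, hk']
  · simp [hl]; omega

theorem sum_splits_eq_total {p : Point} (hp : p ∈ flowPolytope i j) :
    ∑ q ∈ splits i j, p.1 q.1 q.2 = p.2.2.2 := by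
  obtain ⟨-, -, -, -, hτ, -, hζ, -⟩ := hp
  rw [sum_splits_eq_sum_rows, ← hζ]
  exact sum_congr rfl fun k hk => by rw [mem_Icc] at hk; exact hτ k hk.1 hk.2

theorem eq_sum_smul_splitPoint {p : Point} (hp : p ∈ flowPolytope i j) :
    p = ∑ q ∈ splits i j, p.1 q.1 q.2 • splitPoint q.1 q.2 := by
  have htotal := sum_splits_eq_total hp
  obtain ⟨-, hσ0, hτ0, hβ0, hτ, hβ, -⟩ := hp
  refine Prod.ext ?_ (Prod.ext ?_ (Prod.ext ?_ ?_)) <;>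
    simp only [Prod.fst_sum, Prod.snd_sum, Prod.smul_fst, Prod.smul_snd, splitPoint]
  · funext k l
    simp only [Finset.sum_apply, Pi.smul_apply, smul_eq_mul, mul_ite, mul_one, mul_zero]
    rw [sum_eq_single (k, l)]
    · simp
    · rintro q - hq
      rw [if_neg]
      rintro ⟨rfl, rfl⟩
      exact hq rfl
    · intro h
      rw [if_pos ⟨rfl, rfl⟩]
      exact hσ0 k l (by simpa [mem_splits] using h)
  · funext k
    simp only [Finset.sum_apply, Pi.smul_apply, smul_eq_mul, mul_ite, mul_one, mul_zero]
    rw [sum_splits_eq_sum_rows (fun q => if k = q.1 then p.1 q.1 q.2 else 0)]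
    simp only [← ite_sum_zero, sum_ite_eq, mem_Icc]
    split_ifs with hk
    · exact (hτ k hk.1 hk.2).symm
    · exact hτ0 k hk
  · funext l
    simp only [Finset.sum_apply, Pi.smul_apply, smul_eq_mul, mul_ite, mul_one, mul_zero]
    rw [sum_splits_eq_sum_cols (fun q => if l = q.2 then p.1 q.1 q.2 else 0)]
    simp only [← ite_sum_zero, sum_ite_eq, mem_Icc]
    split_ifs with hl
    · exact (hβ l hl.1 hl.2).symm
    · exact hβ0 l hl
  · simp only [smul_eq_mul, mul_one]
    exact htotal.symm

end SplitFlow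

open SplitFlow

theorem stmt6_general (i j : ℤ) :
    {p : (ℤ → ℤ → ℝ) × (ℤ → ℝ) × (ℤ → ℝ) × ℝ |
      (∀ k l, i ≤ k → k ≤ j - 1 → i + 1 ≤ l → l ≤ k + 1 → 0 ≤ p.1 k l) ∧
      (∀ k l, ¬(i ≤ k ∧ k ≤ j - 1 ∧ i + 1 ≤ l ∧ l ≤ k + 1) → p.1 k l = 0) ∧
      (∀ k, ¬(i ≤ k ∧ k ≤ j - 1) → p.2.1 k = 0) ∧
      (∀ l, ¬(i + 1 ≤ l ∧ l ≤ j) → p.2.2.1 l = 0) ∧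
      (∀ k, i ≤ k → k ≤ j - 1 → ∑ l ∈ Finset.Icc (i + 1) (k + 1), p.1 k l = p.2.1 k) ∧
      (∀ l, i + 1 ≤ l → l ≤ j → ∑ k ∈ Finset.Icc (l - 1) (j - 1), p.1 k l = p.2.2.1 l) ∧
      (∑ k ∈ Finset.Icc i (j - 1), p.2.1 k = p.2.2.2) ∧
      (∑ l ∈ Finset.Icc (i + 1) j, p.2.2.1 l = p.2.2.2) ∧
      0 ≤ p.2.2.2 ∧ p.2.2.2 ≤ 1} =
    convexHull ℝ (insert (0 : (ℤ → ℤ → ℝ) × (ℤ → ℝ) × (ℤ → ℝ) × ℝ)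
      {p | ∃ k l : ℤ, i ≤ k ∧ k ≤ j - 1 ∧ i + 1 ≤ l ∧ l ≤ k + 1 ∧
        p = (fun k' l' => if k' = k ∧ l' = l then 1 else 0,
             fun k' => if k' = k then 1 else 0,
             fun l' => if l' = l then 1 else 0, 1)}) := by
  change flowPolytope i j = convexHull ℝ (insert 0 {p | ∃ k l : ℤ,
    i ≤ k ∧ k ≤ j - 1 ∧ i + 1 ≤ l ∧ l ≤ k + 1 ∧ p = splitPoint k l})
  refine le_antisymm (fun p hp => ?_) (convexHull_min ?_ convex_flowPolytope)
  · have ⟨hσ, _, _, _, _, _, _, _, _, hζ⟩ := hp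
    rw [eq_sum_smul_splitPoint hp]
    refine sum_smul_mem_convexHull_insert_zero (splits i j) (fun q => p.1 q.1 q.2)
      (fun q => splitPoint q.1 q.2) (fun q hq => ?_) ((sum_splits_eq_total hp).trans_le hζ)
      fun q hq => ?_
    · obtain ⟨hk, hk', hl, hl'⟩ := mem_splits.1 hq
      exact hσ q.1 q.2 hk hk' hl hl'
    · obtain ⟨hk, hk', hl, hl'⟩ := mem_splits.1 hq
      exact ⟨q.1, q.2, hk, hk', hl, hl', rfl⟩
  · rintro p (rfl | ⟨k, l, hk, hk', hl, hl', rfl⟩)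
    · exact zero_mem_flowPolytope
    · exact splitPoint_mem_flowPolytope hk hk' hl hl'

/-- Proposition 3 of the paper: the network flow polytope of the split-feasibility
digraph (with coordinates `(σ, τ, β, ζ)`, out-of-range coordinates fixed at 0) equals the
convex hull of the origin together with the 0/1 points selecting exactly one feasible
split `(k, l)` with `i ≤ k ≤ j − 1` and `i + 1 ≤ l ≤ k + 1`. -/
theorem stmt6 (i j : ℤ) (hij : i < j) :
    {p : (ℤ → ℤ → ℝ) × (ℤ → ℝ) × (ℤ → ℝ) × ℝ |
      (∀ k l, i ≤ k → k ≤ j - 1 → i + 1 ≤ l → l ≤ k + 1 → 0 ≤ p.1 k l) ∧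
      (∀ k l, ¬(i ≤ k ∧ k ≤ j - 1 ∧ i + 1 ≤ l ∧ l ≤ k + 1) → p.1 k l = 0) ∧
      (∀ k, ¬(i ≤ k ∧ k ≤ j - 1) → p.2.1 k = 0) ∧
      (∀ l, ¬(i + 1 ≤ l ∧ l ≤ j) → p.2.2.1 l = 0) ∧
      (∀ k, i ≤ k → k ≤ j - 1 → ∑ l ∈ Finset.Icc (i + 1) (k + 1), p.1 k l = p.2.1 k) ∧
      (∀ l, i + 1 ≤ l → l ≤ j → ∑ k ∈ Finset.Icc (l - 1) (j - 1), p.1 k l = p.2.2.1 l) ∧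
      (∑ k ∈ Finset.Icc i (j - 1), p.2.1 k = p.2.2.2) ∧
      (∑ l ∈ Finset.Icc (i + 1) j, p.2.2.1 l = p.2.2.2) ∧
      0 ≤ p.2.2.2 ∧ p.2.2.2 ≤ 1} =
    convexHull ℝ (insert (0 : (ℤ → ℤ → ℝ) × (ℤ → ℝ) × (ℤ → ℝ) × ℝ)
      {p | ∃ k l : ℤ, i ≤ k ∧ k ≤ j - 1 ∧ i + 1 ≤ l ∧ l ≤ k + 1 ∧
        p = (fun k' l' => if k' = k ∧ l' = l then 1 else 0,
             fun k' => if k' = k then 1 else 0,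
             fun l' => if l' = l then 1 else 0, 1)}) :=
  stmt6_general i j
end

section
/- Fix integers i ≥ 1, j and N with j ≤ N. Consider the polytope P of tuples (ψ, τ, β, ζ), where ζ ∈ ℝ, τ_n ∈ ℝ for j + 1 ≤ n ≤ N + 1, β_m ∈ ℝ for 0 ≤ m ≤ i − 1, and ψ_{n,m} ∈ ℝ for those n, m, defined by: ψ_{n,m} ≥ 0 for all (n, m); ψ_{N+1,0} = 0; Σ_{m=0}^{i-1} ψ_{n,m} = τ_n for each n; Σ_{n=j+1}^{N+1} ψ_{n,m} = β_m for each m; Σ_{n=j+1}^{N+1} τ_n = Σ_{m=0}^{i-1} β_m = ζ; and 0 ≤ ζ ≤ 1. Then P equals the convex hull of the finite set consisting of the origin together with, for each pair (n, m) with j + 1 ≤ n ≤ N + 1, 0 ≤ m ≤ i − 1 and (n, m) ≠ (N + 1, 0), the 0/1 point at which ζ = τ_n = β_m = ψ_{n,m} = 1 and all other coordinates are 0. -/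
/-!
Summing the flows `ψ n m • v(n, m)` of the 0/1 vertices over all arcs reproduces any point
`p` of the polytope: the coordinates `τ`, `β`, `ζ` of the sum are the row sums, column sums and
total of `ψ`, which the flow constraints identify with those of `p`. Since the forbidden arc
carries no flow and the total flow is `ζ ≤ 1`, this writes `p` as a combination of vertices with
nonnegative weights of total at most one, which lies in the convex hull of the vertices and the
origin. Conversely, the origin and the vertices satisfy the constraints, which cut out a convex
set.
-/

open Finset

theorem Convex.sum_smul_mem_of_zero_mem {𝕜 E ι : Type*} [Field 𝕜] [LinearOrder 𝕜]
    [IsStrictOrderedRing 𝕜] [AddCommGroup E] [Module 𝕜 E] {C : Set E} (hC : Convex 𝕜 C)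
    (h0 : (0 : E) ∈ C) {t : Finset ι} {w : ι → 𝕜} {z : ι → E} (hw : ∀ q ∈ t, 0 ≤ w q)
    (hw₁ : ∑ q ∈ t, w q ≤ 1) (hz : ∀ q ∈ t, z q ∈ C) : ∑ q ∈ t, w q • z q ∈ C := by
  rcases (sum_nonneg hw).eq_or_lt with hsum | hpos
  · have hw0 : ∀ q ∈ t, w q = 0 := (sum_eq_zero_iff_of_nonneg hw).mp hsum.symm
    rwa [sum_eq_zero fun q hq => by rw [hw0 q hq, zero_smul]]
  · have hmass : ∑ q ∈ t, w q • z q = (∑ q ∈ t, w q) • t.centerMass w z :=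
      (smul_inv_smul₀ hpos.ne' _).symm
    rw [hmass]
    exact hC.smul_mem_of_zero_mem h0 (hC.centerMass_mem hw hpos hz) ⟨hpos.le, hw₁⟩

namespace PresenceOfParent

abbrev Point := (ℤ → ℤ → ℝ) × (ℤ → ℝ) × (ℤ → ℝ) × ℝ

def vertex (n m : ℤ) : Point :=
  (fun n' m' => if n' = n ∧ m' = m then 1 else 0,
   fun n' => if n' = n then 1 else 0,
   fun m' => if m' = m then 1 else 0, 1)

theorem sum_smul_vertex (A B : Finset ℤ) (ψ : ℤ → ℤ → ℝ) :
    ∑ q ∈ A ×ˢ B, ψ q.1 q.2 • vertex q.1 q.2 =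
      (fun n m => if n ∈ A ∧ m ∈ B then ψ n m else 0,
       fun n => if n ∈ A then ∑ m ∈ B, ψ n m else 0,
       fun m => if m ∈ B then ∑ n ∈ A, ψ n m else 0,
       ∑ q ∈ A ×ˢ B, ψ q.1 q.2) := by
  refine Prod.ext ?_ (Prod.ext ?_ (Prod.ext ?_ ?_))
  · ext n m
    have hcond (q : ℤ × ℤ) : (n = q.1 ∧ m = q.2) ↔ (n, m) = q := Prod.ext_iff (x := (n, m)).symm
    simp [vertex, Prod.fst_sum, Finset.sum_apply, hcond]
  · ext n
    simp [vertex, Prod.fst_sum, Prod.snd_sum, Finset.sum_apply, sum_product]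
  · ext m
    simp [vertex, Prod.fst_sum, Prod.snd_sum, Finset.sum_apply, sum_product_right]
  · simp [vertex, Prod.snd_sum]

def polytope (i j N : ℤ) : Set Point :=
  {p : Point |
      (∀ n m, j + 1 ≤ n → n ≤ N + 1 → 0 ≤ m → m ≤ i - 1 → 0 ≤ p.1 n m) ∧
      (∀ n m, ¬(j + 1 ≤ n ∧ n ≤ N + 1 ∧ 0 ≤ m ∧ m ≤ i - 1) → p.1 n m = 0) ∧
      p.1 (N + 1) 0 = 0 ∧
      (∀ n, ¬(j + 1 ≤ n ∧ n ≤ N + 1) → p.2.1 n = 0) ∧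
      (∀ m, ¬(0 ≤ m ∧ m ≤ i - 1) → p.2.2.1 m = 0) ∧
      (∀ n, j + 1 ≤ n → n ≤ N + 1 → ∑ m ∈ Finset.Icc 0 (i - 1), p.1 n m = p.2.1 n) ∧
      (∀ m, 0 ≤ m → m ≤ i - 1 → ∑ n ∈ Finset.Icc (j + 1) (N + 1), p.1 n m = p.2.2.1 m) ∧
      (∑ n ∈ Finset.Icc (j + 1) (N + 1), p.2.1 n = p.2.2.2) ∧
      (∑ m ∈ Finset.Icc 0 (i - 1), p.2.2.1 m = p.2.2.2) ∧
      0 ≤ p.2.2.2 ∧ p.2.2.2 ≤ 1}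

def vertices (i j N : ℤ) : Set Point :=
  {p | ∃ n m : ℤ, j + 1 ≤ n ∧ n ≤ N + 1 ∧ 0 ≤ m ∧ m ≤ i - 1 ∧ (n, m) ≠ (N + 1, 0) ∧
    p = vertex n m}

variable {i j N : ℤ}

theorem convex_polytope : Convex ℝ (polytope i j N) := by
  rintro x ⟨x1, x2, x3, x4, x5, x6, x7, x8, x9, x10, x11⟩
    y ⟨y1, y2, y3, y4, y5, y6, y7, y8, y9, y10, y11⟩ a b ha hb hab
  simp only [polytope, Set.mem_ofPred_eq, Prod.fst_add, Prod.snd_add, Prod.smul_fst,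
    Prod.smul_snd, Pi.add_apply, Pi.smul_apply, smul_eq_mul]
  refine ⟨fun n m hn hn' hm hm' => ?_, fun n m h => ?_, ?_, fun n h => ?_, fun m h => ?_,
    fun n hn hn' => ?_, fun m hm hm' => ?_, ?_, ?_, by positivity, by nlinarith⟩
  · have := x1 n m hn hn' hm hm'
    have := y1 n m hn hn' hm hm'
    positivity
  · simp [x2 n m h, y2 n m h]
  · simp [x3, y3]
  · simp [x4 n h, y4 n h]
  · simp [x5 m h, y5 m h]
  · rw [sum_add_distrib, ← mul_sum, ← mul_sum, x6 n hn hn', y6 n hn hn']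
  · rw [sum_add_distrib, ← mul_sum, ← mul_sum, x7 m hm hm', y7 m hm hm']
  · rw [sum_add_distrib, ← mul_sum, ← mul_sum, x8, y8]
  · rw [sum_add_distrib, ← mul_sum, ← mul_sum, x9, y9]

theorem zero_mem_polytope : 0 ∈ polytope i j N := by
  simp [polytope]

theorem vertex_mem_polytope {n m : ℤ} (hn : j + 1 ≤ n) (hn' : n ≤ N + 1) (hm : 0 ≤ m)
    (hm' : m ≤ i - 1) (hnm : (n, m) ≠ (N + 1, 0)) : vertex n m ∈ polytope i j N := by
  refine ⟨fun _ _ _ _ _ _ => ?_, fun n' m' h => ?_, ?_, fun n' h => ?_, fun m' h => ?_,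
    fun n' _ _ => ?_, fun m' _ _ => ?_, ?_, ?_, ?_, ?_⟩ <;> simp only [vertex]
  all_goals simp_all [ite_and, Prod.ext_iff]
  all_goals grind

theorem eq_sum_smul_vertex {p : Point} (hp : p ∈ polytope i j N) :
    p = ∑ q ∈ Icc (j + 1) (N + 1) ×ˢ Icc 0 (i - 1), p.1 q.1 q.2 • vertex q.1 q.2 := by
  obtain ⟨-, hψ, -, hτ, hβ, hrow, hcol, htot, -, -, -⟩ := hp
  rw [sum_smul_vertex]
  refine Prod.ext ?_ (Prod.ext ?_ (Prod.ext ?_ ?_))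
  · ext n m
    simp only [mem_Icc]
    split_ifs with h
    · rfl
    · exact hψ n m (by tauto)
  · ext n
    simp only [mem_Icc]
    split_ifs with h
    · exact (hrow n h.1 h.2).symm
    · exact hτ n h
  · ext m
    simp only [mem_Icc]
    split_ifs with h
    · exact (hcol m h.1 h.2).symm
    · exact hβ m h
  · rw [sum_product, ← htot]
    exact sum_congr rfl fun n hn => (hrow n (mem_Icc.mp hn).1 (mem_Icc.mp hn).2).symm

theorem polytope_subset_convexHull :
    polytope i j N ⊆ convexHull ℝ (insert 0 (vertices i j N)) := by
  intro p hp
  set arcs := Icc (j + 1) (N + 1) ×ˢ Icc 0 (i - 1)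
  have hsum := eq_sum_smul_vertex hp
  have htot : p.2.2.2 = ∑ q ∈ arcs, p.1 q.1 q.2 := by
    simpa only [sum_smul_vertex] using congrArg (·.2.2.2) hsum
  obtain ⟨hψ, -, hforbidden, -, -, -, -, -, -, -, hζ⟩ := hp
  rw [hsum, ← sum_erase arcs (a := (N + 1, 0)) (by simp [hforbidden])]
  refine (convex_convexHull ℝ _).sum_smul_mem_of_zero_mem
    (subset_convexHull ℝ _ (Set.mem_insert 0 _)) (fun q hq => ?_) ?_ (fun q hq => ?_)
  · simp only [arcs, mem_erase, mem_product, mem_Icc] at hq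
    exact hψ q.1 q.2 hq.2.1.1 hq.2.1.2 hq.2.2.1 hq.2.2.2
  · rw [sum_erase arcs hforbidden, ← htot]
    exact hζ
  · simp only [arcs, mem_erase, mem_product, mem_Icc] at hq
    exact subset_convexHull ℝ _ (Set.mem_insert_of_mem 0
      ⟨q.1, q.2, hq.2.1.1, hq.2.1.2, hq.2.2.1, hq.2.2.2, hq.1, rfl⟩)

theorem convexHull_subset_polytope :
    convexHull ℝ (insert 0 (vertices i j N)) ⊆ polytope i j N := by
  refine convexHull_min (Set.insert_subset zero_mem_polytope ?_) convex_polytope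
  rintro _ ⟨n, m, hn, hn', hm, hm', hnm, rfl⟩
  exact vertex_mem_polytope hn hn' hm hm' hnm

end PresenceOfParent

open PresenceOfParent in
theorem stmt7_general (i j N : ℤ) :
    {p : (ℤ → ℤ → ℝ) × (ℤ → ℝ) × (ℤ → ℝ) × ℝ |
      (∀ n m, j + 1 ≤ n → n ≤ N + 1 → 0 ≤ m → m ≤ i - 1 → 0 ≤ p.1 n m) ∧
      (∀ n m, ¬(j + 1 ≤ n ∧ n ≤ N + 1 ∧ 0 ≤ m ∧ m ≤ i - 1) → p.1 n m = 0) ∧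
      p.1 (N + 1) 0 = 0 ∧
      (∀ n, ¬(j + 1 ≤ n ∧ n ≤ N + 1) → p.2.1 n = 0) ∧
      (∀ m, ¬(0 ≤ m ∧ m ≤ i - 1) → p.2.2.1 m = 0) ∧
      (∀ n, j + 1 ≤ n → n ≤ N + 1 → ∑ m ∈ Finset.Icc 0 (i - 1), p.1 n m = p.2.1 n) ∧
      (∀ m, 0 ≤ m → m ≤ i - 1 → ∑ n ∈ Finset.Icc (j + 1) (N + 1), p.1 n m = p.2.2.1 m) ∧
      (∑ n ∈ Finset.Icc (j + 1) (N + 1), p.2.1 n = p.2.2.2) ∧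
      (∑ m ∈ Finset.Icc 0 (i - 1), p.2.2.1 m = p.2.2.2) ∧
      0 ≤ p.2.2.2 ∧ p.2.2.2 ≤ 1} =
    convexHull ℝ (insert (0 : (ℤ → ℤ → ℝ) × (ℤ → ℝ) × (ℤ → ℝ) × ℝ)
      {p | ∃ n m : ℤ, j + 1 ≤ n ∧ n ≤ N + 1 ∧ 0 ≤ m ∧ m ≤ i - 1 ∧ (n, m) ≠ (N + 1, 0) ∧
        p = (fun n' m' => if n' = n ∧ m' = m then 1 else 0,
             fun n' => if n' = n then 1 else 0,
             fun m' => if m' = m then 1 else 0, 1)}) :=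
  polytope_subset_convexHull.antisymm convexHull_subset_polytope

/-- Proposition 4 of the paper: the network flow polytope of the presence-of-parent
digraph (coordinates `(ψ, τ, β, ζ)`, the arc `(N+1, 0)` forbidden, out-of-range
coordinates fixed at 0) equals the convex hull of the origin together with the 0/1
points selecting one admissible pair `(n, m) ≠ (N+1, 0)`. -/
theorem stmt7 (i j N : ℤ) (hi : 1 ≤ i) (hjN : j ≤ N) :
    {p : (ℤ → ℤ → ℝ) × (ℤ → ℝ) × (ℤ → ℝ) × ℝ |
      (∀ n m, j + 1 ≤ n → n ≤ N + 1 → 0 ≤ m → m ≤ i - 1 → 0 ≤ p.1 n m) ∧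
      (∀ n m, ¬(j + 1 ≤ n ∧ n ≤ N + 1 ∧ 0 ≤ m ∧ m ≤ i - 1) → p.1 n m = 0) ∧
      p.1 (N + 1) 0 = 0 ∧
      (∀ n, ¬(j + 1 ≤ n ∧ n ≤ N + 1) → p.2.1 n = 0) ∧
      (∀ m, ¬(0 ≤ m ∧ m ≤ i - 1) → p.2.2.1 m = 0) ∧
      (∀ n, j + 1 ≤ n → n ≤ N + 1 → ∑ m ∈ Finset.Icc 0 (i - 1), p.1 n m = p.2.1 n) ∧
      (∀ m, 0 ≤ m → m ≤ i - 1 → ∑ n ∈ Finset.Icc (j + 1) (N + 1), p.1 n m = p.2.2.1 m) ∧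
      (∑ n ∈ Finset.Icc (j + 1) (N + 1), p.2.1 n = p.2.2.2) ∧
      (∑ m ∈ Finset.Icc 0 (i - 1), p.2.2.1 m = p.2.2.2) ∧
      0 ≤ p.2.2.2 ∧ p.2.2.2 ≤ 1} =
    convexHull ℝ (insert (0 : (ℤ → ℤ → ℝ) × (ℤ → ℝ) × (ℤ → ℝ) × ℝ)
      {p | ∃ n m : ℤ, j + 1 ≤ n ∧ n ≤ N + 1 ∧ 0 ≤ m ∧ m ≤ i - 1 ∧ (n, m) ≠ (N + 1, 0) ∧
        p = (fun n' m' => if n' = n ∧ m' = m then 1 else 0,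
             fun n' => if n' = n then 1 else 0,
             fun m' => if m' = m then 1 else 0, 1)}) :=
  stmt7_general i j N
end

section
/- Fix integers 1 ≤ i < j ≤ N. Consider the polytope P of tuples (ζ, τ, β, σ, t, b, ψ, χ, ρ), where ζ, χ, ρ ∈ ℝ; τ_k ∈ ℝ for i ≤ k ≤ j − 1; β_l ∈ ℝ for i + 1 ≤ l ≤ j; σ_{k,l} ∈ ℝ for i ≤ k ≤ j − 1, i + 1 ≤ l ≤ k + 1; t_n ∈ ℝ for j + 1 ≤ n ≤ N + 1; b_m ∈ ℝ for 0 ≤ m ≤ i − 1; and ψ_{n,m} ∈ ℝ for those n, m; defined by: σ_{k,l} ≥ 0; ψ_{n,m} ≥ 0; ψ_{N+1,0} = 0; Σ_{l=i+1}^{k+1} σ_{k,l} = τ_k; Σ_{k=l-1}^{j-1} σ_{k,l} = β_l; Σ_{m=0}^{i-1} ψ_{n,m} = t_n; Σ_{n=j+1}^{N+1} ψ_{n,m} = b_m; Σ_k τ_k = Σ_l β_l = Σ_n t_n = Σ_m b_m = ζ; 0 ≤ ζ ≤ 1; 0 ≤ χ ≤ b_0; 0 ≤ ρ ≤ t_{N+1}.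 Then P equals the convex hull of the finite set E consisting of the origin together with, for every (k, l, n, m) with i ≤ k ≤ j − 1, i + 1 ≤ l ≤ k + 1, j + 1 ≤ n ≤ N + 1, 0 ≤ m ≤ i − 1 and (n, m) ≠ (N + 1, 0), and every c, d ∈ {0,1} with c = 0 unless m = 0 and d = 0 unless n = N + 1, the point at which ζ = τ_k = β_l = σ_{k,l} = t_n = b_m = ψ_{n,m} = 1, χ = c, ρ = d, and all other coordinates are 0. -/
/-
A point `x ∈ P` is `∑ σ_{kl} • s_{kl} + ∑ w • p`, where the split vertex `s_{kl}` has
`ζ = τ_k = β_l = σ_{kl} = 1` and the parent vertices `p` have `t_n = b_m = ψ_{nm} = 1`, `χ = c`,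
`ρ = d`. The parent weights `w` split each flow `ψ_{nm}` by two independent coins with head
probabilities `χ / b₀` (if `m = 0`) and `ρ / t_{N+1}` (if `n = N + 1`); since the column and row
sums of `ψ` are `b` and `t`, this reproduces `χ` and `ρ`. Both families of weights have total mass
`ζ`, and a split vertex plus a parent vertex of positive weight lies in `E`, so `x / ζ` lies in
`conv S + conv T = conv (S + T) ⊆ conv E` for the sets `S`, `T` of vertices used, and
`x = ζ • (x / ζ) + (1 - ζ) • 0`.
-/

/-- Ambient space for Proposition 5: coordinates `(ζ, χ, ρ, τ, β, σ, t, b, ψ)`. -/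
abbrev Stmt8Space : Type :=
  ℝ × ℝ × ℝ × (ℤ → ℝ) × (ℤ → ℝ) × (ℤ → ℤ → ℝ) × (ℤ → ℝ) × (ℤ → ℝ) × (ℤ → ℤ → ℝ)

/-- The combined network flow polytope of Proposition 5 (out-of-range coordinates
fixed at 0). -/
def stmt8P (i j N : ℤ) : Set Stmt8Space :=
  fun x =>
    let ζ := x.1; let χ := x.2.1; let ρ := x.2.2.1
    let τ := x.2.2.2.1; let β := x.2.2.2.2.1; let σ := x.2.2.2.2.2.1
    let t := x.2.2.2.2.2.2.1; let b := x.2.2.2.2.2.2.2.1; let ψ := x.2.2.2.2.2.2.2.2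
    (∀ k l, i ≤ k → k ≤ j - 1 → i + 1 ≤ l → l ≤ k + 1 → 0 ≤ σ k l) ∧
    (∀ k l, ¬(i ≤ k ∧ k ≤ j - 1 ∧ i + 1 ≤ l ∧ l ≤ k + 1) → σ k l = 0) ∧
    (∀ n m, j + 1 ≤ n → n ≤ N + 1 → 0 ≤ m → m ≤ i - 1 → 0 ≤ ψ n m) ∧
    (∀ n m, ¬(j + 1 ≤ n ∧ n ≤ N + 1 ∧ 0 ≤ m ∧ m ≤ i - 1) → ψ n m = 0) ∧
    ψ (N + 1) 0 = 0 ∧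
    (∀ k, ¬(i ≤ k ∧ k ≤ j - 1) → τ k = 0) ∧
    (∀ l, ¬(i + 1 ≤ l ∧ l ≤ j) → β l = 0) ∧
    (∀ n, ¬(j + 1 ≤ n ∧ n ≤ N + 1) → t n = 0) ∧
    (∀ m, ¬(0 ≤ m ∧ m ≤ i - 1) → b m = 0) ∧
    (∀ k, i ≤ k → k ≤ j - 1 → ∑ l ∈ Finset.Icc (i + 1) (k + 1), σ k l = τ k) ∧
    (∀ l, i + 1 ≤ l → l ≤ j → ∑ k ∈ Finset.Icc (l - 1) (j - 1), σ k l = β l) ∧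
    (∀ n, j + 1 ≤ n → n ≤ N + 1 → ∑ m ∈ Finset.Icc 0 (i - 1), ψ n m = t n) ∧
    (∀ m, 0 ≤ m → m ≤ i - 1 → ∑ n ∈ Finset.Icc (j + 1) (N + 1), ψ n m = b m) ∧
    (∑ k ∈ Finset.Icc i (j - 1), τ k = ζ) ∧
    (∑ l ∈ Finset.Icc (i + 1) j, β l = ζ) ∧
    (∑ n ∈ Finset.Icc (j + 1) (N + 1), t n = ζ) ∧
    (∑ m ∈ Finset.Icc 0 (i - 1), b m = ζ) ∧
    0 ≤ ζ ∧ ζ ≤ 1 ∧ 0 ≤ χ ∧ χ ≤ b 0 ∧ 0 ≤ ρ ∧ ρ ≤ t (N + 1)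

/-- The finite set `E` of Proposition 5: the origin together with the 0/1 points
selecting one split `(k, l)`, one parent pair `(n, m) ≠ (N+1, 0)`, and heat-exchanger
values `c, d ∈ {0,1}` with `c = 0` unless `m = 0` and `d = 0` unless `n = N + 1`. -/
def stmt8E (i j N : ℤ) : Set Stmt8Space :=
  insert 0
    {x | ∃ (k l n m : ℤ) (c d : ℝ),
      i ≤ k ∧ k ≤ j - 1 ∧ i + 1 ≤ l ∧ l ≤ k + 1 ∧
      j + 1 ≤ n ∧ n ≤ N + 1 ∧ 0 ≤ m ∧ m ≤ i - 1 ∧ (n, m) ≠ (N + 1, 0) ∧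
      (c = 0 ∨ c = 1) ∧ (d = 0 ∨ d = 1) ∧ (m ≠ 0 → c = 0) ∧ (n ≠ N + 1 → d = 0) ∧
      x = (1, c, d,
           fun k' => if k' = k then 1 else 0,
           fun l' => if l' = l then 1 else 0,
           fun k' l' => if k' = k ∧ l' = l then 1 else 0,
           fun n' => if n' = n then 1 else 0,
           fun m' => if m' = m then 1 else 0,
           fun n' m' => if n' = n ∧ m' = m then 1 else 0)}

open scoped Pointwise in
theorem sum_smul_add_sum_smul_mem_convexHull {E ι κ : Type*} [AddCommGroup E] [Module ℝ E]
    {s : Set E} (h0 : (0 : E) ∈ s) {I : Finset ι} {J : Finset κ} {w : ι → ℝ} {v : κ → ℝ}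
    {a : ι → E} {b : κ → E} (hw : ∀ i ∈ I, 0 ≤ w i) (hv : ∀ j ∈ J, 0 ≤ v j)
    (hwv : ∑ i ∈ I, w i = ∑ j ∈ J, v j) (hw1 : ∑ i ∈ I, w i ≤ 1)
    (hab : ∀ i ∈ I, ∀ j ∈ J, w i ≠ 0 → v j ≠ 0 → a i + b j ∈ s) :
    ∑ i ∈ I, w i • a i + ∑ j ∈ J, v j • b j ∈ convexHull ℝ s := by
  classical
  set I' := I.filter (w · ≠ 0)
  set J' := J.filter (v · ≠ 0)
  rcases (Finset.sum_nonneg hw).eq_or_lt with hζ | hζ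
  · have hw0 := (Finset.sum_eq_zero_iff_of_nonneg hw).1 hζ.symm
    have hv0 := (Finset.sum_eq_zero_iff_of_nonneg hv).1 (hwv ▸ hζ.symm)
    rw [Finset.sum_eq_zero fun i hi => by rw [hw0 i hi, zero_smul],
      Finset.sum_eq_zero fun j hj => by rw [hv0 j hj, zero_smul], add_zero]
    exact subset_convexHull ℝ s h0
  have hA : I.centerMass w a ∈ convexHull ℝ (a '' I') := by
    rw [← Finset.centerMass_filter_ne_zero]
    exact I'.centerMass_mem_convexHull (fun i hi => hw i (Finset.mem_filter.1 hi).1)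
      (by rwa [Finset.sum_filter_ne_zero]) fun i hi => Set.mem_image_of_mem a hi
  have hB : J.centerMass v b ∈ convexHull ℝ (b '' J') := by
    rw [← Finset.centerMass_filter_ne_zero]
    exact J'.centerMass_mem_convexHull (fun j hj => hv j (Finset.mem_filter.1 hj).1)
      (by rwa [Finset.sum_filter_ne_zero, ← hwv]) fun j hj => Set.mem_image_of_mem b hj
  have hAB : a '' I' + b '' J' ⊆ s := by
    rintro _ ⟨_, ⟨i, hi, rfl⟩, _, ⟨j, hj, rfl⟩, rfl⟩
    rw [Finset.mem_coe, Finset.mem_filter] at hi hj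
    exact hab i hi.1 j hj.1 hi.2 hj.2
  have hmem : I.centerMass w a + J.centerMass v b ∈ convexHull ℝ s := by
    refine convexHull_mono hAB ?_
    rw [convexHull_add]
    exact Set.add_mem_add hA hB
  have := ((convex_convexHull ℝ s).starConvex (subset_convexHull ℝ s h0)).smul_mem hmem hζ.le hw1
  rwa [Finset.centerMass, Finset.centerMass, ← hwv, smul_add, smul_smul, smul_smul,
    mul_inv_cancel₀ hζ.ne', one_smul, one_smul] at this

theorem sum_eq_of_vanishing_off {α β M : Type*} [AddCommMonoid M] {p : α → Prop}
    {s : α → Finset β} {T : Finset β} {f : α → β → M} {g : α → M} (hsT : ∀ a, p a → s a ⊆ T)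
    (hf : ∀ a b, ¬(p a ∧ b ∈ s a) → f a b = 0) (hg : ∀ a, ¬p a → g a = 0)
    (hfg : ∀ a, p a → ∑ b ∈ s a, f a b = g a) (a : α) : ∑ b ∈ T, f a b = g a := by
  by_cases ha : p a
  · rw [← hfg a ha]
    exact (Finset.sum_subset (hsT a ha) fun b _ hb => hf a b fun h => hb h.2).symm
  · rw [hg a ha]
    exact Finset.sum_eq_zero fun b _ => hf a b fun h => ha h.1

theorem convex_stmt8P (i j N : ℤ) : Convex ℝ (stmt8P i j N) := by
  rintro x ⟨x1, x2, x3, x4, x5, x6, x7, x8, x9, x10, x11, x12, x13, x14, x15, x16, x17, x18, x19,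
    x20, x21, x22, x23⟩ y ⟨y1, y2, y3, y4, y5, y6, y7, y8, y9, y10, y11, y12, y13, y14, y15, y16,
    y17, y18, y19, y20, y21, y22, y23⟩ a c ha hc hac
  refine ⟨fun k l h1 h2 h3 h4 => ?_, fun k l h => ?_, fun n m h1 h2 h3 h4 => ?_, fun n m h => ?_,
    ?_, fun k h => ?_, fun l h => ?_, fun n h => ?_, fun m h => ?_, fun k h1 h2 => ?_,
    fun l h1 h2 => ?_, fun n h1 h2 => ?_, fun m h1 h2 => ?_, ?_, ?_, ?_, ?_, ?_, ?_, ?_, ?_, ?_,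
    ?_⟩ <;>
    simp only [Prod.fst_add, Prod.snd_add, Prod.smul_fst, Prod.smul_snd, Pi.add_apply,
      Pi.smul_apply, smul_eq_mul, Finset.sum_add_distrib, ← Finset.mul_sum]
  · exact add_nonneg (mul_nonneg ha (x1 k l h1 h2 h3 h4)) (mul_nonneg hc (y1 k l h1 h2 h3 h4))
  · simp [x2 k l h, y2 k l h]
  · exact add_nonneg (mul_nonneg ha (x3 n m h1 h2 h3 h4)) (mul_nonneg hc (y3 n m h1 h2 h3 h4))
  · simp [x4 n m h, y4 n m h]
  · simp [x5, y5]
  · simp [x6 k h, y6 k h]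
  · simp [x7 l h, y7 l h]
  · simp [x8 n h, y8 n h]
  · simp [x9 m h, y9 m h]
  · rw [x10 k h1 h2, y10 k h1 h2]
  · rw [x11 l h1 h2, y11 l h1 h2]
  · rw [x12 n h1 h2, y12 n h1 h2]
  · rw [x13 m h1 h2, y13 m h1 h2]
  · rw [x14, y14]
  · rw [x15, y15]
  · rw [x16, y16]
  · rw [x17, y17]
  · exact add_nonneg (mul_nonneg ha x18) (mul_nonneg hc y18)
  · linarith [mul_le_mul_of_nonneg_left x19 ha, mul_le_mul_of_nonneg_left y19 hc]
  · exact add_nonneg (mul_nonneg ha x20) (mul_nonneg hc y20)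
  · exact add_le_add (mul_le_mul_of_nonneg_left x21 ha) (mul_le_mul_of_nonneg_left y21 hc)
  · exact add_nonneg (mul_nonneg ha x22) (mul_nonneg hc y22)
  · exact add_le_add (mul_le_mul_of_nonneg_left x23 ha) (mul_le_mul_of_nonneg_left y23 hc)

theorem stmt8E_subset_stmt8P (i j N : ℤ) : stmt8E i j N ⊆ stmt8P i j N := by
  rintro x (rfl | ⟨k, l, n, m, c, d, hk1, hk2, hl1, hl2, hn1, hn2, hm1, hm2, hnm, hc, hd, hcm, hdn,
    rfl⟩)
  · refine ⟨?_, ?_, ?_, ?_, ?_, ?_, ?_, ?_, ?_, ?_, ?_, ?_, ?_, ?_, ?_, ?_, ?_, ?_, ?_, ?_, ?_, ?_,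
      ?_⟩ <;> simp
  · have hχ : 0 ≤ c ∧ c ≤ if (0 : ℤ) = m then 1 else 0 := by
      rcases hc with rfl | rfl <;> split_ifs <;> simp_all [eq_comm]
    have hρ : 0 ≤ d ∧ d ≤ if N + 1 = n then 1 else 0 := by
      rcases hd with rfl | rfl <;> split_ifs <;> simp_all [eq_comm]
    rw [Ne, Prod.mk.injEq] at hnm
    refine ⟨?_, ?_, ?_, ?_, ?_, ?_, ?_, ?_, ?_, ?_, ?_, ?_, ?_, ?_, ?_, ?_, ?_, ?_, ?_, hχ.1, hχ.2,
      hρ.1, hρ.2⟩ <;>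
      intros <;>
      simp only [ite_and, Finset.sum_ite_irrel, Finset.sum_ite_eq', Finset.sum_const_zero,
        Finset.mem_Icc, ite_eq_right_iff, one_ne_zero, imp_false, zero_le_one, le_refl] <;>
      (try split_ifs) <;> (try norm_num) <;> omega

def splitVertex (k l : ℤ) : Stmt8Space :=
  (1, 0, 0, fun k' => if k' = k then 1 else 0, fun l' => if l' = l then 1 else 0,
    fun k' l' => if k' = k ∧ l' = l then 1 else 0, 0, 0, 0)

theorem sum_smul_splitVertex {K L : Finset ℤ} {σ : ℤ → ℤ → ℝ}
    (hσ : ∀ k l, ¬(k ∈ K ∧ l ∈ L) → σ k l = 0) :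
    ∑ p ∈ K ×ˢ L, σ p.1 p.2 • splitVertex p.1 p.2 =
      (∑ p ∈ K ×ˢ L, σ p.1 p.2, 0, 0, fun k => ∑ l ∈ L, σ k l, fun l => ∑ k ∈ K, σ k l, σ,
        0, 0, 0) := by
  simp only [splitVertex, Prod.ext_iff, funext_iff, Prod.fst_sum, Prod.snd_sum, Finset.sum_apply,
    Prod.smul_fst, Prod.smul_snd, Pi.smul_apply, smul_eq_mul]
  simp only [Finset.sum_product, mul_ite, ite_and, mul_one, mul_zero, Finset.sum_const_zero,
    Finset.sum_ite_irrel, Finset.sum_ite_eq, ite_eq_left_iff, Pi.zero_apply, implies_true, and_self,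
    and_true, true_and]
  refine ⟨fun k hk => (Finset.sum_eq_zero fun l _ => hσ k l (by tauto)).symm,
    fun l hl => (Finset.sum_eq_zero fun k _ => hσ k l (by tauto)).symm, fun k l => ?_⟩
  split_ifs with hk hl <;> simp [hσ k l, *]

def parentVertex (n m : ℤ) (c d : ℝ) : Stmt8Space :=
  (0, c, d, 0, 0, 0, fun n' => if n' = n then 1 else 0,
    fun m' => if m' = m then 1 else 0, fun n' m' => if n' = n ∧ m' = m then 1 else 0)

def boolWeight (p : ℝ) (c : Bool) : ℝ := if c then p else 1 - p

theorem sum_boolWeight_smul_parentVertex (n m : ℤ) (a b : ℝ) :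
    ∑ cd : Bool × Bool, (boolWeight a cd.1 * boolWeight b cd.2) •
      parentVertex n m cd.1.toNat cd.2.toNat = parentVertex n m a b := by
  simp only [Fintype.sum_prod_type, Fintype.sum_bool, boolWeight, parentVertex, Bool.toNat_true,
    Bool.toNat_false, Nat.cast_one, Nat.cast_zero, ↓reduceIte, Bool.false_eq_true, Prod.ext_iff,
    funext_iff, Prod.fst_add, Prod.snd_add, Pi.add_apply, Prod.smul_fst, Prod.smul_snd,
    Pi.smul_apply, smul_eq_mul]
  refine ⟨by ring, by ring, by ring, by simp, by simp, by simp, fun n' => ?_, fun m' => ?_,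
    fun n' m' => ?_⟩ <;> split_ifs <;> ring

theorem sum_smul_parentVertex {Nf Mf : Finset ℤ} {ψ : ℤ → ℤ → ℝ}
    (hψ : ∀ n m, ¬(n ∈ Nf ∧ m ∈ Mf) → ψ n m = 0) (u v : ℤ → ℝ) :
    ∑ p ∈ Nf ×ˢ Mf, ψ p.1 p.2 • parentVertex p.1 p.2 (u p.2) (v p.1) =
      (0, ∑ p ∈ Nf ×ˢ Mf, ψ p.1 p.2 * u p.2, ∑ p ∈ Nf ×ˢ Mf, ψ p.1 p.2 * v p.1, 0, 0, 0,
        fun n => ∑ m ∈ Mf, ψ n m, fun m => ∑ n ∈ Nf, ψ n m, ψ) := by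
  simp only [parentVertex, Prod.ext_iff, funext_iff, Prod.fst_sum, Prod.snd_sum, Finset.sum_apply,
    Prod.smul_fst, Prod.smul_snd, Pi.smul_apply, smul_eq_mul]
  simp only [Finset.sum_product, mul_ite, ite_and, mul_one, mul_zero, Finset.sum_const_zero,
    Finset.sum_ite_irrel, Finset.sum_ite_eq, ite_eq_left_iff, Pi.zero_apply, implies_true, true_and]
  refine ⟨fun n hn => (Finset.sum_eq_zero fun m _ => hψ n m (by tauto)).symm,
    fun m hm => (Finset.sum_eq_zero fun n _ => hψ n m (by tauto)).symm, fun n m => ?_⟩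
  split_ifs <;> simp [hψ n m, *]

theorem boolWeight_ite_div_nonneg {P : Prop} [Decidable P] {a b : ℝ} (ha : 0 ≤ a) (hab : a ≤ b)
    (c : Bool) : 0 ≤ boolWeight (if P then a / b else 0) c := by
  have hb := ha.trans hab
  split_ifs <;> cases c <;>
    simp [boolWeight, div_nonneg ha hb, div_le_one_of_le₀ hab hb]

theorem sum_boolWeight_mul_boolWeight (a b : ℝ) :
    ∑ cd : Bool × Bool, boolWeight a cd.1 * boolWeight b cd.2 = 1 := by
  simp only [Fintype.sum_prod_type, Fintype.sum_bool, boolWeight, ↓reduceIte, Bool.false_eq_true]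
  ring

theorem sum_smul_parentVertex_eq_sum_boolWeight (F : Finset (ℤ × ℤ)) (ψ : ℤ → ℤ → ℝ)
    (u v : ℤ → ℝ) :
    ∑ p ∈ F, ψ p.1 p.2 • parentVertex p.1 p.2 (u p.2) (v p.1) =
      ∑ q ∈ F ×ˢ (Finset.univ : Finset (Bool × Bool)),
        (ψ q.1.1 q.1.2 * (boolWeight (u q.1.2) q.2.1 * boolWeight (v q.1.1) q.2.2)) •
          parentVertex q.1.1 q.1.2 q.2.1.toNat q.2.2.toNat := by
  rw [Finset.sum_product]
  refine Finset.sum_congr rfl fun p _ => ?_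
  rw [← sum_boolWeight_smul_parentVertex, Finset.smul_sum]
  simp_rw [smul_smul]

theorem splitVertex_add_parentVertex_mem_stmt8E {i j N k l n m : ℤ} {c d : Bool}
    (hkl : i ≤ k ∧ k ≤ j - 1 ∧ i + 1 ≤ l ∧ l ≤ k + 1)
    (hnm : j + 1 ≤ n ∧ n ≤ N + 1 ∧ 0 ≤ m ∧ m ≤ i - 1) (hNm : (n, m) ≠ (N + 1, 0))
    (hc : c = true → m = 0) (hd : d = true → n = N + 1) :
    splitVertex k l + parentVertex n m c.toNat d.toNat ∈ stmt8E i j N := by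
  refine Or.inr ⟨k, l, n, m, c.toNat, d.toNat, hkl.1, hkl.2.1, hkl.2.2.1, hkl.2.2.2, hnm.1,
    hnm.2.1, hnm.2.2.1, hnm.2.2.2, hNm, ?_, ?_, ?_, ?_, ?_⟩
  · cases c <;> simp
  · cases d <;> simp
  · cases c <;> simp_all
  · cases d <;> simp_all
  · simp [splitVertex, parentVertex]

section MemStmt8P

variable {i j N : ℤ} {ζ χ ρ : ℝ} {τ β t b : ℤ → ℝ} {σ ψ : ℤ → ℤ → ℝ}

theorem sum_σ_row_eq_τ (hx : (ζ, χ, ρ, τ, β, σ, t, b, ψ) ∈ stmt8P i j N) (k : ℤ) :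
    ∑ l ∈ Finset.Icc (i + 1) j, σ k l = τ k := by
  obtain ⟨-, hσ, -, -, -, hτ, -, -, -, hστ, -⟩ := hx
  exact sum_eq_of_vanishing_off (p := fun k => i ≤ k ∧ k ≤ j - 1)
    (fun k _ => Finset.Icc_subset_Icc le_rfl (by omega))
    (fun k l h => hσ k l (by simp only [Finset.mem_Icc] at h; omega)) hτ
    (fun k hk => hστ k hk.1 hk.2) k

theorem sum_σ_col_eq_β (hx : (ζ, χ, ρ, τ, β, σ, t, b, ψ) ∈ stmt8P i j N) (l : ℤ) :
    ∑ k ∈ Finset.Icc i (j - 1), σ k l = β l := by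
  obtain ⟨-, hσ, -, -, -, -, hβ, -, -, -, hσβ, -⟩ := hx
  exact sum_eq_of_vanishing_off (p := fun l => i + 1 ≤ l ∧ l ≤ j) (f := fun l k => σ k l)
    (fun l _ => Finset.Icc_subset_Icc (by omega) le_rfl)
    (fun l k h => hσ k l (by simp only [Finset.mem_Icc] at h; omega)) hβ
    (fun l hl => hσβ l hl.1 hl.2) l

theorem sum_ψ_row_eq_t (hx : (ζ, χ, ρ, τ, β, σ, t, b, ψ) ∈ stmt8P i j N) (n : ℤ) :
    ∑ m ∈ Finset.Icc 0 (i - 1), ψ n m = t n := by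
  obtain ⟨-, -, -, hψ, -, -, -, ht, -, -, -, hψt, -⟩ := hx
  exact sum_eq_of_vanishing_off (p := fun n => j + 1 ≤ n ∧ n ≤ N + 1) (fun _ _ => subset_rfl)
    (fun n m h => hψ n m (by simp only [Finset.mem_Icc] at h; omega)) ht
    (fun n hn => hψt n hn.1 hn.2) n

theorem sum_ψ_col_eq_b (hx : (ζ, χ, ρ, τ, β, σ, t, b, ψ) ∈ stmt8P i j N) (m : ℤ) :
    ∑ n ∈ Finset.Icc (j + 1) (N + 1), ψ n m = b m := by
  obtain ⟨-, -, -, hψ, -, -, -, -, hb, -, -, -, hψb, -⟩ := hx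
  exact sum_eq_of_vanishing_off (p := fun m => 0 ≤ m ∧ m ≤ i - 1) (f := fun m n => ψ n m)
    (fun _ _ => subset_rfl) (fun m n h => hψ n m (by simp only [Finset.mem_Icc] at h; omega)) hb
    (fun m hm => hψb m hm.1 hm.2) m

theorem sum_σ_eq_ζ (hx : (ζ, χ, ρ, τ, β, σ, t, b, ψ) ∈ stmt8P i j N) :
    ∑ p ∈ Finset.Icc i (j - 1) ×ˢ Finset.Icc (i + 1) j, σ p.1 p.2 = ζ := by
  obtain ⟨-, -, -, -, -, -, -, -, -, -, -, -, -, hτζ, -⟩ := id hx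
  simpa only [Finset.sum_product, sum_σ_row_eq_τ hx] using hτζ

theorem sum_ψ_eq_ζ (hx : (ζ, χ, ρ, τ, β, σ, t, b, ψ) ∈ stmt8P i j N) :
    ∑ p ∈ Finset.Icc (j + 1) (N + 1) ×ˢ Finset.Icc 0 (i - 1), ψ p.1 p.2 = ζ := by
  obtain ⟨-, -, -, -, -, -, -, -, -, -, -, -, -, -, -, htζ, -⟩ := id hx
  simpa only [Finset.sum_product, sum_ψ_row_eq_t hx] using htζ

theorem eq_sum_splitVertex_add_sum_parentVertex (hx : (ζ, χ, ρ, τ, β, σ, t, b, ψ) ∈ stmt8P i j N)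
    {u v : ℤ → ℝ}
    (hu : ∑ p ∈ Finset.Icc (j + 1) (N + 1) ×ˢ Finset.Icc 0 (i - 1), ψ p.1 p.2 * u p.2 = χ)
    (hv : ∑ p ∈ Finset.Icc (j + 1) (N + 1) ×ˢ Finset.Icc 0 (i - 1), ψ p.1 p.2 * v p.1 = ρ) :
    (ζ, χ, ρ, τ, β, σ, t, b, ψ) =
      ∑ p ∈ Finset.Icc i (j - 1) ×ˢ Finset.Icc (i + 1) j, σ p.1 p.2 • splitVertex p.1 p.2 +
      ∑ p ∈ Finset.Icc (j + 1) (N + 1) ×ˢ Finset.Icc 0 (i - 1),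
        ψ p.1 p.2 • parentVertex p.1 p.2 (u p.2) (v p.1) := by
  obtain ⟨-, hσ, -, hψ, -⟩ := id hx
  rw [sum_smul_splitVertex (σ := σ) fun k l h => hσ k l (by simp only [Finset.mem_Icc] at h; omega),
    sum_smul_parentVertex (ψ := ψ) fun n m h =>
      hψ n m (by simpa only [Finset.mem_Icc, and_assoc] using h),
    hu, hv, sum_σ_eq_ζ hx]
  simp only [Prod.mk_add_mk, add_zero, zero_add, sum_σ_row_eq_τ hx, sum_σ_col_eq_β hx,
    sum_ψ_row_eq_t hx, sum_ψ_col_eq_b hx]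

theorem σ_nonneg_of_mem_stmt8P (hx : (ζ, χ, ρ, τ, β, σ, t, b, ψ) ∈ stmt8P i j N) (k l : ℤ) :
    0 ≤ σ k l := by
  obtain ⟨hσ0, hσ, -⟩ := hx
  by_cases h : i ≤ k ∧ k ≤ j - 1 ∧ i + 1 ≤ l ∧ l ≤ k + 1
  · exact hσ0 k l h.1 h.2.1 h.2.2.1 h.2.2.2
  · exact (hσ k l h).ge

theorem ψ_nonneg_of_mem_stmt8P (hx : (ζ, χ, ρ, τ, β, σ, t, b, ψ) ∈ stmt8P i j N) (n m : ℤ) :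
    0 ≤ ψ n m := by
  obtain ⟨-, -, hψ0, hψ, -⟩ := hx
  by_cases h : j + 1 ≤ n ∧ n ≤ N + 1 ∧ 0 ≤ m ∧ m ≤ i - 1
  · exact hψ0 n m h.1 h.2.1 h.2.2.1 h.2.2.2
  · exact (hψ n m h).ge

theorem sum_ψ_mul_condenserShare (hx : (ζ, χ, ρ, τ, β, σ, t, b, ψ) ∈ stmt8P i j N) (hi : 1 ≤ i) :
    ∑ p ∈ Finset.Icc (j + 1) (N + 1) ×ˢ Finset.Icc 0 (i - 1),
      ψ p.1 p.2 * (if p.2 = 0 then χ / b 0 else 0) = χ := by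
  obtain ⟨-, -, -, -, -, -, -, -, -, -, -, -, -, -, -, -, -, -, -, hχ0, hχb, -⟩ := id hx
  rw [Finset.sum_product_right' (f := fun n m => ψ n m * if m = 0 then χ / b 0 else 0)]
  simp_rw [← Finset.sum_mul, sum_ψ_col_eq_b hx, mul_ite, mul_zero]
  rw [Finset.sum_ite_eq', if_pos (Finset.mem_Icc.2 ⟨le_rfl, by omega⟩)]
  exact mul_div_cancel_of_imp' fun h => le_antisymm (h ▸ hχb) hχ0

theorem sum_ψ_mul_reboilerShare (hx : (ζ, χ, ρ, τ, β, σ, t, b, ψ) ∈ stmt8P i j N) (hjN : j ≤ N) :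
    ∑ p ∈ Finset.Icc (j + 1) (N + 1) ×ˢ Finset.Icc 0 (i - 1),
      ψ p.1 p.2 * (if p.1 = N + 1 then ρ / t (N + 1) else 0) = ρ := by
  obtain ⟨-, -, -, -, -, -, -, -, -, -, -, -, -, -, -, -, -, -, -, -, -, hρ0, hρt⟩ := id hx
  rw [Finset.sum_product' (f := fun n m => ψ n m * if n = N + 1 then ρ / t (N + 1) else 0)]
  simp_rw [← Finset.sum_mul, sum_ψ_row_eq_t hx, mul_ite, mul_zero]
  rw [Finset.sum_ite_eq', if_pos (Finset.mem_Icc.2 ⟨by omega, le_rfl⟩)]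
  exact mul_div_cancel_of_imp' fun h => le_antisymm (h ▸ hρt) hρ0

end MemStmt8P

theorem stmt8P_subset_convexHull {i j N : ℤ} (hi : 1 ≤ i) (hjN : j ≤ N) :
    stmt8P i j N ⊆ convexHull ℝ (stmt8E i j N) := by
  rintro ⟨ζ, χ, ρ, τ, β, σ, t, b, ψ⟩ hx
  obtain ⟨-, hσ, -, hψ, hψN, -, -, -, -, -, -, -, -, -, -, -, -, -, hζ1, hχ0, hχb, hρ0, hρt⟩ :=
    id hx
  -- If `b 0 = 0` then `χ / b 0` is the junk value `0`; this is harmless, as then `χ = 0`.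
  set u : ℤ → ℝ := fun m => if m = 0 then χ / b 0 else 0 with hu
  set v : ℤ → ℝ := fun n => if n = N + 1 then ρ / t (N + 1) else 0 with hv
  rw [eq_sum_splitVertex_add_sum_parentVertex hx (u := u) (v := v)
    (sum_ψ_mul_condenserShare hx hi) (sum_ψ_mul_reboilerShare hx hjN),
    sum_smul_parentVertex_eq_sum_boolWeight]
  refine sum_smul_add_sum_smul_mem_convexHull (Set.mem_insert _ _)
    (fun p _ => σ_nonneg_of_mem_stmt8P hx _ _)
    (fun q _ => mul_nonneg (ψ_nonneg_of_mem_stmt8P hx _ _) (mul_nonneg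
      (boolWeight_ite_div_nonneg hχ0 hχb _) (boolWeight_ite_div_nonneg hρ0 hρt _)))
    ?_ ?_ ?_
  · rw [sum_σ_eq_ζ hx, Finset.sum_product]
    simp_rw [← Finset.mul_sum, sum_boolWeight_mul_boolWeight, mul_one]
    exact (sum_ψ_eq_ζ hx).symm
  · rw [sum_σ_eq_ζ hx]
    exact hζ1
  · rintro ⟨k, l⟩ - ⟨⟨n, m⟩, c, d⟩ - hσkl hw
    simp only [mul_ne_zero_iff] at hw
    obtain ⟨hψnm, hc, hd⟩ := hw
    refine splitVertex_add_parentVertex_mem_stmt8E (not_imp_comm.1 (hσ k l) hσkl)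
      (not_imp_comm.1 (hψ n m) hψnm) ?_ ?_ ?_
    · rintro ⟨⟩
      exact hψnm hψN
    · rintro rfl
      by_contra hm
      exact hc (by simp [boolWeight, hu, hm])
    · rintro rfl
      by_contra hn
      exact hd (by simp [boolWeight, hv, hn])

theorem stmt8_general (i j N : ℤ) (hi : 1 ≤ i) (hjN : j ≤ N) :
    stmt8P i j N = convexHull ℝ (stmt8E i j N) :=
  (stmt8P_subset_convexHull hi hjN).antisymm
    (convexHull_min (stmt8E_subset_stmt8P i j N) (convex_stmt8P i j N))

/-- Proposition 5 of the paper: the combined polytope equals the convex hull of its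
integral extreme points. -/
theorem stmt8 (i j N : ℤ) (hi : 1 ≤ i) (hij : i < j) (hjN : j ≤ N) :
    stmt8P i j N = convexHull ℝ (stmt8E i j N) :=
  stmt8_general i j N hi hjN
end

section
/- Fix integers i ≥ 1, j and N with j ≤ N. Let S be the set of tuples (τ, β, ψ), with τ_n ∈ ℝ for j + 1 ≤ n ≤ N + 1, β_m ∈ ℝ for 0 ≤ m ≤ i − 1, and ψ_{n,m} ∈ ℝ for those n, m, satisfying: Σ_{m=0}^{i-1} ψ_{n,m} = τ_n for each n; Σ_{n=j+1}^{N+1} ψ_{n,m} = β_m for each m; ψ_{n,m} ≥ 0 for all (n, m); ψ_{N+1,0} = 0; Σ_{m=0}^{i-1} β_m = Σ_{n=j+1}^{N+1} τ_n; τ_n ≥ 0 for all n; and β_m ≥ 0 for all m. Then the projection of S onto the (τ, β) variables equals the set of (τ, β) with β_0 ≤ Σ_{n=j+1}^{N} τ_n, Σ_{m=0}^{i-1} β_m = Σ_{n=j+1}^{N+1} τ_n, τ_n ≥ 0 for all n, and β_m ≥ 0 for all m. -/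
/-!
A transport plan avoiding the arc `(a₀, b₀)` must route all of the demand `g b₀` through the
other sources, and each source ships at most its supply; hence `g b₀ ≤ ∑_{a ≠ a₀} f a`.
Conversely, under this inequality one first fills column `b₀` from the sources `a ≠ a₀`
proportionally to their supplies, and then ships the remaining supplies to the other columns
by the product plan `ψ a b = f a * g b / ∑ f`.
-/

open Finset

variable {ι κ : Type*}

structure IsTransportPlan (s : Finset ι) (t : Finset κ) (f : ι → ℝ) (g : κ → ℝ)
    (ψ : ι → κ → ℝ) : Prop where
  sum_row : ∀ a ∈ s, ∑ b ∈ t, ψ a b = f a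
  sum_col : ∀ b ∈ t, ∑ a ∈ s, ψ a b = g b
  nonneg : ∀ a ∈ s, ∀ b ∈ t, 0 ≤ ψ a b

namespace IsTransportPlan

variable {s : Finset ι} {t : Finset κ} {f : ι → ℝ} {g : κ → ℝ} {ψ : ι → κ → ℝ}

theorem apply_le (hψ : IsTransportPlan s t f g ψ) {a : ι} {b : κ} (ha : a ∈ s) (hb : b ∈ t) :
    ψ a b ≤ f a :=
  hψ.sum_row a ha ▸ single_le_sum (hψ.nonneg a ha) hb

theorem le_sum_erase [DecidableEq ι] (hψ : IsTransportPlan s t f g ψ) {a₀ : ι} {b₀ : κ}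
    (hb₀ : b₀ ∈ t) (h : ψ a₀ b₀ = 0) : g b₀ ≤ ∑ a ∈ s.erase a₀, f a :=
  calc g b₀ = ∑ a ∈ s.erase a₀, ψ a b₀ := by
        rw [sum_erase s (f := fun a => ψ a b₀) h, hψ.sum_col b₀ hb₀]
    _ ≤ ∑ a ∈ s.erase a₀, f a := sum_le_sum fun a ha => hψ.apply_le (mem_of_mem_erase ha) hb₀

theorem update_col [DecidableEq κ] {x : ι → ℝ} {b₀ : κ}
    (hψ : IsTransportPlan s (t.erase b₀) (f - x) g ψ) (hb₀ : b₀ ∈ t) (hx : ∀ a ∈ s, 0 ≤ x a)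
    (hxs : ∑ a ∈ s, x a = g b₀) :
    IsTransportPlan s t f g (fun a => Function.update (ψ a) b₀ (x a)) where
  sum_row a ha := by
    rw [← add_sum_erase t _ hb₀, Function.update_self,
      sum_congr rfl fun b hb => Function.update_of_ne (ne_of_mem_erase hb) _ _,
      hψ.sum_row a ha, Pi.sub_apply, add_sub_cancel]
  sum_col b hb := by
    rcases eq_or_ne b b₀ with rfl | hne
    · simpa using hxs
    · simpa [hne] using hψ.sum_col b (mem_erase.2 ⟨hne, hb⟩)
  nonneg a ha b hb := by
    rcases eq_or_ne b b₀ with rfl | hne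
    · simpa using hx a ha
    · simpa [hne] using hψ.nonneg a ha b (mem_erase.2 ⟨hne, hb⟩)

end IsTransportPlan

variable {s : Finset ι} {t : Finset κ} {f : ι → ℝ} {g : κ → ℝ}

theorem exists_isTransportPlan (hf : ∀ a ∈ s, 0 ≤ f a) (hg : ∀ b ∈ t, 0 ≤ g b)
    (hfg : ∑ a ∈ s, f a = ∑ b ∈ t, g b) : ∃ ψ, IsTransportPlan s t f g ψ := by
  set S := ∑ a ∈ s, f a
  -- if `S = 0` then `f` and `g` vanish, and the junk value `_ / 0 = 0` is still a valid plan
  refine ⟨fun a b => f a * g b / S, ⟨fun a ha => ?_, fun b hb => ?_, fun a ha b hb => ?_⟩⟩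
  · rcases eq_or_ne S 0 with hS | hS
    · simp [(sum_eq_zero_iff_of_nonneg hf).1 hS a ha]
    · rw [← sum_div, ← mul_sum, ← hfg, mul_div_cancel_right₀ _ hS]
  · rcases eq_or_ne S 0 with hS | hS
    · simp [(sum_eq_zero_iff_of_nonneg hg).1 (hfg ▸ hS) b hb]
    · rw [← sum_div, ← sum_mul, mul_div_cancel_left₀ _ hS]
  · exact div_nonneg (mul_nonneg (hf a ha) (hg b hb)) (sum_nonneg hf)

theorem exists_le_sum_eq (hf : ∀ a ∈ s, 0 ≤ f a) {c : ℝ} (hc₀ : 0 ≤ c)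
    (hc : c ≤ ∑ a ∈ s, f a) :
    ∃ x : ι → ℝ, (∀ a ∈ s, 0 ≤ x a ∧ x a ≤ f a) ∧ (∀ a ∉ s, x a = 0) ∧ ∑ a ∈ s, x a = c := by
  classical
  set S := ∑ a ∈ s, f a
  have hcS : c / S ≤ 1 := div_le_one_of_le₀ hc (hc₀.trans hc)
  refine ⟨fun a => if a ∈ s then f a * (c / S) else 0, fun a ha => ?_, fun a ha => if_neg ha, ?_⟩
  · dsimp only
    rw [if_pos ha]
    exact ⟨mul_nonneg (hf a ha) (div_nonneg hc₀ (hc₀.trans hc)),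
      mul_le_of_le_one_right (hf a ha) hcS⟩
  · rw [sum_ite_mem, inter_self, ← sum_mul]
    rcases eq_or_ne S 0 with hS | hS
    · rw [hS, div_zero, mul_zero]
      exact (le_antisymm (hS ▸ hc) hc₀).symm
    · exact mul_div_cancel₀ c hS

theorem exists_isTransportPlan_apply_eq_zero [DecidableEq ι] [DecidableEq κ] {a₀ : ι} {b₀ : κ}
    (hb₀ : b₀ ∈ t) (hf : ∀ a ∈ s, 0 ≤ f a) (hg : ∀ b ∈ t, 0 ≤ g b)
    (hfg : ∑ a ∈ s, f a = ∑ b ∈ t, g b) (hle : g b₀ ≤ ∑ a ∈ s.erase a₀, f a) :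
    ∃ ψ, IsTransportPlan s t f g ψ ∧ ψ a₀ b₀ = 0 := by
  obtain ⟨x, hx, hx_out, hxs⟩ :=
    exists_le_sum_eq (fun a ha => hf a (mem_of_mem_erase ha)) (hg b₀ hb₀) hle
  have hx₀ : x a₀ = 0 := hx_out a₀ (notMem_erase a₀ s)
  have hx_le : ∀ a ∈ s, 0 ≤ x a ∧ x a ≤ f a := by
    intro a ha
    rcases eq_or_ne a a₀ with rfl | hne
    · exact ⟨hx₀.ge, hx₀ ▸ hf a ha⟩
    · exact hx a (mem_erase.2 ⟨hne, ha⟩)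
  have hxs' : ∑ a ∈ s, x a = g b₀ := by rw [← sum_erase s hx₀, hxs]
  obtain ⟨φ, hφ⟩ := exists_isTransportPlan (s := s) (t := t.erase b₀) (f := f - x) (g := g)
    (fun a ha => sub_nonneg.2 (hx_le a ha).2) (fun b hb => hg b (mem_of_mem_erase hb))
    (by rw [Pi.sub_def, sum_sub_distrib, hxs', hfg, ← add_sum_erase t g hb₀,
      add_sub_cancel_left])
  exact ⟨_, hφ.update_col hb₀ (fun a ha => (hx_le a ha).1) hxs', by simpa using hx₀⟩

theorem exists_isTransportPlan_apply_eq_zero_iff [DecidableEq ι] [DecidableEq κ] {a₀ : ι}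
    {b₀ : κ} (hb₀ : b₀ ∈ t) (hf : ∀ a ∈ s, 0 ≤ f a) (hg : ∀ b ∈ t, 0 ≤ g b)
    (hfg : ∑ a ∈ s, f a = ∑ b ∈ t, g b) :
    (∃ ψ, IsTransportPlan s t f g ψ ∧ ψ a₀ b₀ = 0) ↔ g b₀ ≤ ∑ a ∈ s.erase a₀, f a :=
  ⟨fun ⟨_, hψ, h⟩ => hψ.le_sum_erase hb₀ h,
    exists_isTransportPlan_apply_eq_zero hb₀ hf hg hfg⟩

theorem stmt9_general (i j N : ℤ) (hi : 1 ≤ i) :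
    {tb : (ℤ → ℝ) × (ℤ → ℝ) |
      ∃ ψ : ℤ → ℤ → ℝ,
        (∀ n, j + 1 ≤ n → n ≤ N + 1 → ∑ m ∈ Finset.Icc 0 (i - 1), ψ n m = tb.1 n) ∧
        (∀ m, 0 ≤ m → m ≤ i - 1 → ∑ n ∈ Finset.Icc (j + 1) (N + 1), ψ n m = tb.2 m) ∧
        (∀ n m, j + 1 ≤ n → n ≤ N + 1 → 0 ≤ m → m ≤ i - 1 → 0 ≤ ψ n m) ∧
        ψ (N + 1) 0 = 0 ∧
        (∑ m ∈ Finset.Icc 0 (i - 1), tb.2 m = ∑ n ∈ Finset.Icc (j + 1) (N + 1), tb.1 n) ∧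
        (∀ n, j + 1 ≤ n → n ≤ N + 1 → 0 ≤ tb.1 n) ∧
        (∀ m, 0 ≤ m → m ≤ i - 1 → 0 ≤ tb.2 m)} =
    {tb : (ℤ → ℝ) × (ℤ → ℝ) |
      tb.2 0 ≤ ∑ n ∈ Finset.Icc (j + 1) N, tb.1 n ∧
      (∑ m ∈ Finset.Icc 0 (i - 1), tb.2 m = ∑ n ∈ Finset.Icc (j + 1) (N + 1), tb.1 n) ∧
      (∀ n, j + 1 ≤ n → n ≤ N + 1 → 0 ≤ tb.1 n) ∧
      (∀ m, 0 ≤ m → m ≤ i - 1 → 0 ≤ tb.2 m)} := by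
  ext ⟨τ, β⟩
  have h0 : (0 : ℤ) ∈ Icc 0 (i - 1) := mem_Icc.2 ⟨le_rfl, by omega⟩
  have key := exists_isTransportPlan_apply_eq_zero_iff (s := Icc (j + 1) (N + 1)) (f := τ)
    (g := β) (a₀ := N + 1) h0
  simp only [Icc_erase_right, Ico_add_one_right_eq_Icc, mem_Icc, and_imp] at key
  simp only [Set.mem_ofPred_eq]
  constructor
  · rintro ⟨ψ, hrow, hcol, hpos, hzero, hbal, hτ, hβ⟩
    refine ⟨(key hτ hβ hbal.symm).1 ⟨ψ, ⟨?_, ?_, ?_⟩, hzero⟩, hbal, hτ, hβ⟩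
    · simpa only [mem_Icc, and_imp] using hrow
    · simpa only [mem_Icc, and_imp] using hcol
    · simp only [mem_Icc]
      exact fun n hn m hm => hpos n m hn.1 hn.2 hm.1 hm.2
  · rintro ⟨hle, hbal, hτ, hβ⟩
    obtain ⟨ψ, hψ, hzero⟩ := (key hτ hβ hbal.symm).2 hle
    exact ⟨ψ, fun n h₁ h₂ => hψ.sum_row n (mem_Icc.2 ⟨h₁, h₂⟩),
      fun m h₁ h₂ => hψ.sum_col m (mem_Icc.2 ⟨h₁, h₂⟩),
      fun n m h₁ h₂ h₃ h₄ => hψ.nonneg n (mem_Icc.2 ⟨h₁, h₂⟩) m (mem_Icc.2 ⟨h₃, h₄⟩),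
      hzero, hbal, hτ, hβ⟩

/-- Proposition 6 of the paper: the projection, onto the `(τ, β)` variables, of the set
of nonnegative bipartite transshipments `ψ` with prescribed row sums `τ` and column sums
`β` and the arc `(N+1, 0)` forbidden, is exactly the set cut out by
`β_0 ≤ Σ_{n=j+1}^{N} τ_n` together with the balance and nonnegativity constraints. -/
theorem stmt9 (i j N : ℤ) (hi : 1 ≤ i) (hjN : j ≤ N) :
    {tb : (ℤ → ℝ) × (ℤ → ℝ) |
      ∃ ψ : ℤ → ℤ → ℝ,
        (∀ n, j + 1 ≤ n → n ≤ N + 1 → ∑ m ∈ Finset.Icc 0 (i - 1), ψ n m = tb.1 n) ∧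
        (∀ m, 0 ≤ m → m ≤ i - 1 → ∑ n ∈ Finset.Icc (j + 1) (N + 1), ψ n m = tb.2 m) ∧
        (∀ n m, j + 1 ≤ n → n ≤ N + 1 → 0 ≤ m → m ≤ i - 1 → 0 ≤ ψ n m) ∧
        ψ (N + 1) 0 = 0 ∧
        (∑ m ∈ Finset.Icc 0 (i - 1), tb.2 m = ∑ n ∈ Finset.Icc (j + 1) (N + 1), tb.1 n) ∧
        (∀ n, j + 1 ≤ n → n ≤ N + 1 → 0 ≤ tb.1 n) ∧
        (∀ m, 0 ≤ m → m ≤ i - 1 → 0 ≤ tb.2 m)} =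
    {tb : (ℤ → ℝ) × (ℤ → ℝ) |
      tb.2 0 ≤ ∑ n ∈ Finset.Icc (j + 1) N, tb.1 n ∧
      (∑ m ∈ Finset.Icc 0 (i - 1), tb.2 m = ∑ n ∈ Finset.Icc (j + 1) (N + 1), tb.1 n) ∧
      (∀ n, j + 1 ≤ n → n ≤ N + 1 → 0 ≤ tb.1 n) ∧
      (∀ m, 0 ≤ m → m ≤ i - 1 → 0 ≤ tb.2 m)} :=
  stmt9_general i j N hi
end

section
/- Let α1, α2 ∈ ℝ, let B = [f1lo, f1up] × [f2lo, f2up] × [Υlo, Υup] × [θlo, θup] ⊂ ℝ^4 with θlo < θup, and let Ȟ1 ≤ Ĥ1 and Ȟ2 ≤ Ĥ2 be reals. Define S_std = {(f1, f2, Υ, θ, H1, H2) ∈ B × ℝ^2 : α1·H1 − α2·H2 ≤ Υ, Ȟi ≤ Hi ≤ Ĥi for i = 1, 2}. Let C ⊆ B × ℝ^5 be a set of points (f1, f2, Υ, θ, H1, H2, G1, G2, W), and define S_RLT = {p ∈ C : α1·(G1 − θlo·H1) − α2·(G2 − θlo·H2) ≤ W − Υ·θlo and α1·(θup·H1 − G1)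 − α2·(θup·H2 − G2) ≤ Υ·θup − W}. Let C′ ⊆ B × ℝ^3 be a set of points (f1, f2, Υ, θ, H1, H2, W), and define S_RDLT = {p ∈ C′ : α1·(α1·H1 − f1 − θlo·H1) − α2·(α2·H2 + f2 − θlo·H2) ≤ W − Υ·θlo and α1·(θup·H1 − α1·H1 + f1) − α2·(θup·H2 − f2 − α2·H2) ≤ Υ·θup − W}. Assume: (H1) C contains every point (f1, f2, Υ, θ, H1, H2, G1, G2, W) such that (f1, f2, Υ, θ, H1, H2, W) ∈ C′, G1 = α1·H1 − f1 and G2 = α2·H2 + f2; and (H2) the projection of C onto the coordinates (H1, H2) is contained in [Ȟ1, Ĥ1] × [Ȟ2, Ĥ2]. Then: (a) the projection of S_RLT onto (f1, f2, Υ, θ, H1, H2) is contained in S_std; and (b) the affine lifting {(f1, f2, Υ, θ, H1, H2, G1, G2, W) : (f1, f2, Υ, θ, H1, H2, W) ∈ S_RDLT, G1 = α1·H1 − f1, G2 = α2·H2 + f2} is contained in S_RLT. -/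
/-!
Adding the two RLT inequalities cancels the linearization variables `G₁, G₂, W` and leaves
`(θup − θlo)·(α₁H₁ − α₂H₂) ≤ (θup − θlo)·Υ`; since `θlo < θup` this is the Underwood
inequality of `S_std`. The RDLT inequalities are the RLT inequalities with
`G₁ = α₁H₁ − f₁`, `G₂ = α₂H₂ + f₂` substituted, so the lifting of `S_RDLT` lands in `S_RLT`.
-/

lemma le_of_rlt_bounds {x y g w l u : ℝ} (hlu : l < u)
    (hlo : g - l * x ≤ w - y * l) (hup : u * x - g ≤ y * u - w) : x ≤ y := by
  have hsum : (u - l) * x ≤ (u - l) * y := by linear_combination hlo + hup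
  exact le_of_mul_le_mul_left hsum (sub_pos.mpr hlu)

theorem stmt10_general (a1 a2 f1lo f1up f2lo f2up Ulo Uup tlo tup H1lo H1up H2lo H2up : ℝ)
    (ht : tlo < tup)
    (C : ℝ → ℝ → ℝ → ℝ → ℝ → ℝ → ℝ → ℝ → ℝ → Prop)
    (C' : ℝ → ℝ → ℝ → ℝ → ℝ → ℝ → ℝ → Prop)
    -- C ⊆ B × ℝ⁵
    (hCB : ∀ f1 f2 U t H1 H2 G1 G2 W, C f1 f2 U t H1 H2 G1 G2 W →
      f1 ∈ Set.Icc f1lo f1up ∧ f2 ∈ Set.Icc f2lo f2up ∧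
      U ∈ Set.Icc Ulo Uup ∧ t ∈ Set.Icc tlo tup)
    -- (H1): C contains the affine lifting of C'
    (hlift : ∀ f1 f2 U t H1 H2 W, C' f1 f2 U t H1 H2 W →
      C f1 f2 U t H1 H2 (a1 * H1 - f1) (a2 * H2 + f2) W)
    -- (H2): the projection of C onto (H1, H2) lies in the boxes
    (hproj : ∀ f1 f2 U t H1 H2 G1 G2 W, C f1 f2 U t H1 H2 G1 G2 W →
      H1 ∈ Set.Icc H1lo H1up ∧ H2 ∈ Set.Icc H2lo H2up) :
    -- (a): proj of S_RLT ⊆ S_std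
    (∀ f1 f2 U t H1 H2 G1 G2 W, C f1 f2 U t H1 H2 G1 G2 W →
      a1 * (G1 - tlo * H1) - a2 * (G2 - tlo * H2) ≤ W - U * tlo →
      a1 * (tup * H1 - G1) - a2 * (tup * H2 - G2) ≤ U * tup - W →
      (f1 ∈ Set.Icc f1lo f1up ∧ f2 ∈ Set.Icc f2lo f2up ∧
       U ∈ Set.Icc Ulo Uup ∧ t ∈ Set.Icc tlo tup ∧
       a1 * H1 - a2 * H2 ≤ U ∧
       H1 ∈ Set.Icc H1lo H1up ∧ H2 ∈ Set.Icc H2lo H2up)) ∧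
    -- (b): affine lifting of S_RDLT ⊆ S_RLT
    (∀ f1 f2 U t H1 H2 W, C' f1 f2 U t H1 H2 W →
      a1 * (a1 * H1 - f1 - tlo * H1) - a2 * (a2 * H2 + f2 - tlo * H2) ≤ W - U * tlo →
      a1 * (tup * H1 - a1 * H1 + f1) - a2 * (tup * H2 - f2 - a2 * H2) ≤ U * tup - W →
      (C f1 f2 U t H1 H2 (a1 * H1 - f1) (a2 * H2 + f2) W ∧
       a1 * ((a1 * H1 - f1) - tlo * H1) - a2 * ((a2 * H2 + f2) - tlo * H2) ≤ W - U * tlo ∧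
       a1 * (tup * H1 - (a1 * H1 - f1)) - a2 * (tup * H2 - (a2 * H2 + f2)) ≤ U * tup - W)) := by
  constructor
  · intro f1 f2 U t H1 H2 G1 G2 W hC hlo hup
    obtain ⟨hf1, hf2, hU, htm⟩ := hCB f1 f2 U t H1 H2 G1 G2 W hC
    obtain ⟨hH1m, hH2m⟩ := hproj f1 f2 U t H1 H2 G1 G2 W hC
    have hunderwood : a1 * H1 - a2 * H2 ≤ U :=
      le_of_rlt_bounds (g := a1 * G1 - a2 * G2) (w := W) ht
        (by linear_combination hlo) (by linear_combination hup)
    exact ⟨hf1, hf2, hU, htm, hunderwood, hH1m, hH2m⟩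
  · intro f1 f2 U t H1 H2 W hC' hlo hup
    exact ⟨hlift f1 f2 U t H1 H2 W hC', hlo, by linear_combination hup⟩

/-- Proposition 7 of the paper, comparing the standard relaxation `S_std`, the naive RLT
relaxation `S_RLT` (over a set `C` with linearization variables `G₁, G₂, W`), and the
RDLT relaxation `S_RDLT` (over a set `C'`): (a) the projection of `S_RLT` onto
`(f₁, f₂, Υ, θ, H₁, H₂)` lies in `S_std`, and (b) the affine lifting
`G₁ = α₁H₁ − f₁`, `G₂ = α₂H₂ + f₂` of `S_RDLT` lies in `S_RLT`. -/
theorem stmt10 (a1 a2 f1lo f1up f2lo f2up Ulo Uup tlo tup H1lo H1up H2lo H2up : ℝ)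
    (ht : tlo < tup) (hH1 : H1lo ≤ H1up) (hH2 : H2lo ≤ H2up)
    (C : ℝ → ℝ → ℝ → ℝ → ℝ → ℝ → ℝ → ℝ → ℝ → Prop)
    (C' : ℝ → ℝ → ℝ → ℝ → ℝ → ℝ → ℝ → Prop)
    -- C ⊆ B × ℝ⁵
    (hCB : ∀ f1 f2 U t H1 H2 G1 G2 W, C f1 f2 U t H1 H2 G1 G2 W →
      f1 ∈ Set.Icc f1lo f1up ∧ f2 ∈ Set.Icc f2lo f2up ∧
      U ∈ Set.Icc Ulo Uup ∧ t ∈ Set.Icc tlo tup)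
    -- C' ⊆ B × ℝ³
    (hC'B : ∀ f1 f2 U t H1 H2 W, C' f1 f2 U t H1 H2 W →
      f1 ∈ Set.Icc f1lo f1up ∧ f2 ∈ Set.Icc f2lo f2up ∧
      U ∈ Set.Icc Ulo Uup ∧ t ∈ Set.Icc tlo tup)
    -- (H1): C contains the affine lifting of C'
    (hlift : ∀ f1 f2 U t H1 H2 W, C' f1 f2 U t H1 H2 W →
      C f1 f2 U t H1 H2 (a1 * H1 - f1) (a2 * H2 + f2) W)
    -- (H2): the projection of C onto (H1, H2) lies in the boxes
    (hproj : ∀ f1 f2 U t H1 H2 G1 G2 W, C f1 f2 U t H1 H2 G1 G2 W →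
      H1 ∈ Set.Icc H1lo H1up ∧ H2 ∈ Set.Icc H2lo H2up) :
    -- (a): proj of S_RLT ⊆ S_std
    (∀ f1 f2 U t H1 H2 G1 G2 W, C f1 f2 U t H1 H2 G1 G2 W →
      a1 * (G1 - tlo * H1) - a2 * (G2 - tlo * H2) ≤ W - U * tlo →
      a1 * (tup * H1 - G1) - a2 * (tup * H2 - G2) ≤ U * tup - W →
      (f1 ∈ Set.Icc f1lo f1up ∧ f2 ∈ Set.Icc f2lo f2up ∧
       U ∈ Set.Icc Ulo Uup ∧ t ∈ Set.Icc tlo tup ∧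
       a1 * H1 - a2 * H2 ≤ U ∧
       H1 ∈ Set.Icc H1lo H1up ∧ H2 ∈ Set.Icc H2lo H2up)) ∧
    -- (b): affine lifting of S_RDLT ⊆ S_RLT
    (∀ f1 f2 U t H1 H2 W, C' f1 f2 U t H1 H2 W →
      a1 * (a1 * H1 - f1 - tlo * H1) - a2 * (a2 * H2 + f2 - tlo * H2) ≤ W - U * tlo →
      a1 * (tup * H1 - a1 * H1 + f1) - a2 * (tup * H2 - f2 - a2 * H2) ≤ U * tup - W →
      (C f1 f2 U t H1 H2 (a1 * H1 - f1) (a2 * H2 + f2) W ∧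
       a1 * ((a1 * H1 - f1) - tlo * H1) - a2 * ((a2 * H2 + f2) - tlo * H2) ≤ W - U * tlo ∧
       a1 * (tup * H1 - (a1 * H1 - f1)) - a2 * (tup * H2 - (a2 * H2 + f2)) ≤ U * tup - W)) :=
  stmt10_general a1 a2 f1lo f1up f2lo f2up Ulo Uup tlo tup H1lo H1up H2lo H2up ht C C' hCB hlift
    hproj
end

section
/- Let v^1, …, v^m ∈ ℝ^n and let X = conv{v^1, …, v^m} be the polytope they span. Let y^lo < y^up be reals and let g : ℝ → ℝ be continuous and convex on [y^lo, y^up]. Define S = {(x, y, z, u) ∈ X × [y^lo, y^up] × ℝ^n × ℝ^n : z_j = x_j·g(y) and u_j = x_j·y for all j = 1, …, n}. Then the convex hull of S equals the projection onto the (x, y, z, u) coordinates of the set of tuples (x, y, z, u, y^1, …, y^m, w^1, …, w^m, w, λ^1, …, λ^m) satisfying: w^i ≥ g*(λ^i, y^i) for i = 1, …, m; w^i ≤ λ^i·g(y^lo) + ((g(y^up) − g(y^lo))/(y^up − y^lo))·(y^i − λ^i·y^lo) for i = 1, …, m; λ^i·y^lo ≤ y^i ≤ λ^i·y^up for i = 1,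 …, m; z = Σ_{i=1}^{m} w^i·v^i; u = Σ_{i=1}^{m} y^i·v^i; w = Σ_{i=1}^{m} w^i; y = Σ_{i=1}^{m} y^i; x = Σ_{i=1}^{m} λ^i·v^i; and (λ^1, …, λ^m) ∈ Δ^m. -/
/-!
Every block triple `(λⁱ, yⁱ, wⁱ)` of the lifted system lies in the cone over the region
`{(1, t, s) | t ∈ [ylo, yup], g t ≤ s ≤ secant t}`. Because the perspective of a convex function
is positively homogeneous and subadditive, this cone is convex, hence so is the lifted set; it
contains each point `(x, y, g(y) x, y x)` of `S` (write `x = Σ λⁱ vⁱ` and take the blocks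
`λⁱ (1, y, g y)`), so it contains `conv S`. Conversely, a point of the lifted set is the
`λ`-weighted sum of points `(vⁱ, t, s vⁱ, t vⁱ)` with `g t ≤ s ≤ secant t`; such a point lies on
the segment from the point of `S` over `t` to the secant point, which is itself a convex
combination of the points of `S` over `ylo` and `yup`.
-/

/-- The (totalized) perspective function of `g` on an interval: `g*(l, t) = l·g(t/l)`
for `l > 0` (and `0` at `l = 0`, consistent with `g*(0,0) = 0`). On the feasible region
of Proposition 8 the constraints force `(l, t)` into the domain of the perspective, so
this total extension agrees with the paper's partial definition there. -/
noncomputable def persp (g : ℝ → ℝ) (l t : ℝ) : ℝ :=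
  if 0 < l then l * g (t / l) else 0

open Set

lemma ConvexOn.le_secant {g : ℝ → ℝ} {a b : ℝ} (hg : ConvexOn ℝ (Icc a b) g) {t : ℝ}
    (ht : t ∈ Icc a b) : g t ≤ g a + (g b - g a) / (b - a) * (t - a) := by
  rcases ht.1.eq_or_lt with rfl | hat
  · simp
  have hab := hat.trans_le ht.2
  have hslope := hg.secant_mono (left_mem_Icc.2 hab.le) ht (right_mem_Icc.2 hab.le) hat.ne'
    hab.ne' ht.2
  rw [div_le_iff₀ (sub_pos.2 hat)] at hslope
  linarith

@[simp]
lemma persp_one (g : ℝ → ℝ) (t : ℝ) : persp g 1 t = g t := by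
  simp [persp]

lemma persp_mul_mul (g : ℝ → ℝ) {c : ℝ} (hc : 0 ≤ c) (l t : ℝ) :
    persp g (c * l) (c * t) = c * persp g l t := by
  rcases hc.eq_or_lt with rfl | hc
  · simp [persp]
  by_cases hl : 0 < l
  · rw [persp, persp, if_pos (mul_pos hc hl), if_pos hl, mul_div_mul_left _ _ hc.ne']
    ring
  · rw [persp, persp, if_neg hl, if_neg (by nlinarith), mul_zero]

lemma persp_add_le {g : ℝ → ℝ} {a b : ℝ} (hg : ConvexOn ℝ (Icc a b) g) {l₁ y₁ l₂ y₂ : ℝ}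
    (hl₁ : 0 ≤ l₁) (hl₂ : 0 ≤ l₂)
    (h₁ : y₁ ∈ Icc (l₁ * a) (l₁ * b)) (h₂ : y₂ ∈ Icc (l₂ * a) (l₂ * b)) :
    persp g (l₁ + l₂) (y₁ + y₂) ≤ persp g l₁ y₁ + persp g l₂ y₂ := by
  rcases hl₁.eq_or_lt with rfl | hl₁
  · obtain rfl : y₁ = 0 := by simpa using h₁
    simp [persp]
  rcases hl₂.eq_or_lt with rfl | hl₂
  · obtain rfl : y₂ = 0 := by simpa using h₂
    simp [persp]
  have hl := add_pos hl₁ hl₂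
  have ht₁ : y₁ / l₁ ∈ Icc a b := ⟨(le_div_iff₀ hl₁).2 (by linarith [h₁.1]),
    (div_le_iff₀ hl₁).2 (by linarith [h₁.2])⟩
  have ht₂ : y₂ / l₂ ∈ Icc a b := ⟨(le_div_iff₀ hl₂).2 (by linarith [h₂.1]),
    (div_le_iff₀ hl₂).2 (by linarith [h₂.2])⟩
  have hconv := hg.2 ht₁ ht₂ (div_nonneg hl₁.le hl.le) (div_nonneg hl₂.le hl.le)
    (by field_simp)
  simp only [smul_eq_mul] at hconv
  calc persp g (l₁ + l₂) (y₁ + y₂)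
      = (l₁ + l₂) * g (l₁ / (l₁ + l₂) * (y₁ / l₁) + l₂ / (l₁ + l₂) * (y₂ / l₂)) := by
        rw [persp, if_pos hl]
        congr 2
        field_simp
    _ ≤ (l₁ + l₂) * (l₁ / (l₁ + l₂) * g (y₁ / l₁) + l₂ / (l₁ + l₂) * g (y₂ / l₂)) := by
        gcongr
    _ = persp g l₁ y₁ + persp g l₂ y₂ := by
        rw [persp, persp, if_pos hl₁, if_pos hl₂]
        field_simp

/-- The block constraints on `(λⁱ, yⁱ, wⁱ)`: a convex cone whose slice at `λ = 1` is the region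
between the graph of `g` on `[a, b]` and its secant. -/
def perspCone (g : ℝ → ℝ) (a b : ℝ) : Set (ℝ × ℝ × ℝ) :=
  {q | 0 ≤ q.1 ∧ q.1 * a ≤ q.2.1 ∧ q.2.1 ≤ q.1 * b ∧ persp g q.1 q.2.1 ≤ q.2.2 ∧
    q.2.2 ≤ q.1 * g a + (g b - g a) / (b - a) * (q.2.1 - q.1 * a)}

namespace perspCone

variable {g : ℝ → ℝ} {a b : ℝ}

lemma mk_one_mem_iff {t s : ℝ} :
    ((1, t, s) ∈ perspCone g a b) ↔
      t ∈ Icc a b ∧ g t ≤ s ∧ s ≤ g a + (g b - g a) / (b - a) * (t - a) := by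
  simp [perspCone, and_assoc]

lemma smul_mem {q : ℝ × ℝ × ℝ} (hq : q ∈ perspCone g a b) {c : ℝ} (hc : 0 ≤ c) :
    c • q ∈ perspCone g a b := by
  obtain ⟨hl, hya, hyb, hpw, hws⟩ := hq
  simp only [perspCone, mem_ofPred_eq, Prod.smul_fst, Prod.smul_snd, smul_eq_mul,
    persp_mul_mul g hc]
  refine ⟨mul_nonneg hc hl, ?_, ?_, mul_le_mul_of_nonneg_left hpw hc, ?_⟩ <;>
    nlinarith [mul_le_mul_of_nonneg_left hya hc, mul_le_mul_of_nonneg_left hyb hc,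
      mul_le_mul_of_nonneg_left hws hc]

lemma add_mem (hg : ConvexOn ℝ (Icc a b) g) {q₁ q₂ : ℝ × ℝ × ℝ} (hq₁ : q₁ ∈ perspCone g a b)
    (hq₂ : q₂ ∈ perspCone g a b) : q₁ + q₂ ∈ perspCone g a b := by
  obtain ⟨hl₁, hya₁, hyb₁, hpw₁, hws₁⟩ := hq₁
  obtain ⟨hl₂, hya₂, hyb₂, hpw₂, hws₂⟩ := hq₂
  have hp := persp_add_le hg hl₁ hl₂ ⟨hya₁, hyb₁⟩ ⟨hya₂, hyb₂⟩
  simp only [perspCone, mem_ofPred_eq, Prod.fst_add, Prod.snd_add]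
  refine ⟨add_nonneg hl₁ hl₂, ?_, ?_, hp.trans (add_le_add hpw₁ hpw₂), ?_⟩ <;> linarith

lemma exists_eq_smul (hab : a ≤ b) {q : ℝ × ℝ × ℝ} (hq : q ∈ perspCone g a b) :
    ∃ t s, (1, t, s) ∈ perspCone g a b ∧ q = q.1 • (1, t, s) := by
  obtain ⟨l, y, w⟩ := q
  rcases hq.1.eq_or_lt with rfl | hl
  · obtain rfl : y = 0 := le_antisymm (by simpa using hq.2.2.1) (by simpa using hq.2.1)
    have hw : w = 0 := by
      obtain ⟨-, -, -, hpw, hws⟩ := hq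
      simp only [persp, lt_irrefl, if_false] at hpw hws
      linarith
    exact ⟨a, g a, mk_one_mem_iff.2 ⟨left_mem_Icc.2 hab, le_rfl, by simp⟩, by simp [hw]⟩
  refine ⟨y / l, w / l, ?_, ?_⟩
  · convert smul_mem hq (inv_nonneg.2 hl.le) using 1
    simp [field]
  · simp [field]

end perspCone

section Hull

variable {ι E : Type*} [Fintype ι] [AddCommGroup E] [Module ℝ E]

lemma exists_mem_stdSimplex_sum_smul_eq {v : ι → E} {x : E} (hx : x ∈ convexHull ℝ (range v)) :
    ∃ l ∈ stdSimplex ℝ ι, ∑ i, l i • v i = x := by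
  classical
  have hsub : convexHull ℝ (range v) ⊆ Fintype.linearCombination ℝ v '' stdSimplex ℝ ι :=
    convexHull_min (range_subset_iff.2 fun i => ⟨Pi.single i 1, single_mem_stdSimplex ℝ i, by simp⟩)
      ((convex_stdSimplex ℝ ι).linear_image _)
  simpa [Fintype.linearCombination_apply] using hsub hx

/-- The point of `S` over `(x, y)` is `liftMap x (1, y, g y)`, and block `i` of the lifted system
contributes `liftMap (v i) (λⁱ, yⁱ, wⁱ)` to `(x, y, z, u)`. -/
def liftMap (x : E) : ℝ × ℝ × ℝ →ₗ[ℝ] E × ℝ × E × E where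
  toFun q := (q.1 • x, q.2.1, q.2.2 • x, q.2.1 • x)
  map_add' q r := by simp [add_smul]
  map_smul' c q := by simp [smul_smul]

lemma liftMap_apply (x : E) (q : ℝ × ℝ × ℝ) :
    liftMap x q = (q.1 • x, q.2.1, q.2.2 • x, q.2.1 • x) := rfl

lemma liftMap_sum_smul {v : ι → E} {l : ι → ℝ} (hl : ∑ i, l i = 1) (q : ℝ × ℝ × ℝ) :
    liftMap (∑ i, l i • v i) q = ∑ i, l i • liftMap (v i) q := by
  simp [liftMap_apply, Prod.ext_iff, Prod.fst_sum, Prod.snd_sum, Finset.smul_sum, smul_smul,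
    ← Finset.sum_mul, hl]
  simp only [mul_comm, and_self]

def graphSet (X : Set E) (g : ℝ → ℝ) (a b : ℝ) : Set (E × ℝ × E × E) :=
  {p | p.1 ∈ X ∧ p.2.1 ∈ Icc a b ∧ p.2.2.1 = g p.2.1 • p.1 ∧ p.2.2.2 = p.2.1 • p.1}

/-- The projection of the lifted system, with block `i` the triple `q i = (λⁱ, yⁱ, wⁱ)`. -/
def liftedSet (v : ι → E) (g : ℝ → ℝ) (a b : ℝ) : Set (E × ℝ × E × E) :=
  {p | ∃ q : ι → ℝ × ℝ × ℝ, (∀ i, q i ∈ perspCone g a b) ∧ ∑ i, (q i).1 = 1 ∧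
    ∑ i, liftMap (v i) (q i) = p}

variable {X : Set E} {g : ℝ → ℝ} {a b : ℝ}

lemma liftMap_mem_graphSet_iff {x : E} {t : ℝ} :
    liftMap x (1, t, g t) ∈ graphSet X g a b ↔ x ∈ X ∧ t ∈ Icc a b := by
  simp [graphSet, liftMap_apply]

lemma convex_liftedSet (v : ι → E) (hg : ConvexOn ℝ (Icc a b) g) :
    Convex ℝ (liftedSet v g a b) := by
  rintro _ ⟨q, hq, hq₁, rfl⟩ _ ⟨q', hq', hq₁', rfl⟩ θ θ' hθ hθ' hθθ'
  refine ⟨fun i => θ • q i + θ' • q' i,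
    fun i => perspCone.add_mem hg (perspCone.smul_mem (hq i) hθ) (perspCone.smul_mem (hq' i) hθ'),
    ?_, ?_⟩
  · simp [Finset.sum_add_distrib, ← Finset.mul_sum, hq₁, hq₁', hθθ']
  · simp [Finset.smul_sum, Finset.sum_add_distrib]

lemma graphSet_subset_liftedSet (v : ι → E) (hg : ConvexOn ℝ (Icc a b) g) :
    graphSet (convexHull ℝ (range v)) g a b ⊆ liftedSet v g a b := by
  rintro ⟨x, t, z, u⟩ ⟨hx, ht, hz, hu⟩
  dsimp only at hx ht hz hu
  subst hz hu
  obtain ⟨l, hl, rfl⟩ := exists_mem_stdSimplex_sum_smul_eq hx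
  refine ⟨fun i => l i • (1, t, g t),
    fun i => perspCone.smul_mem (perspCone.mk_one_mem_iff.2 ⟨ht, le_rfl, hg.le_secant ht⟩) (hl.1 i),
    by simp [hl.2], ?_⟩
  simp only [map_smul]
  rw [← liftMap_sum_smul hl.2, liftMap_apply, one_smul]

lemma liftMap_secant_mem_convexHull_graphSet (hab : a < b) {x : E} (hx : x ∈ X) {t : ℝ}
    (ht : t ∈ Icc a b) :
    liftMap x (1, t, g a + (g b - g a) / (b - a) * (t - a)) ∈ convexHull ℝ (graphSet X g a b) := by
  have hba : 0 < b - a := sub_pos.2 hab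
  have hcomb : ((1, t, g a + (g b - g a) / (b - a) * (t - a)) : ℝ × ℝ × ℝ) =
      ((b - t) / (b - a)) • (1, a, g a) + ((t - a) / (b - a)) • (1, b, g b) := by
    ext <;> simp <;> field_simp <;> ring
  rw [hcomb, map_add, map_smul, map_smul]
  exact convex_convexHull ℝ _
    (subset_convexHull ℝ _ (liftMap_mem_graphSet_iff.2 ⟨hx, left_mem_Icc.2 hab.le⟩))
    (subset_convexHull ℝ _ (liftMap_mem_graphSet_iff.2 ⟨hx, right_mem_Icc.2 hab.le⟩))
    (div_nonneg (by linarith [ht.2]) hba.le) (div_nonneg (by linarith [ht.1]) hba.le)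
    (by field_simp; ring)

lemma liftMap_mem_convexHull_graphSet (hab : a < b) {x : E} (hx : x ∈ X) {t s : ℝ}
    (hts : (1, t, s) ∈ perspCone g a b) :
    liftMap x (1, t, s) ∈ convexHull ℝ (graphSet X g a b) := by
  obtain ⟨ht, hgs, hsec⟩ := perspCone.mk_one_mem_iff.1 hts
  set sec := g a + (g b - g a) / (b - a) * (t - a)
  obtain ⟨α, β, hα, hβ, hαβ, rfl⟩ : s ∈ segment ℝ (g t) sec := by
    rw [segment_eq_Icc (hgs.trans hsec)]
    exact ⟨hgs, hsec⟩
  have hcomb : ((1, t, α • g t + β • sec) : ℝ × ℝ × ℝ) = α • (1, t, g t) + β • (1, t, sec) := by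
    ext <;> simp [← add_mul, hαβ]
  rw [hcomb, map_add, map_smul, map_smul]
  exact convex_convexHull ℝ _ (subset_convexHull ℝ _ (liftMap_mem_graphSet_iff.2 ⟨hx, ht⟩))
    (liftMap_secant_mem_convexHull_graphSet hab hx ht) hα hβ hαβ

lemma liftedSet_subset_convexHull_graphSet (v : ι → E) (hab : a < b) :
    liftedSet v g a b ⊆ convexHull ℝ (graphSet (convexHull ℝ (range v)) g a b) := by
  rintro _ ⟨q, hq, hq₁, rfl⟩
  choose t s hts hq_eq using fun i => perspCone.exists_eq_smul hab.le (hq i)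
  have hsum : ∑ i, liftMap (v i) (q i) = ∑ i, (q i).1 • liftMap (v i) (1, t i, s i) :=
    Finset.sum_congr rfl fun i _ => by rw [← map_smul, ← hq_eq i]
  rw [hsum]
  exact (convex_convexHull ℝ _).sum_mem (fun i _ => (hq i).1) hq₁ fun i _ =>
    liftMap_mem_convexHull_graphSet hab (subset_convexHull ℝ _ (mem_range_self i)) (hts i)

theorem convexHull_graphSet_eq_liftedSet (v : ι → E) (hab : a < b) (hg : ConvexOn ℝ (Icc a b) g) :
    convexHull ℝ (graphSet (convexHull ℝ (range v)) g a b) = liftedSet v g a b :=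
  (convexHull_min (graphSet_subset_liftedSet v hg) (convex_liftedSet v hg)).antisymm
    (liftedSet_subset_convexHull_graphSet v hab)

end Hull

theorem stmt11_general (n m : ℕ) (v : Fin m → (Fin n → ℝ))
    (ylo yup : ℝ) (hy : ylo < yup)
    (g : ℝ → ℝ)
    (hgconv : ConvexOn ℝ (Set.Icc ylo yup) g)
    (X : Set (Fin n → ℝ)) (hX : X = convexHull ℝ (Set.range v)) :
    convexHull ℝ
      {p : (Fin n → ℝ) × ℝ × (Fin n → ℝ) × (Fin n → ℝ) |
        p.1 ∈ X ∧ p.2.1 ∈ Set.Icc ylo yup ∧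
        (∀ jj, p.2.2.1 jj = p.1 jj * g p.2.1) ∧ (∀ jj, p.2.2.2 jj = p.1 jj * p.2.1)} =
    {p : (Fin n → ℝ) × ℝ × (Fin n → ℝ) × (Fin n → ℝ) |
      ∃ (yv wv lv : Fin m → ℝ) (w : ℝ),
        (∀ iv, persp g (lv iv) (yv iv) ≤ wv iv) ∧
        (∀ iv, wv iv ≤ lv iv * g ylo +
          ((g yup - g ylo) / (yup - ylo)) * (yv iv - lv iv * ylo)) ∧
        (∀ iv, lv iv * ylo ≤ yv iv ∧ yv iv ≤ lv iv * yup) ∧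
        p.2.2.1 = ∑ iv, wv iv • v iv ∧
        p.2.2.2 = ∑ iv, yv iv • v iv ∧
        w = ∑ iv, wv iv ∧
        p.2.1 = ∑ iv, yv iv ∧
        p.1 = ∑ iv, lv iv • v iv ∧
        (∀ iv, 0 ≤ lv iv) ∧ ∑ iv, lv iv = 1} := by
  subst hX
  convert convexHull_graphSet_eq_liftedSet v hy hgconv using 1
  · congr 1
    ext p
    simp [graphSet, funext_iff, mul_comm]
  ext p
  constructor
  · rintro ⟨y, w, l, -, hpw, hws, hfeas, hz, hu, -, hyy, hx, hl, hl₁⟩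
    refine ⟨fun i => (l i, y i, w i), fun i => ⟨hl i, (hfeas i).1, (hfeas i).2, hpw i, hws i⟩,
      hl₁, ?_⟩
    simp [Prod.ext_iff, Prod.fst_sum, Prod.snd_sum, liftMap_apply, hz, hu, hyy, hx]
  · rintro ⟨q, hq, hq₁, rfl⟩
    refine ⟨fun i => (q i).2.1, fun i => (q i).2.2, fun i => (q i).1, _, fun i => (hq i).2.2.2.1,
      fun i => (hq i).2.2.2.2, fun i => ⟨(hq i).2.1, (hq i).2.2.1⟩, ?_, ?_, rfl, ?_, ?_,
      fun i => (hq i).1, hq₁⟩ <;>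
    simp [Prod.fst_sum, Prod.snd_sum, liftMap_apply]

/-- Proposition 8 of the paper: the simultaneous convex hull of
`z_j = x_j·g(y)`, `u_j = x_j·y` over `X × [ylo, yup]`, where `X = conv{v¹, …, vᵐ}`,
is the projection of the lifted disjunctive system onto `(x, y, z, u)`. -/
theorem stmt11 (n m : ℕ) (hm : 0 < m) (v : Fin m → (Fin n → ℝ))
    (ylo yup : ℝ) (hy : ylo < yup)
    (g : ℝ → ℝ) (hgcont : ContinuousOn g (Set.Icc ylo yup))
    (hgconv : ConvexOn ℝ (Set.Icc ylo yup) g)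
    (X : Set (Fin n → ℝ)) (hX : X = convexHull ℝ (Set.range v)) :
    convexHull ℝ
      {p : (Fin n → ℝ) × ℝ × (Fin n → ℝ) × (Fin n → ℝ) |
        p.1 ∈ X ∧ p.2.1 ∈ Set.Icc ylo yup ∧
        (∀ jj, p.2.2.1 jj = p.1 jj * g p.2.1) ∧ (∀ jj, p.2.2.2 jj = p.1 jj * p.2.1)} =
    {p : (Fin n → ℝ) × ℝ × (Fin n → ℝ) × (Fin n → ℝ) |
      ∃ (yv wv lv : Fin m → ℝ) (w : ℝ),
        (∀ iv, persp g (lv iv) (yv iv) ≤ wv iv) ∧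
        (∀ iv, wv iv ≤ lv iv * g ylo +
          ((g yup - g ylo) / (yup - ylo)) * (yv iv - lv iv * ylo)) ∧
        (∀ iv, lv iv * ylo ≤ yv iv ∧ yv iv ≤ lv iv * yup) ∧
        p.2.2.1 = ∑ iv, wv iv • v iv ∧
        p.2.2.2 = ∑ iv, yv iv • v iv ∧
        w = ∑ iv, wv iv ∧
        p.2.1 = ∑ iv, yv iv ∧
        p.1 = ∑ iv, lv iv • v iv ∧
        (∀ iv, 0 ≤ lv iv) ∧ ∑ iv, lv iv = 1} :=
  stmt11_general n m v ylo yup hy g hgconv X hX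
end

section
/- Let B ∈ ℝ^{q×n}, b ∈ ℝ^q, and suppose X = {x ∈ ℝ^n : Bx ≤ b} is a nonempty bounded polytope. Let y^lo < y^up be reals and define S = {(x, y, u) ∈ X × [y^lo, y^up] × ℝ^n : u_j = x_j·y for all j = 1, …, n}. Then the convex hull of S equals {(x, y, u) ∈ ℝ^n × ℝ × ℝ^n : y^lo ≤ y ≤ y^up, B(u − y^lo·x) ≤ (y − y^lo)·b, B(y^up·x − u) ≤ (y^up − y)·b}. -/
/-!
Let `P = {x | A x ≤ b}` and let `K = {(z, t) | 0 ≤ t, A z ≤ t • b}` be its homogenization.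
The RLT system says exactly that `(u - lo • x, y - lo)` and `(up • x - u, up - y)` lie in `K`.
These are affine functions of `(x, y, u)`, so the system is convex, and it contains the points
`(x, y, y • x)` with `x ∈ P`; this gives one inclusion.

Conversely, boundedness of `P` means that `A d ≤ 0` forces `d = 0`, so every `(z, t) ∈ K` is
`(t • x', t)` for some `x' ∈ P` (any `x' ∈ P` when `t = 0`). Writing `u - lo • x = (y - lo) • x₁`
and `up • x - u = (up - y) • x₀` then exhibits `(up - lo) • (x, y, u)` as
`(up - y) • (x₀, lo, lo • x₀) + (y - lo) • (x₁, up, up • x₁)`, a convex combination of lifted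
points after dividing by `up - lo`.
-/

open Set

theorem Bornology.IsBounded.eq_zero_of_add_smul_mem {E : Type*} [NormedAddCommGroup E]
    [NormedSpace ℝ E] {s : Set E} (hs : Bornology.IsBounded s) {x d : E} (hx : x ∈ s)
    (hray : ∀ t : ℝ, 0 ≤ t → x + t • d ∈ s) : d = 0 := by
  obtain ⟨R, hR⟩ := isBounded_iff_forall_norm_le.1 hs
  by_contra hd
  have hd_pos : 0 < ‖d‖ := norm_pos_iff.2 hd
  have hxR : ‖x‖ ≤ R := hR x hx
  set t := (R + ‖x‖ + 1) / ‖d‖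
  have ht : 0 ≤ t := div_nonneg (by linarith [norm_nonneg x]) hd_pos.le
  have htd : ‖t • d‖ ≤ R + ‖x‖ :=
    calc ‖t • d‖ = ‖(x + t • d) - x‖ := by rw [add_sub_cancel_left]
      _ ≤ ‖x + t • d‖ + ‖x‖ := norm_sub_le _ _
      _ ≤ R + ‖x‖ := by gcongr; exact hR _ (hray t ht)
  rw [norm_smul, Real.norm_of_nonneg ht, div_mul_cancel₀ _ hd_pos.ne'] at htd
  linarith

section Polyhedron

variable {E F : Type*} [AddCommGroup F] [PartialOrder F] [Module ℝ F] [PosSMulMono ℝ F]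

theorem eq_zero_of_map_nonpos_of_isBounded [IsOrderedAddMonoid F] [NormedAddCommGroup E]
    [NormedSpace ℝ E] {A : E →ₗ[ℝ] F} {b : F} (hbd : Bornology.IsBounded {x | A x ≤ b})
    {x₀ : E} (hx₀ : A x₀ ≤ b) {d : E} (hd : A d ≤ 0) : d = 0 :=
  hbd.eq_zero_of_add_smul_mem hx₀ fun t ht =>
    calc A (x₀ + t • d) = A x₀ + t • A d := by rw [map_add, map_smul]
      _ ≤ b + 0 := add_le_add hx₀ (smul_nonpos_of_nonneg_of_nonpos ht hd)
      _ = b := add_zero b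

variable [AddCommGroup E] [Module ℝ E] (A : E →ₗ[ℝ] F) (b : F)

def homogenization : Set (E × ℝ) := {z | 0 ≤ z.2 ∧ A z.1 ≤ z.2 • b}

theorem convex_homogenization [IsOrderedAddMonoid F] : Convex ℝ (homogenization A b) := by
  rintro ⟨z, t⟩ ⟨ht, hz⟩ ⟨z', t'⟩ ⟨ht', hz'⟩ a a' ha ha' -
  refine ⟨by dsimp; positivity, ?_⟩
  simp only [Prod.smul_mk, Prod.mk_add_mk, map_add, map_smul, add_smul, smul_eq_mul, mul_smul]
  exact add_le_add (smul_le_smul_of_nonneg_left hz ha) (smul_le_smul_of_nonneg_left hz' ha')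

theorem smul_mem_homogenization {x : E} (hx : A x ≤ b) {t : ℝ} (ht : 0 ≤ t) :
    (t • x, t) ∈ homogenization A b :=
  ⟨ht, by rw [map_smul]; exact smul_le_smul_of_nonneg_left hx ht⟩

theorem exists_eq_smul_of_mem_homogenization (hne : ∃ x₀, A x₀ ≤ b)
    (hrec : ∀ d, A d ≤ 0 → d = 0) {z : E × ℝ} (hz : z ∈ homogenization A b) :
    ∃ x, A x ≤ b ∧ z.1 = z.2 • x := by
  obtain ⟨ht, hAz⟩ := hz
  rcases ht.eq_or_lt with ht0 | ht0
  · obtain ⟨x₀, hx₀⟩ := hne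
    refine ⟨x₀, hx₀, ?_⟩
    rw [← ht0, zero_smul] at hAz ⊢
    exact hrec _ hAz
  · refine ⟨z.2⁻¹ • z.1, ?_, (smul_inv_smul₀ ht0.ne' _).symm⟩
    calc A (z.2⁻¹ • z.1) = z.2⁻¹ • A z.1 := map_smul _ _ _
      _ ≤ z.2⁻¹ • z.2 • b := smul_le_smul_of_nonneg_left hAz (inv_nonneg.2 ht0.le)
      _ = b := inv_smul_smul₀ ht0.ne' _

variable (lo up : ℝ)

def bilinearLift : Set (E × ℝ × E) :=
  {p | A p.1 ≤ b ∧ p.2.1 ∈ Icc lo up ∧ p.2.2 = p.2.1 • p.1}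

def rltRelaxation : Set (E × ℝ × E) :=
  {p | (p.2.2 - lo • p.1, p.2.1 - lo) ∈ homogenization A b ∧
    (up • p.1 - p.2.2, up - p.2.1) ∈ homogenization A b}

theorem bilinearLift_subset_rltRelaxation :
    bilinearLift A b lo up ⊆ rltRelaxation A b lo up := by
  rintro ⟨x, y, u⟩ ⟨hx, ⟨hlo, hup⟩, hu⟩
  dsimp only at hx hlo hup hu
  subst hu
  constructor
  · rw [← sub_smul]
    exact smul_mem_homogenization A b hx (sub_nonneg.2 hlo)
  · rw [← sub_smul]
    exact smul_mem_homogenization A b hx (sub_nonneg.2 hup)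

theorem convex_rltRelaxation [IsOrderedAddMonoid F] : Convex ℝ (rltRelaxation A b lo up) := by
  rintro ⟨x, y, u⟩ ⟨hp₁, hp₂⟩ ⟨x', y', u'⟩ ⟨hp₁', hp₂'⟩ a a' ha ha' haa
  constructor
  · convert convex_homogenization A b hp₁ hp₁' ha ha' haa using 1
    ext
    · simp only [Prod.smul_mk, Prod.mk_add_mk]; module
    · simp only [Prod.smul_mk, Prod.mk_add_mk, smul_eq_mul]; linear_combination lo * haa
  · convert convex_homogenization A b hp₂ hp₂' ha ha' haa using 1
    ext
    · simp only [Prod.smul_mk, Prod.mk_add_mk]; module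
    · simp only [Prod.smul_mk, Prod.mk_add_mk, smul_eq_mul]; linear_combination (-up) * haa

variable {lo up}

theorem rltRelaxation_subset_convexHull (hne : ∃ x₀, A x₀ ≤ b) (hrec : ∀ d, A d ≤ 0 → d = 0)
    (hlu : lo < up) : rltRelaxation A b lo up ⊆ convexHull ℝ (bilinearLift A b lo up) := by
  rintro ⟨x, y, u⟩ ⟨hp₁, hp₂⟩
  obtain ⟨x₁, hx₁, hu₁⟩ := exists_eq_smul_of_mem_homogenization A b hne hrec hp₁
  obtain ⟨x₀, hx₀, hu₀⟩ := exists_eq_smul_of_mem_homogenization A b hne hrec hp₂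
  dsimp only at hu₀ hu₁
  have hlu' : 0 < up - lo := sub_pos.2 hlu
  have hq₀ : (x₀, lo, lo • x₀) ∈ bilinearLift A b lo up := ⟨hx₀, ⟨le_rfl, hlu.le⟩, rfl⟩
  have hq₁ : (x₁, up, up • x₁) ∈ bilinearLift A b lo up := ⟨hx₁, ⟨hlu.le, le_rfl⟩, rfl⟩
  have hscaled : (up - lo) • (x, y, u) =
      (up - y) • (x₀, lo, lo • x₀) + (y - lo) • (x₁, up, up • x₁) := by
    simp only [Prod.smul_mk, Prod.mk_add_mk, smul_comm _ lo, smul_comm _ up, ← hu₀, ← hu₁]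
    ext <;> dsimp only <;> [module; ring; module]
  have hcomb : (x, y, u) = ((up - y) / (up - lo)) • (x₀, lo, lo • x₀)
      + ((y - lo) / (up - lo)) • (x₁, up, up • x₁) := by
    rw [div_eq_inv_mul, div_eq_inv_mul, mul_smul, mul_smul, ← smul_add, ← hscaled,
      inv_smul_smul₀ hlu'.ne']
  rw [hcomb]
  exact convex_convexHull ℝ _ (subset_convexHull ℝ _ hq₀) (subset_convexHull ℝ _ hq₁)
    (div_nonneg hp₂.1 hlu'.le) (div_nonneg hp₁.1 hlu'.le) (by field_simp; ring)

theorem convexHull_bilinearLift [IsOrderedAddMonoid F] (hne : ∃ x₀, A x₀ ≤ b)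
    (hrec : ∀ d, A d ≤ 0 → d = 0) (hlu : lo < up) :
    convexHull ℝ (bilinearLift A b lo up) = rltRelaxation A b lo up :=
  (convexHull_min (bilinearLift_subset_rltRelaxation A b lo up)
    (convex_rltRelaxation A b lo up)).antisymm (rltRelaxation_subset_convexHull A b hne hrec hlu)

end Polyhedron

/-- Proposition 10 of the paper (special case of Davarnia–Richard–Tawarmalani): the
convex hull of the simultaneous bilinear products `u_j = x_j·y` over a nonempty bounded
polytope `X = {x : Bx ≤ b}` times the interval `[ylo, yup]` is given by the two RLT
systems obtained from the bound factors of `y`. -/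
theorem stmt12 (n q : ℕ) (B : Fin q → Fin n → ℝ) (b : Fin q → ℝ)
    (ylo yup : ℝ) (hy : ylo < yup)
    (X : Set (Fin n → ℝ)) (hX : X = {x | ∀ r, ∑ c, B r c * x c ≤ b r})
    (hne : X.Nonempty) (hbd : Bornology.IsBounded X) :
    convexHull ℝ
      {p : (Fin n → ℝ) × ℝ × (Fin n → ℝ) |
        p.1 ∈ X ∧ p.2.1 ∈ Set.Icc ylo yup ∧ ∀ jj, p.2.2 jj = p.1 jj * p.2.1} =
    {p : (Fin n → ℝ) × ℝ × (Fin n → ℝ) |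
      ylo ≤ p.2.1 ∧ p.2.1 ≤ yup ∧
      (∀ r, ∑ c, B r c * (p.2.2 c - ylo * p.1 c) ≤ (p.2.1 - ylo) * b r) ∧
      (∀ r, ∑ c, B r c * (yup * p.1 c - p.2.2 c) ≤ (yup - p.2.1) * b r)} := by
  subst hX
  obtain ⟨x₀, hx₀⟩ := hne
  have hhull := convexHull_bilinearLift (Matrix.mulVecLin B) b ⟨x₀, hx₀⟩
    (fun _ hd => eq_zero_of_map_nonpos_of_isBounded hbd hx₀ hd) hy
  convert hhull using 2
  · ext p
    refine and_congr Iff.rfl (and_congr Iff.rfl ?_)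
    simp only [funext_iff, Pi.smul_apply, smul_eq_mul, mul_comm]
  · ext p
    simp only [rltRelaxation, homogenization, mem_ofPred_eq, sub_nonneg]
    rw [and_and_and_comm, and_assoc]
    exact Iff.rfl
end

section
/- Let 0 < α2 < α1, F1 ≥ 0, F2 ≥ 0, Υ^up ∈ ℝ and L ∈ ℝ. Suppose real numbers f1, f2, Υ, E, θ satisfy: 0 ≤ f1 ≤ F1; 0 ≤ f2 ≤ F2; 0 ≤ Υ ≤ Υ^up; α2 < θ < α1; E ≤ α1·f1/(α1 − θ) − α2·f2/(θ − α2) ≤ Υ; and L ≤ E·(α1 − θ). Define H1^up = (Υ^up·(α1 − α2) + α1·F1 + α2·F2)/(α1·(α1 − α2)) and H2^up = (α1·F1 + α2·F2 − L)/(α2·(α1 − α2)). Then: (i) f1/(α1 − θ) ≤ H1^up and f2/(θ − α2) ≤ H2^up; equivalently (ii) f1 ≤ H1^up·(α1 − θ) and f2 ≤ H2^up·(θ − α2), so that if H1^up > 0 and H2^up > 0 then α2 + f2/H2^up ≤ θ ≤ α1 − f1/H1^up. -/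
/-!
Write `x = f1/(α1 − θ)` and `y = f2/(θ − α2)`, so that `E ≤ α1 x − α2 y ≤ Υ`. Splitting
`α1 − α2 = (α1 − θ) + (θ − α2)` gives `α1 (α1 − α2) x = α1 f1 + α1 x (θ − α2)`, and multiplying the
upper Underwood bound by `θ − α2` turns the unbounded term `α1 x (θ − α2)` into
`α2 f2 + Υ (θ − α2)`. Symmetrically, multiplying the lower bound by `α1 − θ` controls
`α2 y (α1 − θ)` by `α1 f1 − E (α1 − θ)`, which is where the lower bound `L` enters.
-/

section Underwood

variable {a1 a2 t f1 f2 : ℝ}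

theorem mul_div_left_le_of_underwood_le {U : ℝ} (hU0 : 0 ≤ U) (ht1 : a2 < t) (ht2 : t < a1)
    (h : a1 * f1 / (a1 - t) - a2 * f2 / (t - a2) ≤ U) :
    a1 * (a1 - a2) * (f1 / (a1 - t)) ≤ U * (a1 - a2) + a1 * f1 + a2 * f2 := by
  have hd1 : a1 - t ≠ 0 := by linarith
  have hd2 : 0 < t - a2 := by linarith
  have hx : f1 / (a1 - t) * (a1 - t) = f1 := div_mul_cancel₀ f1 hd1
  have hy : f2 / (t - a2) * (t - a2) = f2 := div_mul_cancel₀ f2 hd2.ne'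
  rw [mul_div_assoc, mul_div_assoc] at h
  linear_combination mul_le_mul_of_nonneg_right h hd2.le
    + mul_le_mul_of_nonneg_left (show t - a2 ≤ a1 - a2 by linarith) hU0 + a1 * hx + a2 * hy

theorem mul_div_right_le_of_le_underwood {E : ℝ} (ht1 : a2 < t) (ht2 : t < a1)
    (h : E ≤ a1 * f1 / (a1 - t) - a2 * f2 / (t - a2)) :
    a2 * (a1 - a2) * (f2 / (t - a2)) ≤ a1 * f1 + a2 * f2 - E * (a1 - t) := by
  have hd1 : 0 < a1 - t := by linarith
  have hd2 : t - a2 ≠ 0 := by linarith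
  have hx : f1 / (a1 - t) * (a1 - t) = f1 := div_mul_cancel₀ f1 hd1.ne'
  have hy : f2 / (t - a2) * (t - a2) = f2 := div_mul_cancel₀ f2 hd2
  rw [mul_div_assoc, mul_div_assoc] at h
  linear_combination mul_le_mul_of_nonneg_right h hd1.le + a1 * hx + a2 * hy

end Underwood

theorem stmt14_general (a1 a2 F1 F2 Uup L : ℝ)
    (ha2 : 0 < a2) (ha : a2 < a1)
    (f1 f2 U E t : ℝ)
    (hf1 : f1 ≤ F1) (hf2 : f2 ≤ F2)
    (hU0 : 0 ≤ U) (hU : U ≤ Uup) (ht1 : a2 < t) (ht2 : t < a1)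
    (hE : E ≤ a1 * f1 / (a1 - t) - a2 * f2 / (t - a2))
    (hEU : a1 * f1 / (a1 - t) - a2 * f2 / (t - a2) ≤ U)
    (hL : L ≤ E * (a1 - t))
    (H1up H2up : ℝ)
    (hH1 : H1up = (Uup * (a1 - a2) + a1 * F1 + a2 * F2) / (a1 * (a1 - a2)))
    (hH2 : H2up = (a1 * F1 + a2 * F2 - L) / (a2 * (a1 - a2))) :
    (f1 / (a1 - t) ≤ H1up ∧ f2 / (t - a2) ≤ H2up) ∧
    (f1 ≤ H1up * (a1 - t) ∧ f2 ≤ H2up * (t - a2)) ∧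
    (0 < H1up → 0 < H2up → a2 + f2 / H2up ≤ t ∧ t ≤ a1 - f1 / H1up) := by
  have ha1 : 0 < a1 := ha2.trans ha
  have hda : 0 < a1 - a2 := sub_pos.mpr ha
  have hd1 : 0 < a1 - t := sub_pos.mpr ht2
  have hd2 : 0 < t - a2 := sub_pos.mpr ht1
  have hx : f1 / (a1 - t) ≤ H1up := by
    rw [hH1, le_div_iff₀' (by positivity)]
    linear_combination mul_div_left_le_of_underwood_le hU0 ht1 ht2 hEU
      + mul_le_mul_of_nonneg_right hU hda.le + a1 * hf1 + a2 * hf2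
  have hy : f2 / (t - a2) ≤ H2up := by
    rw [hH2, le_div_iff₀' (by positivity)]
    linear_combination mul_div_right_le_of_le_underwood ht1 ht2 hE + hL + a1 * hf1 + a2 * hf2
  have hf1up : f1 ≤ H1up * (a1 - t) := (div_le_iff₀ hd1).mp hx
  have hf2up : f2 ≤ H2up * (t - a2) := (div_le_iff₀ hd2).mp hy
  refine ⟨⟨hx, hy⟩, ⟨hf1up, hf2up⟩, fun hH1pos hH2pos => ⟨?_, ?_⟩⟩
  · have : f2 / H2up ≤ t - a2 := (div_le_iff₀' hH2pos).mpr hf2up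
    linarith
  · have : f1 / H1up ≤ a1 - t := (div_le_iff₀' hH1pos).mpr hf1up
    linarith

/-- Proposition 11 of the paper: in the two-component Underwood system the fractions
`f1/(α1 − θ)` and `f2/(θ − α2)` admit the finite upper bounds `H1up` and `H2up`, and
consequently the Underwood root is restricted to
`α2 + f2/H2up ≤ θ ≤ α1 − f1/H1up`. -/
theorem stmt14 (a1 a2 F1 F2 Uup L : ℝ)
    (ha2 : 0 < a2) (ha : a2 < a1) (hF1 : 0 ≤ F1) (hF2 : 0 ≤ F2)
    (f1 f2 U E t : ℝ)
    (hf10 : 0 ≤ f1) (hf1 : f1 ≤ F1) (hf20 : 0 ≤ f2) (hf2 : f2 ≤ F2)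
    (hU0 : 0 ≤ U) (hU : U ≤ Uup) (ht1 : a2 < t) (ht2 : t < a1)
    (hE : E ≤ a1 * f1 / (a1 - t) - a2 * f2 / (t - a2))
    (hEU : a1 * f1 / (a1 - t) - a2 * f2 / (t - a2) ≤ U)
    (hL : L ≤ E * (a1 - t))
    (H1up H2up : ℝ)
    (hH1 : H1up = (Uup * (a1 - a2) + a1 * F1 + a2 * F2) / (a1 * (a1 - a2)))
    (hH2 : H2up = (a1 * F1 + a2 * F2 - L) / (a2 * (a1 - a2))) :
    (f1 / (a1 - t) ≤ H1up ∧ f2 / (t - a2) ≤ H2up) ∧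
    (f1 ≤ H1up * (a1 - t) ∧ f2 ≤ H2up * (t - a2)) ∧
    (0 < H1up → 0 < H2up → a2 + f2 / H2up ≤ t ∧ t ≤ a1 - f1 / H1up) :=
  stmt14_general a1 a2 F1 F2 Uup L ha2 ha f1 f2 U E t hf1 hf2 hU0 hU ht1 ht2 hE hEU hL H1up H2up hH1
    hH2
end

section
/- Let α1, θ^lo, F1, H1^up be reals with H1^up > 0, F1 > 0, θ^lo < α1 and θ^lo ≤ α1 − F1/H1^up. Define H₁ = {(f, θ, H, u) ∈ ℝ^4 : 0 ≤ f ≤ F1, θ^lo ≤ θ ≤ α1 − f/H1^up, u = f·θ, and H = f/(α1 − θ) if θ < α1 while 0 ≤ H ≤ H1^up if θ = α1}. Let T*(λ, t) = λ^2/(α1·λ − t) for λ > 0 with t/λ ∈ [θ^lo, α1 − F1/H1^up] and T*(0, 0) = 0 (the perspective of t ↦ 1/(α1 − t)), and let Q(λ, t) = t^2/λ for λ > 0 with Q(0, 0) = 0 (the perspective of t ↦ t^2). Then the convex hull of H₁ equals the projection onto (f, θ, H, u) of the set of tuples (f, θ, H, u, θ^a, θ^b, θ^c, λ^a, λ^b,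 λ^c) ∈ ℝ^10 satisfying: H1^up·λ^b + F1·T*(λ^c, θ^c) ≤ H ≤ H1^up·(θ^a − θ^lo·λ^a)/(α1 − θ^lo) + H1^up·λ^b + F1·λ^c/(α1 − θ^lo) + H1^up·(θ^c − θ^lo·λ^c)/(α1 − θ^lo); H1^up·(α1 − F1/H1^up)·(α1·λ^b − θ^b) + F1·θ^c ≤ u ≤ H1^up·(α1·θ^b − Q(λ^b, θ^b)) + F1·θ^c; θ^lo·λ^a ≤ θ^a ≤ α1·λ^a; (α1 − F1/H1^up)·λ^b ≤ θ^b ≤ α1·λ^b; θ^lo·λ^c ≤ θ^c ≤ (α1 − F1/H1^up)·λ^c; f = H1^up·(α1·λ^b − θ^b) + F1·λ^c; θ = θ^a + θ^b + θ^c; λ^a + λ^b + λ^c = 1; and λ^a, λ^b, λ^c ≥ 0. -/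
/-!
Write `q = α1 - F1/H1up`. The set `H₁` has three pieces: `a`, where `f = 0` (the segment `H = 0`
and the vertical segment at `θ = α1`); `b`, the arc `f = H1up (α1 - θ)`, `H = H1up` over
`q ≤ θ ≤ α1`; and `c`, the arc `f = F1`, `H = F1/(α1 - θ)` over `tlo ≤ θ ≤ q`. Every other point
of `H₁` lies on a segment from `a` to `b` or `c`, and the convex hull of each piece is the region
bounded by the piece and a chord. The lifted system describes the convex hull of the union of
these three regions in the scaled variables `(λ, λ • x)`, where the nonlinear constraints turn
into the perspectives `T*` and `Q`. These are positively homogeneous and subadditive, hence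
convex, so the projection is convex and contains `H₁`. Conversely, sharing `H - H1up λᵇ` between
the pieces `a` and `c` writes each point of the projection as a convex combination of points of
the three regions.
-/

/-- Totalized perspective of `t ↦ 1/(α1 − t)`: `T*(l, t) = l²/(α1·l − t)` for `l > 0`,
and `0` at `l = 0` (consistent with `T*(0,0) = 0`). -/
noncomputable def Tstar (a1 l t : ℝ) : ℝ :=
  if 0 < l then l ^ 2 / (a1 * l - t) else 0

/-- Totalized perspective of `t ↦ t²`: `Q(l, t) = t²/l` for `l > 0`, and `0` at
`l = 0` (consistent with `Q(0,0) = 0`). -/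
noncomputable def Qpersp (l t : ℝ) : ℝ :=
  if 0 < l then t ^ 2 / l else 0

section Convexity

variable {E : Type*} [AddCommGroup E] [Module ℝ E] {K : Set E}

theorem Convex.smul_add_smul_add_smul_mem (hK : Convex ℝ K) {a b c : E} (ha : a ∈ K)
    (hb : b ∈ K) (hc : c ∈ K) {wa wb wc : ℝ} (hwa : 0 ≤ wa) (hwb : 0 ≤ wb) (hwc : 0 ≤ wc)
    (hw : wa + wb + wc = 1) : wa • a + wb • b + wc • c ∈ K := by
  simpa [Fin.sum_univ_three] using hK.sum_mem (t := .univ) (w := ![wa, wb, wc])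
    (z := ![a, b, c]) (by intro i _; fin_cases i <;> assumption)
    (by simp [Fin.sum_univ_three, hw]) (by intro i _; fin_cases i <;> assumption)

theorem Convex.mem_of_affineMap_of_le_of_le (hK : Convex ℝ K) (g : ℝ →ᵃ[ℝ] E) {s t u : ℝ}
    (hs : g s ∈ K) (hu : g u ∈ K) (hst : s ≤ t) (htu : t ≤ u) : g t ∈ K :=
  (hK.affine_preimage g).ordConnected.out hs hu ⟨hst, htu⟩

theorem exists_mem_eq_smul_of_inv_smul_mem (hK : K.Nonempty) {l : ℝ} {v : E} (hl : 0 ≤ l)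
    (hpos : 0 < l → l⁻¹ • v ∈ K) (hzero : l = 0 → v = 0) : ∃ x ∈ K, v = l • x := by
  rcases hl.eq_or_lt with rfl | hl
  · obtain ⟨x, hx⟩ := hK
    exact ⟨x, hx, by simp [hzero rfl]⟩
  · exact ⟨l⁻¹ • v, hpos hl, (smul_inv_smul₀ hl.ne' v).symm⟩

theorem ConvexOn.of_subadditive_of_homogeneous {s : Set E} {f : E → ℝ} (hs : Convex ℝ s)
    (hsmul : ∀ x ∈ s, ∀ c : ℝ, 0 ≤ c → c • x ∈ s)
    (hhom : ∀ x ∈ s, ∀ c : ℝ, 0 ≤ c → f (c • x) = c * f x)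
    (hadd : ∀ x ∈ s, ∀ y ∈ s, f (x + y) ≤ f x + f y) : ConvexOn ℝ s f :=
  ⟨hs, fun x hx y hy a b ha hb _ => by
    simpa only [hhom x hx a ha, hhom y hy b hb, smul_eq_mul] using
      hadd _ (hsmul x hx a ha) _ (hsmul y hy b hb)⟩

end Convexity

section Perspective

def wedge (c b : ℝ) : Set (ℝ × ℝ) := {x | 0 ≤ x.1 ∧ c * x.1 ≤ x.2 ∧ x.2 ≤ b * x.1}

variable {c b : ℝ}

theorem convex_wedge : Convex ℝ (wedge c b) := by
  rintro x ⟨hx0, hx1, hx2⟩ y ⟨hy0, hy1, hy2⟩ μ ν hμ hν -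
  simp only [wedge, Set.mem_ofPred_eq, Prod.fst_add, Prod.snd_add, Prod.smul_fst, Prod.smul_snd,
    smul_eq_mul]
  refine ⟨by positivity, ?_, ?_⟩
  · linear_combination μ * hx1 + ν * hy1
  · linear_combination μ * hx2 + ν * hy2

theorem smul_mem_wedge {x : ℝ × ℝ} (hx : x ∈ wedge c b) {μ : ℝ} (hμ : 0 ≤ μ) :
    μ • x ∈ wedge c b := by
  obtain ⟨hx0, hx1, hx2⟩ := hx
  simp only [wedge, Set.mem_ofPred_eq, Prod.smul_fst, Prod.smul_snd, smul_eq_mul]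
  refine ⟨by positivity, ?_, ?_⟩
  · linear_combination μ * hx1
  · linear_combination μ * hx2

theorem snd_eq_zero_of_mem_wedge {x : ℝ × ℝ} (hx : x ∈ wedge c b) (h : x.1 = 0) : x.2 = 0 := by
  obtain ⟨-, hx1, hx2⟩ := hx
  rw [h, mul_zero] at hx1 hx2
  exact le_antisymm hx2 hx1

theorem Tstar_smul (a1 : ℝ) {μ : ℝ} (hμ : 0 ≤ μ) (l t : ℝ) :
    Tstar a1 (μ * l) (μ * t) = μ * Tstar a1 l t := by
  rcases hμ.eq_or_lt with rfl | hμ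
  · simp [Tstar]
  simp only [Tstar, mul_pos_iff_of_pos_left hμ]
  split_ifs
  · rw [show a1 * (μ * l) - μ * t = μ * (a1 * l - t) by ring, mul_pow, sq μ, mul_assoc,
      mul_div_mul_left _ _ hμ.ne', mul_div_assoc]
  · rw [mul_zero]

theorem Qpersp_smul {μ : ℝ} (hμ : 0 ≤ μ) (l t : ℝ) :
    Qpersp (μ * l) (μ * t) = μ * Qpersp l t := by
  rcases hμ.eq_or_lt with rfl | hμ
  · simp [Qpersp]
  simp only [Qpersp, mul_pos_iff_of_pos_left hμ]
  split_ifs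
  · rw [mul_pow, sq μ, mul_assoc, mul_div_mul_left _ _ hμ.ne', mul_div_assoc]
  · rw [mul_zero]

theorem Tstar_add_le {a1 : ℝ} (hb : b < a1) {x y : ℝ × ℝ} (hx : x ∈ wedge c b)
    (hy : y ∈ wedge c b) :
    Tstar a1 (x.1 + y.1) (x.2 + y.2) ≤ Tstar a1 x.1 x.2 + Tstar a1 y.1 y.2 := by
  rcases hx.1.eq_or_lt with hx0 | hxpos
  · simp [← hx0, snd_eq_zero_of_mem_wedge hx hx0.symm, Tstar]
  rcases hy.1.eq_or_lt with hy0 | hypos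
  · simp [← hy0, snd_eq_zero_of_mem_wedge hy hy0.symm, Tstar]
  have hsx : 0 < a1 * x.1 - x.2 := by nlinarith [hx.2.2]
  have hsy : 0 < a1 * y.1 - y.2 := by nlinarith [hy.2.2]
  simp only [Tstar, if_pos hxpos, if_pos hypos, if_pos (add_pos hxpos hypos)]
  -- `(l + l')² / (s + s') ≤ l² / s + l'² / s'` is Cauchy–Schwarz
  rw [div_add_div _ _ hsx.ne' hsy.ne', div_le_div_iff₀ (by linarith) (by positivity)]
  nlinarith [sq_nonneg (x.1 * (a1 * y.1 - y.2) - y.1 * (a1 * x.1 - x.2)), mul_pos hsx hsy]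

theorem Qpersp_add_le {x y : ℝ × ℝ} (hx : x ∈ wedge c b) (hy : y ∈ wedge c b) :
    Qpersp (x.1 + y.1) (x.2 + y.2) ≤ Qpersp x.1 x.2 + Qpersp y.1 y.2 := by
  rcases hx.1.eq_or_lt with hx0 | hxpos
  · simp [← hx0, snd_eq_zero_of_mem_wedge hx hx0.symm, Qpersp]
  rcases hy.1.eq_or_lt with hy0 | hypos
  · simp [← hy0, snd_eq_zero_of_mem_wedge hy hy0.symm, Qpersp]
  simp only [Qpersp, if_pos hxpos, if_pos hypos, if_pos (add_pos hxpos hypos)]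
  rw [div_add_div _ _ hxpos.ne' hypos.ne', div_le_div_iff₀ (by linarith) (by positivity)]
  nlinarith [sq_nonneg (x.2 * y.1 - y.2 * x.1), mul_pos hxpos hypos]

theorem convexOn_Tstar {a1 : ℝ} (hb : b < a1) :
    ConvexOn ℝ (wedge c b) (fun x => Tstar a1 x.1 x.2) :=
  .of_subadditive_of_homogeneous convex_wedge (fun _ hx _ => smul_mem_wedge hx)
    (fun x _ _ hμ => Tstar_smul a1 hμ x.1 x.2) (fun _ hx _ hy => Tstar_add_le hb hx hy)

theorem convexOn_Qpersp : ConvexOn ℝ (wedge c b) (fun x => Qpersp x.1 x.2) :=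
  .of_subadditive_of_homogeneous convex_wedge (fun _ hx _ => smul_mem_wedge hx)
    (fun x _ _ hμ => Qpersp_smul hμ x.1 x.2) (fun _ hx _ hy => Qpersp_add_le hx hy)

end Perspective

section Underwood

variable {a1 tlo F1 H1up : ℝ}

def underwoodSet (a1 tlo F1 H1up : ℝ) : Set (ℝ × ℝ × ℝ × ℝ) :=
  {p : ℝ × ℝ × ℝ × ℝ |
    0 ≤ p.1 ∧ p.1 ≤ F1 ∧ tlo ≤ p.2.1 ∧ p.2.1 ≤ a1 - p.1 / H1up ∧
    p.2.2.2 = p.1 * p.2.1 ∧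
    (p.2.1 < a1 → p.2.2.1 = p.1 / (a1 - p.2.1)) ∧
    (p.2.1 = a1 → 0 ≤ p.2.2.1 ∧ p.2.2.1 ≤ H1up)}

def underwoodLiftProj (a1 tlo F1 H1up : ℝ) : Set (ℝ × ℝ × ℝ × ℝ) :=
  {p : ℝ × ℝ × ℝ × ℝ |
    ∃ ta tb tc la lb lc : ℝ,
      H1up * lb + F1 * Tstar a1 lc tc ≤ p.2.2.1 ∧
      p.2.2.1 ≤ H1up * (ta - tlo * la) / (a1 - tlo) + H1up * lb +
        F1 * lc / (a1 - tlo) + H1up * (tc - tlo * lc) / (a1 - tlo) ∧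
      H1up * (a1 - F1 / H1up) * (a1 * lb - tb) + F1 * tc ≤ p.2.2.2 ∧
      p.2.2.2 ≤ H1up * (a1 * tb - Qpersp lb tb) + F1 * tc ∧
      tlo * la ≤ ta ∧ ta ≤ a1 * la ∧
      (a1 - F1 / H1up) * lb ≤ tb ∧ tb ≤ a1 * lb ∧
      tlo * lc ≤ tc ∧ tc ≤ (a1 - F1 / H1up) * lc ∧
      p.1 = H1up * (a1 * lb - tb) + F1 * lc ∧
      p.2.1 = ta + tb + tc ∧
      la + lb + lc = 1 ∧ 0 ≤ la ∧ 0 ≤ lb ∧ 0 ≤ lc}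

theorem mem_underwoodSet_f_zero (hH : 0 ≤ H1up) (hF : 0 ≤ F1) {x : ℝ} (hx1 : tlo ≤ x)
    (hx2 : x ≤ a1) :
    ((0 : ℝ), x, (0 : ℝ), (0 : ℝ)) ∈ underwoodSet a1 tlo F1 H1up :=
  ⟨le_rfl, hF, hx1, by simpa using hx2, by simp, fun _ => by simp, fun _ => ⟨le_rfl, hH⟩⟩

theorem mem_underwoodSet_top (hH : 0 ≤ H1up) (hF : 0 ≤ F1) (htlo : tlo ≤ a1) :
    ((0 : ℝ), a1, H1up, (0 : ℝ)) ∈ underwoodSet a1 tlo F1 H1up :=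
  ⟨le_rfl, hF, htlo, by simp, by simp, fun h => absurd h (lt_irrefl _), fun _ => ⟨hH, le_rfl⟩⟩

theorem mem_underwoodSet_H_max (hH : 0 < H1up) (htlo' : tlo ≤ a1 - F1 / H1up) {x : ℝ}
    (hx1 : a1 - F1 / H1up ≤ x) (hx2 : x ≤ a1) :
    (H1up * (a1 - x), x, H1up, H1up * (a1 - x) * x) ∈ underwoodSet a1 tlo F1 H1up := by
  have hf : H1up * (a1 - x) / H1up = a1 - x := by field_simp
  refine ⟨by nlinarith, ?_, htlo'.trans hx1, by simp [hf], rfl, fun h => ?_,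
    fun _ => ⟨hH.le, le_rfl⟩⟩
  · linarith [(le_div_iff₀ hH).mp (sub_le_comm.mp hx1)]
  · rw [mul_div_cancel_right₀ _ (by linarith : a1 - x ≠ 0)]

theorem mem_underwoodSet_f_max (hH : 0 < H1up) (hF : 0 < F1) {x : ℝ} (hx1 : tlo ≤ x)
    (hx2 : x ≤ a1 - F1 / H1up) :
    (F1, x, F1 / (a1 - x), F1 * x) ∈ underwoodSet a1 tlo F1 H1up := by
  have hxa : x < a1 := by linarith [div_pos hF hH]
  exact ⟨hF.le, le_rfl, hx1, hx2, rfl, fun _ => rfl, fun h => absurd h hxa.ne⟩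

theorem mem_convexHull_f_zero (hH : 0 ≤ H1up) (hF : 0 ≤ F1) (htlo : tlo < a1) {x h : ℝ}
    (hx1 : tlo ≤ x) (hx2 : x ≤ a1) (hh0 : 0 ≤ h) (hh1 : h ≤ H1up * (x - tlo) / (a1 - tlo)) :
    ((0 : ℝ), x, h, (0 : ℝ)) ∈ convexHull ℝ (underwoodSet a1 tlo F1 H1up) := by
  have hK := convex_convexHull ℝ (underwoodSet a1 tlo F1 H1up)
  let chord : ℝ →ᵃ[ℝ] ℝ × ℝ × ℝ × ℝ := AffineMap.lineMap
    ((0 : ℝ), (0 : ℝ), H1up * (0 - tlo) / (a1 - tlo), (0 : ℝ))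
    ((0 : ℝ), (1 : ℝ), H1up * (1 - tlo) / (a1 - tlo), (0 : ℝ))
  have hchord : ∀ s, chord s = ((0 : ℝ), s, H1up * (s - tlo) / (a1 - tlo), (0 : ℝ)) :=
    fun s => by
      simp only [chord, AffineMap.lineMap_apply_module', Prod.smul_mk, Prod.mk_sub_mk,
        Prod.mk_add_mk, smul_eq_mul, Prod.mk.injEq]
      refine ⟨by ring, by ring, by ring, by ring⟩
  let fiber : ℝ →ᵃ[ℝ] ℝ × ℝ × ℝ × ℝ :=
    AffineMap.lineMap ((0 : ℝ), x, (0 : ℝ), (0 : ℝ)) ((0 : ℝ), x, (1 : ℝ), (0 : ℝ))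
  have hfiber : ∀ s, fiber s = ((0 : ℝ), x, s, (0 : ℝ)) := fun s => by
    simp [fiber, AffineMap.lineMap_apply_module']
  have hup : chord x ∈ convexHull ℝ (underwoodSet a1 tlo F1 H1up) := by
    refine hK.mem_of_affineMap_of_le_of_le chord ?_ ?_ hx1 hx2 <;>
      refine subset_convexHull ℝ _ ?_ <;> rw [hchord]
    · simpa using mem_underwoodSet_f_zero hH hF le_rfl htlo.le (a1 := a1) (F1 := F1)
    · simpa [mul_div_cancel_right₀ _ (sub_pos.2 htlo).ne'] using
        mem_underwoodSet_top hH hF htlo.le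
  rw [← hfiber]
  refine hK.mem_of_affineMap_of_le_of_le fiber ?_ ?_ hh0 hh1
  · rw [hfiber]; exact subset_convexHull ℝ _ (mem_underwoodSet_f_zero hH hF hx1 hx2)
  · rwa [hfiber, ← hchord]

theorem mem_convexHull_H_max (hH : 0 < H1up) (hF : 0 ≤ F1) (htlo' : tlo ≤ a1 - F1 / H1up)
    {x w : ℝ} (hx1 : a1 - F1 / H1up ≤ x) (hx2 : x ≤ a1)
    (hw1 : H1up * (a1 - F1 / H1up) * (a1 - x) ≤ w) (hw2 : w ≤ H1up * (a1 - x) * x) :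
    (H1up * (a1 - x), x, H1up, w) ∈ convexHull ℝ (underwoodSet a1 tlo F1 H1up) := by
  have hK := convex_convexHull ℝ (underwoodSet a1 tlo F1 H1up)
  set q := a1 - F1 / H1up
  have hqa : q ≤ a1 := by have := div_nonneg hF hH.le; linarith
  let chord : ℝ →ᵃ[ℝ] ℝ × ℝ × ℝ × ℝ := AffineMap.lineMap
    (H1up * (a1 - 0), (0 : ℝ), H1up, H1up * q * (a1 - 0))
    (H1up * (a1 - 1), (1 : ℝ), H1up, H1up * q * (a1 - 1))
  have hchord : ∀ s, chord s = (H1up * (a1 - s), s, H1up, H1up * q * (a1 - s)) := fun s => by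
    simp only [chord, AffineMap.lineMap_apply_module', Prod.smul_mk, Prod.mk_sub_mk,
      Prod.mk_add_mk, smul_eq_mul, Prod.mk.injEq]
    refine ⟨by ring, by ring, by ring, by ring⟩
  let fiber : ℝ →ᵃ[ℝ] ℝ × ℝ × ℝ × ℝ := AffineMap.lineMap
    (H1up * (a1 - x), x, H1up, (0 : ℝ)) (H1up * (a1 - x), x, H1up, (1 : ℝ))
  have hfiber : ∀ s, fiber s = (H1up * (a1 - x), x, H1up, s) := fun s => by
    simp [fiber, AffineMap.lineMap_apply_module']
  have hlow : chord x ∈ convexHull ℝ (underwoodSet a1 tlo F1 H1up) := by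
    refine hK.mem_of_affineMap_of_le_of_le chord ?_ ?_ hx1 hx2 <;>
      refine subset_convexHull ℝ _ ?_ <;> rw [hchord]
    · convert mem_underwoodSet_H_max hH htlo' le_rfl hqa using 4; ring
    · simpa using mem_underwoodSet_top hH.le hF (htlo'.trans hqa)
  rw [← hfiber]
  refine hK.mem_of_affineMap_of_le_of_le fiber ?_ ?_ hw1 hw2
  · rwa [hfiber, ← hchord]
  · rw [hfiber]; exact subset_convexHull ℝ _ (mem_underwoodSet_H_max hH htlo' hx1 hx2)

theorem mem_convexHull_f_max (hH : 0 < H1up) (hF : 0 < F1) (htlo' : tlo ≤ a1 - F1 / H1up)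
    {x h : ℝ} (hx1 : tlo ≤ x) (hx2 : x ≤ a1 - F1 / H1up) (hh1 : F1 / (a1 - x) ≤ h)
    (hh2 : h ≤ F1 / (a1 - tlo) + H1up * (x - tlo) / (a1 - tlo)) :
    (F1, x, h, F1 * x) ∈ convexHull ℝ (underwoodSet a1 tlo F1 H1up) := by
  have hK := convex_convexHull ℝ (underwoodSet a1 tlo F1 H1up)
  set q := a1 - F1 / H1up with hq
  have hqa : 0 < a1 - q := by rw [hq, sub_sub_cancel]; positivity
  let chord : ℝ →ᵃ[ℝ] ℝ × ℝ × ℝ × ℝ := AffineMap.lineMap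
    (F1, (0 : ℝ), F1 / (a1 - tlo) + H1up * (0 - tlo) / (a1 - tlo), F1 * 0)
    (F1, (1 : ℝ), F1 / (a1 - tlo) + H1up * (1 - tlo) / (a1 - tlo), F1 * 1)
  have hchord : ∀ s, chord s = (F1, s, F1 / (a1 - tlo) + H1up * (s - tlo) / (a1 - tlo), F1 * s) :=
    fun s => by
      simp only [chord, AffineMap.lineMap_apply_module', Prod.smul_mk, Prod.mk_sub_mk,
        Prod.mk_add_mk, smul_eq_mul, Prod.mk.injEq]
      refine ⟨by ring, by ring, by ring, by ring⟩
  let fiber : ℝ →ᵃ[ℝ] ℝ × ℝ × ℝ × ℝ :=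
    AffineMap.lineMap (F1, x, (0 : ℝ), F1 * x) (F1, x, (1 : ℝ), F1 * x)
  have hfiber : ∀ s, fiber s = (F1, x, s, F1 * x) := fun s => by
    simp [fiber, AffineMap.lineMap_apply_module']
  have hup : chord x ∈ convexHull ℝ (underwoodSet a1 tlo F1 H1up) := by
    refine hK.mem_of_affineMap_of_le_of_le chord ?_ ?_ hx1 hx2 <;>
      refine subset_convexHull ℝ _ ?_ <;> rw [hchord]
    · simpa using mem_underwoodSet_f_max hH hF le_rfl htlo'
    · convert mem_underwoodSet_f_max hH hF htlo' le_rfl using 3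
      have hF1 : F1 = H1up * (a1 - q) := by rw [hq]; field_simp; ring
      have hB : a1 - tlo ≠ 0 := by linarith
      rw [hF1, mul_div_cancel_right₀ _ hqa.ne', ← add_div, ← mul_add, sub_add_sub_cancel,
        mul_div_cancel_right₀ _ hB]
  rw [← hfiber]
  refine hK.mem_of_affineMap_of_le_of_le fiber ?_ ?_ hh1 hh2
  · rw [hfiber]; exact subset_convexHull ℝ _ (mem_underwoodSet_f_max hH hF hx1 hx2)
  · rwa [hfiber, ← hchord]

theorem exists_smul_eq_f_zero (hH : 0 ≤ H1up) (hF : 0 ≤ F1) (htlo : tlo < a1) {l ta Ha : ℝ}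
    (hl : 0 ≤ l) (h1 : tlo * l ≤ ta) (h2 : ta ≤ a1 * l) (hHa0 : 0 ≤ Ha)
    (hHa : Ha ≤ H1up * (ta - tlo * l) / (a1 - tlo)) :
    ∃ x ∈ convexHull ℝ (underwoodSet a1 tlo F1 H1up), ((0 : ℝ), ta, Ha, (0 : ℝ)) = l • x := by
  refine exists_mem_eq_smul_of_inv_smul_mem
    ⟨_, subset_convexHull ℝ _ (mem_underwoodSet_f_zero hH hF le_rfl htlo.le)⟩ hl
    (fun hl => ?_) (fun hl => ?_)
  · have hB : 0 < a1 - tlo := by linarith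
    have := mem_convexHull_f_zero hH hF htlo (x := ta / l) (h := Ha / l)
      ((le_div_iff₀ hl).2 h1) ((div_le_iff₀ hl).2 h2) (by positivity) <| calc
        Ha / l ≤ H1up * (ta - tlo * l) / (a1 - tlo) / l := by gcongr
        _ = H1up * (ta / l - tlo) / (a1 - tlo) := by field_simp
    simpa [div_eq_inv_mul] using this
  · subst hl
    obtain rfl : ta = 0 := le_antisymm (by simpa using h2) (by simpa using h1)
    obtain rfl : Ha = 0 := le_antisymm (by simpa using hHa) hHa0
    simp

theorem exists_smul_eq_H_max (hH : 0 < H1up) (hF : 0 ≤ F1) (htlo' : tlo ≤ a1 - F1 / H1up)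
    {l tb w : ℝ} (hl : 0 ≤ l) (h1 : (a1 - F1 / H1up) * l ≤ tb) (h2 : tb ≤ a1 * l)
    (hw1 : H1up * (a1 - F1 / H1up) * (a1 * l - tb) ≤ w)
    (hw2 : w ≤ H1up * (a1 * tb - Qpersp l tb)) :
    ∃ x ∈ convexHull ℝ (underwoodSet a1 tlo F1 H1up),
      (H1up * (a1 * l - tb), tb, H1up * l, w) = l • x := by
  have hqa : a1 - F1 / H1up ≤ a1 := by have := div_nonneg hF hH.le; linarith
  refine exists_mem_eq_smul_of_inv_smul_mem
    ⟨_, subset_convexHull ℝ _ (mem_underwoodSet_top hH.le hF (htlo'.trans hqa))⟩ hl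
    (fun hl => ?_) (fun hl => ?_)
  · rw [Qpersp, if_pos hl] at hw2
    have := mem_convexHull_H_max hH hF htlo' (x := tb / l) (w := w / l)
      ((le_div_iff₀ hl).2 h1) ((div_le_iff₀ hl).2 h2) ?_ ?_
    · convert this using 1
      simp only [Prod.smul_mk, smul_eq_mul, Prod.mk.injEq]
      refine ⟨?_, ?_, ?_, ?_⟩ <;> field_simp
    · calc H1up * (a1 - F1 / H1up) * (a1 - tb / l)
          = H1up * (a1 - F1 / H1up) * (a1 * l - tb) / l := by field_simp
        _ ≤ w / l := by gcongr
    · calc w / l ≤ H1up * (a1 * tb - tb ^ 2 / l) / l := by gcongr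
        _ = H1up * (a1 - tb / l) * (tb / l) := by field_simp
  · subst hl
    obtain rfl : tb = 0 := le_antisymm (by simpa using h2) (by simpa using h1)
    obtain rfl : w = 0 := le_antisymm (by simpa [Qpersp] using hw2) (by simpa using hw1)
    simp

theorem exists_smul_eq_f_max (hH : 0 < H1up) (hF : 0 < F1) (htlo' : tlo ≤ a1 - F1 / H1up)
    {l tc Hc : ℝ} (hl : 0 ≤ l) (h1 : tlo * l ≤ tc) (h2 : tc ≤ (a1 - F1 / H1up) * l)
    (hHc1 : F1 * Tstar a1 l tc ≤ Hc)
    (hHc2 : Hc ≤ F1 * l / (a1 - tlo) + H1up * (tc - tlo * l) / (a1 - tlo)) :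
    ∃ x ∈ convexHull ℝ (underwoodSet a1 tlo F1 H1up), (F1 * l, tc, Hc, F1 * tc) = l • x := by
  have hqa : 0 < F1 / H1up := by positivity
  refine exists_mem_eq_smul_of_inv_smul_mem
    ⟨_, subset_convexHull ℝ _ (mem_underwoodSet_f_max hH hF le_rfl htlo')⟩ hl
    (fun hl => ?_) (fun hl => ?_)
  · have hs : 0 < a1 * l - tc := by nlinarith
    rw [Tstar, if_pos hl] at hHc1
    have := mem_convexHull_f_max hH hF htlo' (x := tc / l) (h := Hc / l)
      ((le_div_iff₀ hl).2 h1) ((div_le_iff₀ hl).2 h2) ?_ ?_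
    · convert this using 1
      simp only [Prod.smul_mk, smul_eq_mul, Prod.mk.injEq]
      refine ⟨?_, ?_, ?_, ?_⟩ <;> field_simp
    · calc F1 / (a1 - tc / l) = F1 * (l ^ 2 / (a1 * l - tc)) / l := by
            rw [show a1 - tc / l = (a1 * l - tc) / l by field_simp]; field_simp [hs.ne']
        _ ≤ Hc / l := by gcongr
    · calc Hc / l ≤ (F1 * l / (a1 - tlo) + H1up * (tc - tlo * l) / (a1 - tlo)) / l := by gcongr
        _ = F1 / (a1 - tlo) + H1up * (tc / l - tlo) / (a1 - tlo) := by field_simp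
  · subst hl
    obtain rfl : tc = 0 := le_antisymm (by simpa using h2) (by simpa using h1)
    obtain rfl : Hc = 0 := le_antisymm (by simpa using hHc2) (by simpa [Tstar] using hHc1)
    simp

theorem mul_Tstar_le_secant (hH : 0 < H1up) (hF : 0 < F1) (htlo' : tlo ≤ a1 - F1 / H1up)
    {l t : ℝ} (hl : 0 ≤ l) (h1 : tlo * l ≤ t) (h2 : t ≤ (a1 - F1 / H1up) * l) :
    F1 * Tstar a1 l t ≤ F1 * l / (a1 - tlo) + H1up * (t - tlo * l) / (a1 - tlo) := by
  have hq : H1up * (a1 - F1 / H1up) = H1up * a1 - F1 := by field_simp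
  have hB : 0 < a1 - tlo := by linarith [div_pos hF hH]
  rcases hl.eq_or_lt with rfl | hl
  · obtain rfl : t = 0 := le_antisymm (by simpa using h2) (by simpa using h1)
    simp [Tstar]
  have hs : 0 < a1 * l - t := by nlinarith [div_pos hF hH]
  have hcap : F1 * l ≤ H1up * (a1 * l - t) := by
    nlinarith [mul_le_mul_of_nonneg_left h2 hH.le, hq]
  rw [Tstar, if_pos hl, ← add_div, mul_div_assoc', div_le_div_iff₀ hs hB]
  nlinarith [mul_nonneg (sub_nonneg.2 h1) (sub_nonneg.2 hcap)]

theorem mem_underwoodLiftProj_f_zero (hH : 0 ≤ H1up) (htlo : tlo < a1) {x : ℝ} (hx1 : tlo ≤ x)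
    (hx2 : x ≤ a1) : ((0 : ℝ), x, (0 : ℝ), (0 : ℝ)) ∈ underwoodLiftProj a1 tlo F1 H1up := by
  refine ⟨x, 0, 0, 1, 0, 0, ?_⟩
  norm_num [Tstar, Qpersp]
  exact ⟨div_nonneg (mul_nonneg hH (by linarith)) (by linarith), hx1, hx2⟩

theorem mem_underwoodLiftProj_H_max (hH : 0 ≤ H1up) {x : ℝ} (hx1 : a1 - F1 / H1up ≤ x)
    (hx2 : x ≤ a1) :
    (H1up * (a1 - x), x, H1up, H1up * (a1 - x) * x) ∈ underwoodLiftProj a1 tlo F1 H1up := by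
  refine ⟨0, x, 0, 0, 1, 0, ?_⟩
  norm_num [Tstar, Qpersp]
  refine ⟨?_, le_of_eq (by ring), by linarith, hx2⟩
  nlinarith [mul_le_mul_of_nonneg_left hx1 (mul_nonneg hH (sub_nonneg.2 hx2))]

theorem mem_underwoodLiftProj_f_max (hH : 0 < H1up) (hF : 0 < F1) (htlo' : tlo ≤ a1 - F1 / H1up)
    {x : ℝ} (hx1 : tlo ≤ x) (hx2 : x ≤ a1 - F1 / H1up) :
    (F1, x, F1 / (a1 - x), F1 * x) ∈ underwoodLiftProj a1 tlo F1 H1up := by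
  have hsec :=
    mul_Tstar_le_secant hH hF htlo' zero_le_one (by simpa using hx1) (by simpa using hx2)
  refine ⟨0, 0, x, 0, 0, 1, ?_⟩
  norm_num [Tstar, Qpersp] at hsec ⊢
  rw [← div_eq_mul_inv] at hsec
  exact ⟨le_rfl, hsec, hx1, hx2⟩

theorem convex_underwoodLiftProj (hH : 0 < H1up) (hF : 0 < F1) :
    Convex ℝ (underwoodLiftProj a1 tlo F1 H1up) := by
  rintro ⟨f, t, H, u⟩ ⟨ta, tb, tc, la, lb, lc, c1, c2, c3, c4, c5, c6, c7, c8, c9, c10,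
    c11, c12, c13, c14, c15, c16⟩ ⟨f', t', H', u'⟩ ⟨ta', tb', tc', la', lb', lc', d1, d2, d3, d4,
    d5, d6, d7, d8, d9, d10, d11, d12, d13, d14, d15, d16⟩ μ ν hμ hν hμν
  have hT := (convexOn_Tstar (a1 := a1) (sub_lt_self a1 (div_pos hF hH))).2
    (x := (lc, tc)) ⟨c16, c9, c10⟩ (y := (lc', tc')) ⟨d16, d9, d10⟩ hμ hν hμν
  have hQ := (convexOn_Qpersp (b := a1)).2
    (x := (lb, tb)) ⟨c15, c7, c8⟩ (y := (lb', tb')) ⟨d15, d7, d8⟩ hμ hν hμν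
  simp only [Prod.smul_mk, Prod.mk_add_mk, smul_eq_mul] at hT hQ ⊢
  have comb : ∀ {a b a' b' : ℝ}, a ≤ b → a' ≤ b' → μ * a + ν * a' ≤ μ * b + ν * b' :=
    fun h h' => add_le_add (mul_le_mul_of_nonneg_left h hμ) (mul_le_mul_of_nonneg_left h' hν)
  refine ⟨μ * ta + ν * ta', μ * tb + ν * tb', μ * tc + ν * tc', μ * la + ν * la',
    μ * lb + ν * lb', μ * lc + ν * lc', ?_, ?_, ?_, ?_, ?_, ?_, ?_, ?_, ?_, ?_, ?_, ?_,
    ?_, ?_, ?_, ?_⟩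
  · linear_combination comb c1 d1 + F1 * hT
  · linear_combination comb c2 d2
  · linear_combination comb c3 d3
  · linear_combination comb c4 d4 + H1up * hQ
  · linear_combination comb c5 d5
  · linear_combination comb c6 d6
  · linear_combination comb c7 d7
  · linear_combination comb c8 d8
  · linear_combination comb c9 d9
  · linear_combination comb c10 d10
  · linear_combination μ * c11 + ν * d11
  · linear_combination μ * c12 + ν * d12
  · linear_combination μ * c13 + ν * d13 + hμν
  · positivity
  · positivity
  · positivity

theorem underwoodSet_subset_underwoodLiftProj (hH : 0 < H1up) (hF : 0 < F1) (htlo : tlo < a1)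
    (htlo' : tlo ≤ a1 - F1 / H1up) :
    underwoodSet a1 tlo F1 H1up ⊆ underwoodLiftProj a1 tlo F1 H1up := by
  have hP := convex_underwoodLiftProj (a1 := a1) (tlo := tlo) hH hF
  rintro ⟨f, t, H, u⟩ ⟨hf0, hfF, ht1, ht2, hu, hlt, heq⟩
  dsimp only at *
  subst hu
  have hcap : f ≤ H1up * (a1 - t) := by
    linarith [(div_le_iff₀' hH).mp (le_sub_comm.mp ht2)]
  rcases (show t ≤ a1 by linarith [div_nonneg hf0 hH.le]).eq_or_lt with hta | hta
  · subst t
    obtain rfl : f = 0 := le_antisymm (by simpa using hcap) hf0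
    obtain ⟨hH0, hH1⟩ := heq rfl
    have := hP (mem_underwoodLiftProj_f_zero hH.le htlo htlo.le le_rfl)
      (mem_underwoodLiftProj_H_max hH.le (by linarith [div_pos hF hH]) le_rfl)
      (sub_nonneg.2 ((div_le_one hH).2 hH1))
      (div_nonneg hH0 hH.le) (sub_add_cancel 1 (H / H1up))
    convert this using 1
    simp only [Prod.smul_mk, Prod.mk_add_mk, smul_eq_mul, mul_zero, zero_add, Prod.mk.injEq]
    refine ⟨by ring, by ring, by field_simp, by ring⟩
  rw [hlt hta]
  rcases le_or_gt t (a1 - F1 / H1up) with htq | htq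
  · have := hP (mem_underwoodLiftProj_f_zero hH.le htlo ht1 hta.le)
      (mem_underwoodLiftProj_f_max hH hF htlo' ht1 htq) (sub_nonneg.2 ((div_le_one hF).2 hfF))
      (div_nonneg hf0 hF.le) (sub_add_cancel 1 (f / F1))
    convert this using 1
    simp only [Prod.smul_mk, Prod.mk_add_mk, smul_eq_mul, mul_zero, zero_add, Prod.mk.injEq]
    refine ⟨by field_simp, by ring, by field_simp, by field_simp⟩
  · have hc : 0 < H1up * (a1 - t) := by nlinarith
    have := hP (mem_underwoodLiftProj_f_zero hH.le htlo ht1 hta.le)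
      (mem_underwoodLiftProj_H_max hH.le htq.le hta.le) (sub_nonneg.2 ((div_le_one hc).2 hcap))
      (div_nonneg hf0 hc.le) (sub_add_cancel 1 (f / (H1up * (a1 - t))))
    convert this using 1
    simp only [Prod.smul_mk, Prod.mk_add_mk, smul_eq_mul, mul_zero, zero_add, Prod.mk.injEq]
    refine ⟨by field_simp, by ring, by field_simp, by field_simp⟩

theorem underwoodLiftProj_subset_convexHull (hH : 0 < H1up) (hF : 0 < F1) (htlo : tlo < a1)
    (htlo' : tlo ≤ a1 - F1 / H1up) :
    underwoodLiftProj a1 tlo F1 H1up ⊆ convexHull ℝ (underwoodSet a1 tlo F1 H1up) := by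
  rintro ⟨f, t, H, u⟩ ⟨ta, tb, tc, la, lb, lc, hH1, hH2, hu1, hu2, ha1, ha2, hb1, hb2, hc1, hc2,
    rfl, rfl, hl, hla, hlb, hlc⟩
  dsimp only at *
  have hA : 0 ≤ H1up * (ta - tlo * la) / (a1 - tlo) :=
    div_nonneg (mul_nonneg hH.le (by linarith)) (by linarith)
  -- Piece `c` takes as much of `H - H1up * lb` as its chord allows; piece `a` takes the rest.
  obtain ⟨Hc, hHc1, hHc2, hHc3, hHa⟩ : ∃ Hc, F1 * Tstar a1 lc tc ≤ Hc ∧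
      Hc ≤ F1 * lc / (a1 - tlo) + H1up * (tc - tlo * lc) / (a1 - tlo) ∧ Hc ≤ H - H1up * lb ∧
      H - H1up * lb - Hc ≤ H1up * (ta - tlo * la) / (a1 - tlo) :=
    ⟨_, le_min (mul_Tstar_le_secant hH hF htlo' hlc hc1 hc2) (by linarith), min_le_left _ _,
      min_le_right _ _, sub_le_comm.mp (le_min (by linarith) (by linarith))⟩
  obtain ⟨xa, hxa, ha⟩ := exists_smul_eq_f_zero hH.le hF.le htlo hla ha1 ha2
    (sub_nonneg.2 hHc3) hHa
  obtain ⟨xb, hxb, hb⟩ := exists_smul_eq_H_max hH hF.le htlo' hlb hb1 hb2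
    (w := u - F1 * tc) (by linarith) (by linarith)
  obtain ⟨xc, hxc, hc⟩ := exists_smul_eq_f_max hH hF htlo' hlc hc1 hc2 hHc1 hHc2
  convert (convex_convexHull ℝ _).smul_add_smul_add_smul_mem hxa hxb hxc hla hlb hlc hl using 1
  rw [← ha, ← hb, ← hc]
  ext <;> simp only [Prod.fst_add, Prod.snd_add] <;> ring

theorem convexHull_underwoodSet (hH : 0 < H1up) (hF : 0 < F1) (htlo : tlo < a1)
    (htlo' : tlo ≤ a1 - F1 / H1up) :
    convexHull ℝ (underwoodSet a1 tlo F1 H1up) = underwoodLiftProj a1 tlo F1 H1up :=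
  (convexHull_min (underwoodSet_subset_underwoodLiftProj hH hF htlo htlo')
    (convex_underwoodLiftProj hH hF)).antisymm
    (underwoodLiftProj_subset_convexHull hH hF htlo htlo')

end Underwood

/-- Proposition 12 of the paper: the convex hull of the Underwood-fraction set `H₁`
(in coordinates `p = (f, θ, H, u)`, where `u = f·θ`, `H = f/(α1 − θ)` for `θ < α1`
and `0 ≤ H ≤ H1up` at `θ = α1`, with `θ ≤ α1 − f/H1up`) equals the projection of the
lifted disjunctive system with multipliers `(λᵃ, λᵇ, λᶜ)`. -/
theorem stmt15 (a1 tlo F1 H1up : ℝ)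
    (hH : 0 < H1up) (hF : 0 < F1) (htlo : tlo < a1) (htlo' : tlo ≤ a1 - F1 / H1up) :
    convexHull ℝ
      {p : ℝ × ℝ × ℝ × ℝ |
        0 ≤ p.1 ∧ p.1 ≤ F1 ∧ tlo ≤ p.2.1 ∧ p.2.1 ≤ a1 - p.1 / H1up ∧
        p.2.2.2 = p.1 * p.2.1 ∧
        (p.2.1 < a1 → p.2.2.1 = p.1 / (a1 - p.2.1)) ∧
        (p.2.1 = a1 → 0 ≤ p.2.2.1 ∧ p.2.2.1 ≤ H1up)} =
    {p : ℝ × ℝ × ℝ × ℝ |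
      ∃ ta tb tc la lb lc : ℝ,
        H1up * lb + F1 * Tstar a1 lc tc ≤ p.2.2.1 ∧
        p.2.2.1 ≤ H1up * (ta - tlo * la) / (a1 - tlo) + H1up * lb +
          F1 * lc / (a1 - tlo) + H1up * (tc - tlo * lc) / (a1 - tlo) ∧
        H1up * (a1 - F1 / H1up) * (a1 * lb - tb) + F1 * tc ≤ p.2.2.2 ∧
        p.2.2.2 ≤ H1up * (a1 * tb - Qpersp lb tb) + F1 * tc ∧
        tlo * la ≤ ta ∧ ta ≤ a1 * la ∧
        (a1 - F1 / H1up) * lb ≤ tb ∧ tb ≤ a1 * lb ∧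
        tlo * lc ≤ tc ∧ tc ≤ (a1 - F1 / H1up) * lc ∧
        p.1 = H1up * (a1 * lb - tb) + F1 * lc ∧
        p.2.1 = ta + tb + tc ∧
        la + lb + lc = 1 ∧ 0 ≤ la ∧ 0 ≤ lb ∧ 0 ≤ lc} :=
  convexHull_underwoodSet hH hF htlo htlo'
end

section
/- Let α1, θ^lo, F1, H1^up be reals with H1^up > 0, F1 ≥ 0 and θ^lo < α1. Define H₁ = {(f, θ, H, u) ∈ ℝ^4 : 0 ≤ f ≤ F1, θ^lo ≤ θ ≤ α1 − f/H1^up, u = f·θ, and H = f/(α1 − θ) if θ < α1 while 0 ≤ H ≤ H1^up if θ = α1}. Then every (f, θ, H, u) ∈ H₁ satisfies: (a) for every θ̄ ∈ [θ^lo, α1): H ≥ f/(α1 − θ̄) + (u − θ̄·f)/(α1 − θ̄)^2; (b) H ≤ f/(α1 − θ^lo) + H1^up·(θ − θ^lo)/(α1 − θ^lo); and (c) max{θ^lo·f, F1·θ + α1·f − α1·F1} ≤ u ≤ min{α1·f, F1·θ + θ^lo·f − θ^lo·F1}. -/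
/-!
On `H₁` the fraction is always encoded by the bilinear relation `H * (α1 - θ) = f` together with
`0 ≤ H ≤ H1up`: for `θ < α1` the bound `H ≤ H1up` is the constraint `θ ≤ α1 - f / H1up`, and at
`θ = α1` that constraint forces `f = 0`. Substituting `f = H (α1 - θ)`, the left side of the tangent
cut (a) is exactly `H (1 - ((θ - θ̄) / (α1 - θ̄))²)`, and the secant cut (b) becomes
`H (θ - θlo) ≤ H1up (θ - θlo)`. The bounds (c) are McCormick's.
-/

lemma underwood_fraction_bilinear {a f t H Hup : ℝ} (hHup : 0 < Hup) (hf : 0 ≤ f)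
    (ht : t ≤ a - f / Hup) (hlt : t < a → H = f / (a - t)) (heq : t = a → 0 ≤ H ∧ H ≤ Hup) :
    0 ≤ H ∧ H ≤ Hup ∧ H * (a - t) = f := by
  have hf_le : f ≤ Hup * (a - t) := by
    rw [← div_le_iff₀' hHup]
    linarith
  rcases (show t ≤ a by linarith [div_nonneg hf hHup.le]).lt_or_eq with hta | rfl
  · have hx : 0 < a - t := sub_pos.mpr hta
    rw [hlt hta]
    exact ⟨by positivity, (div_le_iff₀ hx).mpr hf_le, div_mul_cancel₀ f hx.ne'⟩
  · obtain ⟨hH0, hHup'⟩ := heq rfl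
    rw [sub_self, mul_zero] at hf_le ⊢
    exact ⟨hH0, hHup', le_antisymm hf hf_le⟩

lemma tangent_cut_le_of_mul_eq {a f t H : ℝ} (hH : 0 ≤ H) (hf : H * (a - t) = f) (tb : ℝ) :
    f / (a - tb) + (f * t - tb * f) / (a - tb) ^ 2 ≤ H := by
  rcases eq_or_ne (a - tb) 0 with hb | hb
  · simp [hb, hH]
  have h_eq : f / (a - tb) + (f * t - tb * f) / (a - tb) ^ 2 =
      H * (1 - ((t - tb) / (a - tb)) ^ 2) := by
    subst hf
    field_simp
    ring
  rw [h_eq]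
  exact mul_le_of_le_one_right hH (sub_le_self _ (sq_nonneg _))

lemma le_secant_cut_of_mul_eq {a tlo f t H Hup : ℝ} (hHup : H ≤ Hup) (hf : H * (a - t) = f)
    (ht : tlo ≤ t) (hlo : tlo < a) :
    H ≤ f / (a - tlo) + Hup * (t - tlo) / (a - tlo) := by
  rw [← add_div, le_div_iff₀ (sub_pos.mpr hlo), ← hf]
  linarith [mul_le_mul_of_nonneg_right hHup (sub_nonneg.mpr ht)]

lemma mcCormick_lower {x y xl xu yl yu : ℝ} (hxl : xl ≤ x) (hxu : x ≤ xu) (hyl : yl ≤ y)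
    (hyu : y ≤ yu) : max (xl * y + x * yl - xl * yl) (xu * y + x * yu - xu * yu) ≤ x * y :=
  max_le (by nlinarith [mul_nonneg (sub_nonneg.mpr hxl) (sub_nonneg.mpr hyl)])
    (by nlinarith [mul_nonneg (sub_nonneg.mpr hxu) (sub_nonneg.mpr hyu)])

lemma mcCormick_upper {x y xl xu yl yu : ℝ} (hxl : xl ≤ x) (hxu : x ≤ xu) (hyl : yl ≤ y)
    (hyu : y ≤ yu) : x * y ≤ min (xl * y + x * yu - xl * yu) (xu * y + x * yl - xu * yl) :=
  le_min (by nlinarith [mul_nonneg (sub_nonneg.mpr hxl) (sub_nonneg.mpr hyu)])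
    (by nlinarith [mul_nonneg (sub_nonneg.mpr hxu) (sub_nonneg.mpr hyl)])

theorem stmt16_general (a1 tlo F1 H1up : ℝ)
    (hH : 0 < H1up) (htlo : tlo < a1)
    (f t H u : ℝ)
    (hf0 : 0 ≤ f) (hfF : f ≤ F1) (ht1 : tlo ≤ t) (ht2 : t ≤ a1 - f / H1up)
    (hu : u = f * t)
    (hHlt : t < a1 → H = f / (a1 - t))
    (hHeq : t = a1 → 0 ≤ H ∧ H ≤ H1up) :
    (∀ tb, tlo ≤ tb → tb < a1 →
      f / (a1 - tb) + (u - tb * f) / (a1 - tb) ^ 2 ≤ H) ∧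
    H ≤ f / (a1 - tlo) + H1up * (t - tlo) / (a1 - tlo) ∧
    max (tlo * f) (F1 * t + a1 * f - a1 * F1) ≤ u ∧
    u ≤ min (a1 * f) (F1 * t + tlo * f - tlo * F1) := by
  obtain ⟨hH0, hHup, hHf⟩ := underwood_fraction_bilinear hH hf0 ht2 hHlt hHeq
  have ht_le : t ≤ a1 := by linarith [div_nonneg hf0 hH.le]
  subst hu
  refine ⟨fun tb _ _ => tangent_cut_le_of_mul_eq hH0 hHf tb,
    le_secant_cut_of_mul_eq hHup hHf ht1 htlo, ?_, ?_⟩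
  · convert mcCormick_lower hf0 hfF ht1 ht_le using 2 <;> ring
  · convert mcCormick_upper hf0 hfF ht1 ht_le using 2 <;> ring

/-- Validity of the relaxation (eq:relax-hull-of-H1) of the paper: every point
`(f, θ, H, u)` of the Underwood-fraction set `H₁` satisfies the tangent cuts (a), the
secant cut (b), and the McCormick bounds (c) for `u = f·θ` over `[0, F1] × [θlo, α1]`. -/
theorem stmt16 (a1 tlo F1 H1up : ℝ)
    (hH : 0 < H1up) (hF : 0 ≤ F1) (htlo : tlo < a1)
    (f t H u : ℝ)
    (hf0 : 0 ≤ f) (hfF : f ≤ F1) (ht1 : tlo ≤ t) (ht2 : t ≤ a1 - f / H1up)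
    (hu : u = f * t)
    (hHlt : t < a1 → H = f / (a1 - t))
    (hHeq : t = a1 → 0 ≤ H ∧ H ≤ H1up) :
    (∀ tb, tlo ≤ tb → tb < a1 →
      f / (a1 - tb) + (u - tb * f) / (a1 - tb) ^ 2 ≤ H) ∧
    H ≤ f / (a1 - tlo) + H1up * (t - tlo) / (a1 - tlo) ∧
    max (tlo * f) (F1 * t + a1 * f - a1 * F1) ≤ u ∧
    u ≤ min (a1 * f) (F1 * t + tlo * f - tlo * F1) :=
  stmt16_general a1 tlo F1 H1up hH htlo f t H u hf0 hfF ht1 ht2 hu hHlt hHeq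
end
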